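/- arXiv:math/9601219 — 8 statements merged into one kernel-verified Lean document; each statement's English description precedes it below -/
import Mathlib

section
/- Let χ > ℵ₀ be a regular cardinal and η > χ an ordinal. Then η has the strong non-reflection property for χ if and only if there is a function h : η → χ such that for every δ ∈ S^η_χ there is a club subset C of δ on which h is injective. Moreover, any function h witnessing the right-hand side also witnesses the strong non-reflection property (on a possibly smaller club of each δ). -/
/-- `C` is a closed unbounded (club) subset of the ordinal `δ`. -/
def IsClubIn (C : Set Ordinal) (δ : Ordinal) : Prop :=
  (∀ x ∈ C, x < δ) ∧ (∀ β < δ, ∃ γ ∈ C, β < γ) ∧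
  (∀ α, 0 < α → α < δ → (∀ β < α, ∃ γ ∈ C, β < γ ∧ γ < α) → α ∈ C)

/-- `S` is stationary in the ordinal `δ`: it meets every club subset of `δ`. -/
def IsStatIn (S : Set Ordinal) (δ : Ordinal) : Prop :=
  ∀ C, IsClubIn C δ → (S ∩ C).Nonempty

/-- `S^η_χ`: the set of ordinals below `η` of cofinality `χ`. -/
def Sset (η : Ordinal) (χ : Cardinal) : Set Ordinal :=
  {δ | δ < η ∧ Ordinal.cof δ = χ}

/-- `η` has the strong non-reflection property for `χ`: there is `h : η → χ`
which is strictly increasing on a club of every `δ ∈ S^η_χ`. -/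
def SNR (η : Ordinal) (χ : Cardinal) : Prop :=
  ∃ h : Ordinal → Ordinal, (∀ α < η, h α < χ.ord) ∧
    ∀ δ ∈ Sset η χ, ∃ C, IsClubIn C δ ∧ StrictMonoOn h C



/-- compatibility: the old notion of limit ordinal. -/
def Ordinal.IsLimit (o : Ordinal) : Prop := o ≠ 0 ∧ ∀ a < o, Order.succ a < o

theorem Ordinal.IsLimit.pos {o : Ordinal} (h : o.IsLimit) : 0 < o := pos_iff_ne_zero.2 h.1

theorem Ordinal.isLimit_of_isSuccLimit {o : Ordinal} (h : Order.IsSuccLimit o) : o.IsLimit :=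
  ⟨h.ne_bot, fun _ ha => h.succ_lt ha⟩

theorem Ordinal.isLimit_ord {c : Cardinal} (hc : Cardinal.aleph0 ≤ c) : c.ord.IsLimit :=
  Ordinal.isLimit_of_isSuccLimit (Cardinal.isSuccLimit_ord hc)

theorem Ordinal.not_succ_isLimit (a : Ordinal) : ¬ (Order.succ a).IsLimit :=
  fun h => lt_irrefl _ (h.2 a (Order.lt_succ a))

open Ordinal Set Classical in
/-- transfinite sequence through `C` dominating `w`, continuous at limits. -/
noncomputable def seqE (C : Set Ordinal.{u}) (w : Ordinal.{u} → Ordinal.{u}) :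
    Ordinal.{u} → Ordinal.{u}
  | i =>
    if i.IsLimit then Ordinal.bsup.{u,u} i (fun j _ => seqE C w j)
    else sInf {γ | γ ∈ C ∧ (∀ j ≤ i, w j < γ) ∧ ∀ j < i, seqE C w j < γ}
termination_by i => i
decreasing_by all_goals assumption

theorem seqE_limit (C : Set Ordinal.{u}) (w : Ordinal.{u} → Ordinal.{u}) {i : Ordinal.{u}}
    (hi : i.IsLimit) :
    seqE C w i = Ordinal.bsup.{u,u} i (fun j _ => seqE C w j) := by
  rw [seqE, if_pos hi]

theorem seqE_nonlimit (C : Set Ordinal.{u}) (w : Ordinal.{u} → Ordinal.{u}) {i : Ordinal.{u}}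
    (hi : ¬ i.IsLimit) :
    seqE C w i = sInf {γ | γ ∈ C ∧ (∀ j ≤ i, w j < γ) ∧ ∀ j < i, seqE C w j < γ} := by
  rw [seqE, if_neg hi]

open Ordinal Set Cardinal

theorem seqE_spec {χ : Cardinal.{u}} (hreg : χ.IsRegular) {δ : Ordinal.{u}} (hδ : δ.cof = χ)
    {C : Set Ordinal.{u}} (hC : IsClubIn C δ) {w : Ordinal.{u} → Ordinal.{u}}
    (hw : ∀ j, w j < δ) :
    ∀ i < χ.ord, seqE C w i ∈ C ∧ (∀ j < i, seqE C w j < seqE C w i) ∧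
      (¬ i.IsLimit → ∀ j ≤ i, w j < seqE C w i) := by
  have hδlim : δ.IsLimit := isLimit_of_isSuccLimit (aleph0_le_cof.1 (hδ ▸ hreg.1))
  have hχlim : χ.ord.IsLimit := isLimit_ord hreg.1
  intro i
  induction i using Ordinal.induction with
  | h i IH =>
    intro hi
    by_cases hlim : i.IsLimit
    · rw [seqE_limit C w hlim]
      have hbl : ∀ j (hj : j < i), seqE C w j < δ := fun j hj =>
        hC.1 _ ((IH j hj (hj.trans hi)).1)
      have hmono : ∀ j (hj : j < i), seqE C w j < Ordinal.bsup.{u,u} i (fun j _ => seqE C w j) := by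
        intro j hj
        have hj1 : j + 1 < i := hlim.2 j hj
        exact lt_of_lt_of_le ((IH (j+1) hj1 (hj1.trans hi)).2.1 j (Order.lt_succ j))
          (le_bsup _ (j+1) hj1)
      have hslt : Ordinal.bsup.{u,u} i (fun j _ => seqE C w j) < δ :=
        Ordinal.bsup_lt_ord (by rw [hδ]; exact Cardinal.lt_ord.1 hi) hbl
      refine ⟨?_, hmono, fun h => absurd hlim h⟩
      refine hC.2.2 _ ?_ hslt ?_
      · exact lt_of_le_of_lt zero_le (hmono 0 hlim.pos)
      · intro β hβ
        obtain ⟨j, hj, hβj⟩ := (Ordinal.lt_bsup _).1 hβ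
        exact ⟨seqE C w j, (IH j hj (hj.trans hi)).1, hβj, hmono j hj⟩
    · rw [seqE_nonlimit C w hlim]
      -- the defining set is nonempty
      have hblt : ∀ j (hj : j < i), seqE C w j < δ := fun j hj =>
        hC.1 _ ((IH j hj (hj.trans hi)).1)
      set b : Ordinal := max (Ordinal.bsup.{u,u} (i+1) (fun j _ => w j))
        (Ordinal.bsup.{u,u} i (fun j _ => seqE C w j)) with hb
      have hi1 : i + 1 < χ.ord := hχlim.2 i hi
      have hbδ : b < δ := by
        apply max_lt
        · exact Ordinal.bsup_lt_ord (by rw [hδ]; exact Cardinal.lt_ord.1 hi1) (fun j _ => hw j)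
        · exact Ordinal.bsup_lt_ord (by rw [hδ]; exact Cardinal.lt_ord.1 hi) hblt
      obtain ⟨γ, hγC, hγb⟩ := hC.2.1 b hbδ
      have hγmem : γ ∈ {γ | γ ∈ C ∧ (∀ j ≤ i, w j < γ) ∧ ∀ j < i, seqE C w j < γ} := by
        refine ⟨hγC, fun j hj => lt_of_le_of_lt ?_ hγb, fun j hj => lt_of_le_of_lt ?_ hγb⟩
        · exact le_max_of_le_left (le_bsup _ j (lt_of_le_of_lt hj (Order.lt_succ i)))
        · exact le_max_of_le_right (le_bsup _ j hj)
      have hmem := csInf_mem ⟨γ, hγmem⟩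
      exact ⟨hmem.1, fun j hj => hmem.2.2 j hj, fun _ j hj => hmem.2.1 j hj⟩

theorem exists_closure_point {c : Ordinal.{u}} (hc : Cardinal.aleph0 < c.cof)
    (hcard : ∀ i < c, i.card < c.cof) {F : Ordinal.{u} → Ordinal.{u}}
    (hF : ∀ j < c, F j < c) :
    ∀ i₀ < c, ∃ i < c, i₀ < i ∧ i.IsLimit ∧ ∀ j < i, F j < i := by
  intro i₀ hi₀
  have hclim : c.IsLimit := isLimit_of_isSuccLimit (aleph0_le_cof.1 hc.le)
  set u : ℕ → Ordinal.{u} := fun n => Nat.rec (i₀ + 1)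
    (fun _ p => max (p + 1) (Ordinal.bsup.{u,u} p (fun j _ => F j + 1))) n with hu
  have hultc : ∀ n, u n < c := by
    intro n
    induction n with
    | zero => exact hclim.2 _ hi₀
    | succ n ih =>
      refine max_lt (hclim.2 _ ih) (Ordinal.bsup_lt_ord (hcard _ ih) ?_)
      exact fun j hj => hclim.2 _ (hF j (hj.trans ih))
  have humono : ∀ n, u n < u (n+1) := fun n =>
    lt_of_lt_of_le (Order.lt_succ _) (le_max_left _ _)
  set s : Ordinal.{u} := ⨆ n, u n with hs
  have hsc : s < c := by
    refine Ordinal.iSup_lt_ord_lift ?_ hultc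
    simpa using hc
  have hles : ∀ n, u n ≤ s := fun n => Ordinal.le_iSup u n
  have hi₀s : i₀ < s := lt_of_lt_of_le (Order.lt_succ _) (hles 0)
  have hslim : s.IsLimit := by
    constructor
    · exact fun h0 => absurd (h0 ▸ hi₀s) (not_lt_of_ge zero_le : ¬ i₀ < 0)
    · intro a ha
      obtain ⟨n, hn⟩ := Ordinal.lt_iSup_iff.1 ha
      calc Order.succ a ≤ u n := Order.succ_le_of_lt hn
        _ < u (n+1) := humono n
        _ ≤ s := hles (n+1)
  refine ⟨s, hsc, hi₀s, hslim, ?_⟩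
  intro j hj
  obtain ⟨n, hn⟩ := Ordinal.lt_iSup_iff.1 hj
  have : F j + 1 ≤ u (n+1) :=
    le_trans (Ordinal.le_bsup _ j hn) (le_max_right _ _)
  exact lt_of_lt_of_le (lt_of_lt_of_le (Order.lt_succ _) this) (hles (n+1))

open Classical in
theorem main_aux {χ : Cardinal.{u}} (hreg : χ.IsRegular) (hℵ : Cardinal.aleph0 < χ)
    {η δ : Ordinal.{u}} (hδη : δ < η) (hδ : δ.cof = χ)
    (h : Ordinal.{u} → Ordinal.{u}) (hb : ∀ α < η, h α < χ.ord)
    {C : Set Ordinal.{u}} (hC : IsClubIn C δ) (hinj : Set.InjOn h C) :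
    ∃ D, IsClubIn D δ ∧ StrictMonoOn h D := by
  subst hδ
  set χ := δ.cof with hχ
  have hδlim : δ.IsLimit := isLimit_of_isSuccLimit (aleph0_le_cof.1 hreg.1)
  have hχlim : χ.ord.IsLimit := isLimit_ord hreg.1
  have hcof : χ.ord.cof = χ := hreg.cof_eq
  -- cofinal witness function
  obtain ⟨f, hf⟩ := Ordinal.exists_fundamental_sequence δ
  set w : Ordinal.{u} → Ordinal.{u} := fun i => if h' : i < χ.ord then f i h' else 0 with hw
  have hwδ : ∀ j, w j < δ := by
    intro j
    by_cases h' : j < χ.ord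
    · simpa only [hw, dif_pos h'] using hf.lt _
    · simpa only [hw, dif_neg h'] using hδlim.pos
  have hwcof : ∀ β < δ, ∃ j < χ.ord, β ≤ w j := by
    intro β hβ
    rw [← hf.blsub_eq, Ordinal.lt_blsub_iff] at hβ
    obtain ⟨j, hj, hβj⟩ := hβ
    exact ⟨j, hj, by rw [show w j = f j hj from dif_pos hj]; exact hβj⟩
  -- the sequence e
  set e : Ordinal.{u} → Ordinal.{u} := seqE C w with he
  have spec := seqE_spec hreg rfl hC hwδ
  have heC : ∀ i < χ.ord, e i ∈ C := fun i hi => (spec i hi).1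
  have heδ : ∀ i < χ.ord, e i < δ := fun i hi => hC.1 _ (heC i hi)
  have hemono : ∀ i j, i < j → j < χ.ord → e i < e j := fun i j hij hj =>
    (spec j hj).2.1 i hij
  have hecof : ∀ β < δ, ∃ i < χ.ord, β < e i := by
    intro β hβ
    obtain ⟨j, hj, hβj⟩ := hwcof β hβ
    have hj1 : j + 1 < χ.ord := hχlim.2 j hj
    refine ⟨j + 1, hj1, lt_of_le_of_lt hβj ?_⟩
    exact (spec _ hj1).2.2 (by rw [Ordinal.add_one_eq_succ]; exact Ordinal.not_succ_isLimit j)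
      j (le_of_lt (Order.lt_succ j))
  -- transferred function and closure data
  set g : Ordinal.{u} → Ordinal.{u} := fun i => h (e i) with hg
  have hgχ : ∀ i < χ.ord, g i < χ.ord := fun i hi =>
    hb _ ((heδ i hi).trans hδη)
  set inv : Ordinal.{u} → Ordinal.{u} := fun ξ =>
    if hx : ∃ j, j < χ.ord ∧ g j = ξ then hx.choose else 0 with hinv
  have hinvχ : ∀ ξ, inv ξ < χ.ord := by
    intro ξ
    by_cases hx : ∃ j, j < χ.ord ∧ g j = ξ
    · simpa only [hinv, dif_pos hx] using hx.choose_spec.1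
    · simpa only [hinv, dif_neg hx] using hχlim.pos
  set f0 : Ordinal.{u} → Ordinal.{u} := fun i => Ordinal.bsup.{u,u} i (fun ξ _ => inv ξ + 1)
    with hf0
  set f1 : Ordinal.{u} → Ordinal.{u} := fun i => Ordinal.bsup.{u,u} i (fun j _ => g j + 1)
    with hf1
  have hf0χ : ∀ i < χ.ord, f0 i < χ.ord := by
    intro i hi
    exact Ordinal.bsup_lt_ord (by rw [hcof]; exact Cardinal.lt_ord.1 hi)
      (fun ξ _ => hχlim.2 _ (hinvχ ξ))
  have hf1χ : ∀ i < χ.ord, f1 i < χ.ord := by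
    intro i hi
    exact Ordinal.bsup_lt_ord (by rw [hcof]; exact Cardinal.lt_ord.1 hi)
      (fun j hj => hχlim.2 _ (hgχ j (hj.trans hi)))
  set E : Set Ordinal.{u} := {i | i < χ.ord ∧ i.IsLimit ∧ ∀ j < i, f0 j < i ∧ f1 j < i} with hE
  have hEunb : ∀ i₀ < χ.ord, ∃ i ∈ E, i₀ < i := by
    intro i₀ hi₀
    obtain ⟨i, hic, hi₀i, hilim, hicl⟩ := exists_closure_point
      (c := χ.ord) (by rw [hcof]; exact hℵ) (fun i hi => by rw [hcof]; exact Cardinal.lt_ord.1 hi)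
      (F := fun j => max (f0 j) (f1 j))
      (fun j hj => max_lt (hf0χ j hj) (hf1χ j hj)) i₀ hi₀
    exact ⟨i, ⟨hic, hilim, fun j hj =>
      ⟨lt_of_le_of_lt (le_max_left _ _) (hicl j hj), lt_of_le_of_lt (le_max_right _ _) (hicl j hj)⟩⟩,
      hi₀i⟩
  -- key: g is strictly increasing between members of E
  have hkey : ∀ i ∈ E, ∀ i' ∈ E, i < i' → g i < g i' := by
    intro i hi i' hi' hii'
    obtain ⟨hiχ, hilim, hicl⟩ := hi
    obtain ⟨hi'χ, hi'lim, hi'cl⟩ := hi'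
    have h1 : g i < i' := by
      have hsucc : i + 1 < i' := by
        rw [Ordinal.add_one_eq_succ]; exact hi'lim.2 i hii'
      have := (hi'cl (i + 1) hsucc).2
      have hle : g i + 1 ≤ f1 (i + 1) := Ordinal.le_bsup _ i (Order.lt_succ i)
      exact lt_of_lt_of_le (Order.lt_succ _) (hle.trans this.le)
    have h2 : i' ≤ g i' := by
      by_contra hlt
      push_neg at hlt
      set ξ := g i' with hξ
      have hx : ∃ j, j < χ.ord ∧ g j = ξ := ⟨i', hi'χ, rfl⟩
      have hinvξ : inv ξ = i' := by
        have hspec := hx.choose_spec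
        have : e hx.choose = e i' := hinj (heC _ hspec.1) (heC _ hi'χ) hspec.2
        have hji : hx.choose = i' := by
          rcases lt_trichotomy hx.choose i' with hlt' | heq | hgt
          · exact absurd this (ne_of_lt (hemono _ _ hlt' hi'χ))
          · exact heq
          · exact absurd this.symm (ne_of_lt (hemono _ _ hgt hspec.1))
        simp only [hinv, dif_pos hx]; exact hji
      have hsucc : ξ + 1 < i' := by
        rw [Ordinal.add_one_eq_succ]; exact hi'lim.2 ξ hlt
      have := (hi'cl (ξ + 1) hsucc).1
      have hle : inv ξ + 1 ≤ f0 (ξ + 1) := Ordinal.le_bsup _ ξ (Order.lt_succ ξ)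
      rw [hinvξ] at hle
      exact absurd (lt_of_lt_of_le (Order.lt_succ i') (hle.trans this.le)) (lt_irrefl i')
    exact lt_of_lt_of_le h1 h2
  -- the club D
  set D : Set Ordinal.{u} := e '' E with hD
  refine ⟨D, ⟨?_, ?_, ?_⟩, ?_⟩
  · rintro x ⟨i, hiE, rfl⟩
    exact heδ i hiE.1
  · intro β hβ
    obtain ⟨i₁, hi₁, hβi₁⟩ := hecof β hβ
    obtain ⟨i, hiE, hi₁i⟩ := hEunb i₁ hi₁
    exact ⟨e i, ⟨i, hiE, rfl⟩, hβi₁.trans (hemono i₁ i hi₁i hiE.1)⟩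
  · -- closedness
    intro α hα0 hαδ hcl
    set I : Set Ordinal.{u} := {i | i ∈ E ∧ e i < α} with hI
    have hInon : I.Nonempty := by
      obtain ⟨γ, ⟨i, hiE, rfl⟩, _, hγα⟩ := hcl 0 hα0
      exact ⟨i, hiE, hγα⟩
    obtain ⟨i₂, hi₂χ, hαi₂⟩ := hecof α hαδ
    have hIbd : ∀ i ∈ I, i < i₂ := by
      rintro i ⟨hiE, heiα⟩
      rcases lt_trichotomy i i₂ with hlt | rfl | hgt
      · exact hlt
      · exact absurd heiα (asymm hαi₂)
      · exact absurd (hαi₂.trans (hemono i₂ i hgt hiE.1)) (asymm heiα)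
    have hIbdd : BddAbove I := ⟨i₂, fun i hi => (hIbd i hi).le⟩
    set lam : Ordinal.{u} := sSup I with hlam
    have hlamle : lam ≤ i₂ := csSup_le hInon (fun i hi => (hIbd i hi).le)
    have hlamχ : lam < χ.ord := lt_of_le_of_lt hlamle hi₂χ
    have hlamlt : ∀ j < lam, ∃ i ∈ I, j < i := fun j hj =>
      exists_lt_of_lt_csSup hInon hj
    have hlamnot : lam ∉ I := by
      intro hlamI
      obtain ⟨γ, ⟨i', hi'E, rfl⟩, hγ1, hγ2⟩ := hcl (e lam) hlamI.2
      have hi'I : i' ∈ I := ⟨hi'E, hγ2⟩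
      have hi'le : i' ≤ lam := le_csSup hIbdd hi'I
      rcases lt_or_eq_of_le hi'le with hlt | rfl
      · exact absurd hγ1 (asymm (hemono i' lam hlt hlamχ))
      · exact absurd hγ1 (lt_irrefl _)
    have hIlam : ∀ i ∈ I, i < lam := by
      intro i hi
      rcases lt_or_eq_of_le (le_csSup hIbdd hi) with hlt | rfl
      · exact hlt
      · exact absurd hi hlamnot
    have hlamlim : lam.IsLimit := by
      constructor
      · intro h0
        obtain ⟨i, hiI⟩ := hInon
        have := hIlam i hiI
        rw [h0] at this
        exact not_lt_of_ge zero_le this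
      · intro a ha
        obtain ⟨i, hiI, hai⟩ := hlamlt a ha
        exact (hiI.1.2.1.2 a hai).trans (hIlam i hiI)
    have hlamE : lam ∈ E := by
      refine ⟨hlamχ, hlamlim, fun j hj => ?_⟩
      obtain ⟨i, hiI, hji⟩ := hlamlt j hj
      have hile : i ≤ lam := le_csSup hIbdd hiI
      exact ⟨lt_of_lt_of_le (hiI.1.2.2 j hji).1 hile, lt_of_lt_of_le (hiI.1.2.2 j hji).2 hile⟩
    have hbs : e lam = Ordinal.bsup.{u,u} lam (fun j _ => e j) := by
      rw [he]; exact seqE_limit C w hlamlim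
    have helam : e lam = α := by
      apply le_antisymm
      · rw [hbs]
        apply Ordinal.bsup_le
        intro j hj
        obtain ⟨i, hiI, hji⟩ := hlamlt j hj
        exact le_of_lt (lt_trans (hemono j i hji hiI.1.1) hiI.2)
      · apply le_of_forall_lt
        intro β hβ
        obtain ⟨γ, ⟨i, hiE, rfl⟩, hβγ, hγα⟩ := hcl β hβ
        have hiI : i ∈ I := ⟨hiE, hγα⟩
        rw [hbs]
        exact lt_of_lt_of_le hβγ (Ordinal.le_bsup _ i (hIlam i hiI))
    exact ⟨lam, hlamE, helam⟩
  · rintro a ⟨i, hiE, rfl⟩ b ⟨i', hi'E, rfl⟩ hab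
    have hii' : i < i' := by
      rcases lt_trichotomy i i' with hlt | rfl | hgt
      · exact hlt
      · exact absurd hab (lt_irrefl _)
      · exact absurd (hemono i' i hgt hiE.1) (asymm hab)
    exact hkey i hiE i' hi'E hii'

/-- Observation 1.2(2): for a regular `χ > ℵ₀` and `η > χ`, strong
non-reflection of `η` for `χ` is equivalent to the existence of `h : η → χ`
injective on a club of every `δ ∈ S^η_χ`; moreover any such `h` itself
witnesses strong non-reflection. -/
theorem stmt0 (χ : Cardinal) (hreg : χ.IsRegular) (hℵ : Cardinal.aleph0 < χ)
    (η : Ordinal) (hη : χ.ord < η) :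
    (SNR η χ ↔
      ∃ h : Ordinal → Ordinal, (∀ α < η, h α < χ.ord) ∧
        ∀ δ ∈ Sset η χ, ∃ C, IsClubIn C δ ∧ Set.InjOn h C) ∧
    (∀ h : Ordinal → Ordinal, (∀ α < η, h α < χ.ord) →
      (∀ δ ∈ Sset η χ, ∃ C, IsClubIn C δ ∧ Set.InjOn h C) →
      ∀ δ ∈ Sset η χ, ∃ C, IsClubIn C δ ∧ StrictMonoOn h C) := by
  have part2 : ∀ h : Ordinal → Ordinal, (∀ α < η, h α < χ.ord) →
      (∀ δ ∈ Sset η χ, ∃ C, IsClubIn C δ ∧ Set.InjOn h C) →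
      ∀ δ ∈ Sset η χ, ∃ C, IsClubIn C δ ∧ StrictMonoOn h C := by
    intro h hb hcl δ hδ
    obtain ⟨C, hC, hinj⟩ := hcl δ hδ
    exact main_aux hreg hℵ hδ.1 hδ.2 h hb hC hinj
  refine ⟨⟨?_, ?_⟩, part2⟩
  · rintro ⟨h, hb, hcl⟩
    exact ⟨h, hb, fun δ hδ => let ⟨C, hC, hm⟩ := hcl δ hδ; ⟨C, hC, hm.injOn⟩⟩
  · rintro ⟨h, hb, hcl⟩
    exact ⟨h, hb, part2 h hb hcl⟩
end

section
/- Let χ be a regular uncountable cardinal and suppose that some ordinal weakly reflects at χ. Then the minimal ordinal θ*(χ) which weakly reflects at χ is a regular cardinal greater than χ. Consequently, an ordinal ζ weakly reflects at χ if and only if there is a regular cardinal θ ≤ ζ which weakly reflects at χ. -/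
/-- `η` weakly reflects at `χ` (for `η > χ`): the negation of strong
non-reflection. -/
def WeaklyReflects (η : Ordinal) (χ : Cardinal) : Prop :=
  χ.ord < η ∧ ¬ SNR η χ

namespace SNRAux

open Ordinal Set

lemma ord_pos {χ : Cardinal} (h : Cardinal.aleph0 ≤ χ) : 0 < χ.ord := by
  have := Cardinal.ord_le_ord.2 h
  rw [Cardinal.ord_aleph0] at this
  exact lt_of_lt_of_le omega0_pos this

lemma ord_le_of_cof {δ : Ordinal} {χ : Cardinal} (h : δ.cof = χ) : χ.ord ≤ δ := by
  rw [← h]; exact Ordinal.ord_cof_le δ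

lemma snr_mono {χ : Cardinal} {η η' : Ordinal} (h : SNR η χ) (hle : η' ≤ η) : SNR η' χ := by
  obtain ⟨f, h1, h2⟩ := h
  exact ⟨f, fun α hα => h1 α (hα.trans_le hle),
    fun δ hδ => h2 δ ⟨hδ.1.trans_le hle, hδ.2⟩⟩

lemma snr_of_le_ord {χ : Cardinal} (hχ : Cardinal.aleph0 ≤ χ) {η : Ordinal}
    (h : η ≤ χ.ord) : SNR η χ := by
  refine ⟨fun _ => 0, fun α _ => ord_pos hχ, fun δ hδ => absurd (ord_le_of_cof hδ.2) ?_⟩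
  exact not_le.2 (hδ.1.trans_le h)

lemma cof_eq_cof {f : Ordinal → Ordinal} {j δ : Ordinal}
    (hmono : StrictMonoOn f (Set.Iio j))
    (hb : ∀ i < j, f i < δ) (hcof : ∀ β < δ, ∃ i < j, β ≤ f i) :
    δ.cof = j.cof := by
  apply le_antisymm
  · obtain ⟨ι, fj, hlsub, hcard⟩ := Ordinal.exists_lsub_cof j
    rw [← hcard]
    have hδl : Ordinal.lsub (fun i => f (fj i)) = δ := by
      apply le_antisymm
      · rw [Ordinal.lsub_le_iff]
        exact fun i => hb _ (hlsub ▸ Ordinal.lt_lsub fj i)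
      · refine le_of_forall_lt fun β hβ => ?_
        obtain ⟨i, hij, hfi⟩ := hcof β hβ
        obtain ⟨k, hk⟩ := Ordinal.lt_lsub_iff.1 (hlsub ▸ hij)
        have hfjk : fj k < j := hlsub ▸ Ordinal.lt_lsub fj k
        have : f i ≤ f (fj k) := hmono.monotoneOn hij hfjk hk
        exact lt_of_le_of_lt (hfi.trans this) (Ordinal.lt_lsub _ k)
    exact hδl ▸ Ordinal.cof_lsub_le _
  · obtain ⟨ι, fd, hlsub, hcard⟩ := Ordinal.exists_lsub_cof δ
    rw [← hcard]
    set G : ι → Ordinal := fun i => sInf {k | k < j ∧ fd i ≤ f k} with hG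
    have hne : ∀ i, {k | k < j ∧ fd i ≤ f k}.Nonempty := by
      intro i
      obtain ⟨k, hkj, hk⟩ := hcof (fd i) (hlsub ▸ Ordinal.lt_lsub fd i)
      exact ⟨k, hkj, hk⟩
    have hGmem : ∀ i, G i < j ∧ fd i ≤ f (G i) := fun i => csInf_mem (hne i)
    have hjl : Ordinal.lsub G = j := by
      apply le_antisymm
      · rw [Ordinal.lsub_le_iff]; exact fun i => (hGmem i).1
      · refine le_of_forall_lt fun k hk => ?_
        obtain ⟨i, hi⟩ := Ordinal.lt_lsub_iff.1 (hlsub ▸ hb k hk)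
        have hkG : k ≤ G i := by
          by_contra hlt
          push_neg at hlt
          exact absurd ((hGmem i).2.trans_lt (hmono (hGmem i).1 hk hlt)) (not_lt.2 hi)
        exact Ordinal.lt_lsub_iff.2 ⟨i, hkG⟩
    exact hjl ▸ Ordinal.cof_lsub_le _

lemma snr_succ {χ : Cardinal} {β : Ordinal} (hχ : Cardinal.aleph0 ≤ χ)
    (hcof : β.cof ≠ χ) (h : SNR β χ) : SNR (β + 1) χ := by
  classical
  obtain ⟨f, hf1, hf2⟩ := h
  refine ⟨fun α => if α < β then f α else 0, fun α _ => ?_, fun δ hδ => ?_⟩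
  · by_cases hαβ : α < β
    · simpa [hαβ] using hf1 _ hαβ
    · simpa [hαβ] using ord_pos hχ
  · have hδβ : δ < β := by
      have hle : δ ≤ β := by
        have := hδ.1
        rw [Ordinal.add_one_eq_succ, Order.lt_succ_iff] at this
        exact this
      rcases lt_or_eq_of_le hle with h' | h'
      · exact h'
      · exact absurd (h' ▸ hδ.2) hcof
    obtain ⟨C, hC, hmono⟩ := hf2 δ ⟨hδβ, hδ.2⟩
    refine ⟨C, hC, fun x hx y hy hxy => ?_⟩
    have hxβ : x < β := (hC.1 x hx).trans hδβ
    have hyβ : y < β := (hC.1 y hy).trans hδβ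
    simpa [hxβ, hyβ] using hmono hx hy hxy

end SNRAux

namespace SNRAux

open Ordinal Set

/-- `x` is a limit point of the range of `g₀` restricted to `Iio μ`. -/
def LPt (μ : Ordinal) (g₀ : Ordinal → Ordinal) (x : Ordinal) : Prop :=
  0 < x ∧ ∀ γ < x, ∃ i < μ, γ < g₀ i ∧ g₀ i < x

/-- The range of `g₀` on `Iio μ` together with its limit points, below `θ`. -/
def Eset (θ μ : Ordinal) (g₀ : Ordinal → Ordinal) : Set Ordinal :=
  {x | x < θ ∧ ((∃ i < μ, x = g₀ i) ∨ LPt μ g₀ x)}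

noncomputable def idxFun (μ : Ordinal) (g₀ : Ordinal → Ordinal) (x : Ordinal) : Ordinal :=
  sInf ({i | i < μ ∧ x ≤ g₀ i} ∪ {μ})

open Classical in
noncomputable def Wfun (χ : Cardinal) (b : Ordinal) : Ordinal → Ordinal :=
  if hb : SNR (b + 1) χ then hb.choose else fun _ => 0

lemma Wfun_spec {χ : Cardinal} {b : Ordinal} (h : SNR (b + 1) χ) :
    (∀ α < b + 1, Wfun χ b α < χ.ord) ∧
    ∀ δ ∈ Sset (b + 1) χ, ∃ C, IsClubIn C δ ∧ StrictMonoOn (Wfun χ b) C := by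
  rw [Wfun, dif_pos h]; exact h.choose_spec

open Classical in
noncomputable def H0fun (χ : Cardinal) (θ μ : Ordinal) (g₀ g : Ordinal → Ordinal)
    (α : Ordinal) : Ordinal :=
  if α ∈ Eset θ μ g₀ then g (idxFun μ g₀ α)
  else Wfun χ (sInf {x | x ∈ Eset θ μ g₀ ∧ α ≤ x}) α

noncomputable def hFun (χ : Cardinal) (θ μ : Ordinal) (g₀ g : Ordinal → Ordinal)
    (α : Ordinal) : Ordinal :=
  if H0fun χ θ μ g₀ g α < χ.ord then H0fun χ θ μ g₀ g α else 0

section idx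

variable {μ x : Ordinal} {g₀ : Ordinal → Ordinal}

lemma idx_le_mu : idxFun μ g₀ x ≤ μ :=
  csInf_le (OrderBot.bddBelow _) (Or.inr rfl)

lemma idx_le {i : Ordinal} (hi : i < μ) (hx : x ≤ g₀ i) : idxFun μ g₀ x ≤ i :=
  csInf_le (OrderBot.bddBelow _) (Or.inl ⟨hi, hx⟩)

lemma idx_spec {i : Ordinal} (hi : i < idxFun μ g₀ x) : i < μ ∧ g₀ i < x := by
  have h1 : i < μ := lt_of_lt_of_le hi idx_le_mu
  refine ⟨h1, ?_⟩
  by_contra hcon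
  push_neg at hcon
  exact absurd (idx_le h1 hcon) (not_le.2 hi)

lemma lt_idx (hmono : StrictMonoOn g₀ (Set.Iio μ)) {i : Ordinal}
    (hi : i < μ) (hgi : g₀ i < x) : i < idxFun μ g₀ x := by
  by_contra hle
  push_neg at hle
  have hmem : idxFun μ g₀ x ∈ ({i | i < μ ∧ x ≤ g₀ i} ∪ {μ} : Set Ordinal) :=
    csInf_mem ⟨μ, Or.inr rfl⟩
  rcases hmem with ⟨h1, h2⟩ | h
  · exact absurd (h2.trans (hmono.monotoneOn h1 hi hle)) (not_le.2 hgi)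
  · rw [Set.mem_singleton_iff] at h
    exact absurd hi (by rw [← h]; exact not_lt.2 hle)

lemma idx_lt_idx (hmono : StrictMonoOn g₀ (Set.Iio μ)) {y : Ordinal}
    (hxy : x < y) (hy : LPt μ g₀ y) : idxFun μ g₀ x < idxFun μ g₀ y := by
  obtain ⟨i, hiμ, hxi, hiy⟩ := hy.2 x hxy
  exact lt_of_le_of_lt (idx_le hiμ hxi.le) (lt_idx hmono hiμ hiy)

end idx

lemma main {χ : Cardinal} {θ μ : Ordinal} {g₀ g : Ordinal → Ordinal}
    (hχ : Cardinal.aleph0 < χ)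
    (hmono : StrictMonoOn g₀ (Set.Iio μ))
    (hcofE : ∀ α < θ, ∃ x ∈ Eset θ μ g₀, α ≤ x)
    (htop : ∀ x ∈ Eset θ μ g₀, (∀ y ∈ Eset θ μ g₀, y ≤ x) → LPt μ g₀ x)
    (hg1 : ∀ i < μ, g i < χ.ord)
    (hg2 : ∀ j ≤ μ, j.cof = χ → ∃ D, IsClubIn D j ∧ StrictMonoOn g D)
    (hsnr : ∀ η < θ, SNR η χ) :
    SNR θ χ := by
  classical
  have hχ0 : 0 < χ.ord := ord_pos hχ.le
  have hsucc : ∀ o : Ordinal, o < o + 1 := fun o => by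
    rw [Ordinal.add_one_eq_succ]; exact Order.lt_succ o
  refine ⟨hFun χ θ μ g₀ g, fun α _ => ?_, fun δ hδ => ?_⟩
  · unfold hFun; split
    · assumption
    · exact hχ0
  obtain ⟨hδθ, hδcof⟩ := hδ
  by_cases hLP : LPt μ g₀ δ
  · -- Case A : δ is a limit point of the range of g₀
    set j := idxFun μ g₀ δ with hj
    have j2 : j ≤ μ := idx_le_mu
    have j1 : ∀ i < j, i < μ ∧ g₀ i < δ := fun i hi => idx_spec hi
    have j3 : ∀ γ < δ, ∃ i < j, γ < g₀ i ∧ g₀ i < δ := by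
      intro γ hγ
      obtain ⟨i, hiμ, h1, h2⟩ := hLP.2 γ hγ
      exact ⟨i, lt_idx hmono hiμ h2, h1, h2⟩
    have j4 : j.cof = χ := by
      rw [← hδcof]
      refine (cof_eq_cof (hmono.mono fun y hy => lt_of_lt_of_le hy j2)
        (fun i hi => (j1 i hi).2) ?_).symm
      intro β hβ
      obtain ⟨i, hi, h1, _⟩ := j3 β hβ
      exact ⟨i, hi, h1.le⟩
    obtain ⟨D, hD, hgD⟩ := hg2 j j2 j4
    set C : Set Ordinal := {x | LPt μ g₀ x ∧ x < δ ∧ idxFun μ g₀ x ∈ D} with hC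
    have hidxj : ∀ x, LPt μ g₀ x → x < δ → idxFun μ g₀ x < j := by
      intro x hx hxδ
      obtain ⟨i, hij, h1, _⟩ := j3 x hxδ
      exact lt_of_le_of_lt (idx_le (j1 i hij).1 h1.le) hij
    have hEC : ∀ x ∈ C, x ∈ Eset θ μ g₀ := fun x hx => ⟨hx.2.1.trans hδθ, Or.inr hx.1⟩
    have hval : ∀ x ∈ C, hFun χ θ μ g₀ g x = g (idxFun μ g₀ x) := by
      intro x hx
      have h1 : H0fun χ θ μ g₀ g x = g (idxFun μ g₀ x) := by
        unfold H0fun; rw [if_pos (hEC x hx)]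
      have h2 : g (idxFun μ g₀ x) < χ.ord :=
        hg1 _ (lt_of_lt_of_le (hidxj x hx.1 hx.2.1) j2)
      unfold hFun
      rw [h1, if_pos h2]
    refine ⟨C, ⟨fun x hx => hx.2.1, ?_, ?_⟩, ?_⟩
    · -- unbounded
      intro β hβ
      obtain ⟨i₀, hi₀j, hβi₀, hi₀δ⟩ := j3 β hβ
      obtain ⟨x₀, hx₀D, hx₀⟩ := hD.2.1 i₀ hi₀j
      have step : ∀ x, x ∈ D → ∃ y, y ∈ D ∧ x < y := fun x hx => by
        obtain ⟨y, hy, hxy⟩ := hD.2.1 x (hD.1 x hx)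
        exact ⟨y, hy, hxy⟩
      choose nx hnx1 hnx2 using step
      let c : ℕ → {x : Ordinal // x ∈ D} := fun n =>
        Nat.rec ⟨x₀, hx₀D⟩ (fun _ p => ⟨nx p.1 p.2, hnx1 p.1 p.2⟩) n
      have cstep : ∀ n, (c n).1 < (c (n + 1)).1 := fun n => hnx2 _ _
      set d := ⨆ n, (c n).1 with hd
      have hbdd : BddAbove (Set.range fun n => (c n).1) := Ordinal.bddAbove_range _
      have le_d : ∀ n, (c n).1 ≤ d := fun n => le_ciSup hbdd n
      have lt_d : ∀ n, (c n).1 < d := fun n => lt_of_lt_of_le (cstep n) (le_d (n + 1))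
      have hd0 : 0 < d := lt_of_le_of_lt zero_le (lt_d 0)
      have hdj : d < j := by
        rw [hd]
        exact Ordinal.iSup_lt_ord_lift (f := fun n => (c n).1) (c := j)
          (by rw [j4]; simpa using hχ) (fun n => hD.1 (c n).1 (c n).2)
      have hexn : ∀ β' < d, ∃ n, β' < (c n).1 := by
        intro β' hβ'
        by_contra hcon
        push_neg at hcon
        exact absurd (ciSup_le hcon) (not_le.2 hβ')
      have hdD : d ∈ D := by
        refine hD.2.2 d hd0 hdj ?_
        intro β' hβ'
        obtain ⟨n, hn⟩ := hexn β' hβ'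
        exact ⟨(c n).1, (c n).2, hn, lt_d n⟩
      have hdlim : ∀ k < d, k + 1 < d := by
        intro k hk
        obtain ⟨n, hn⟩ := hexn k hk
        have h1 : k + 1 ≤ (c n).1 := by
          rw [Ordinal.add_one_eq_succ]; exact Order.succ_le_of_lt hn
        exact lt_of_le_of_lt h1 (lt_d n)
      have hi₀d : i₀ < d := lt_of_lt_of_le hx₀ (le_d 0)
      have hdμ : d < μ := lt_of_lt_of_le hdj j2
      set x := sSup (g₀ '' Set.Iio d) with hx
      have hne : (g₀ '' Set.Iio d).Nonempty := ⟨g₀ 0, 0, hd0, rfl⟩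
      have hub : ∀ y ∈ g₀ '' Set.Iio d, y ≤ g₀ d := by
        rintro y ⟨i, hi, rfl⟩
        exact hmono.monotoneOn (lt_trans hi hdμ) hdμ hi.le
      have hbdd2 : BddAbove (g₀ '' Set.Iio d) := ⟨g₀ d, hub⟩
      have hxle : x ≤ g₀ d := csSup_le hne hub
      have hgx : ∀ k < d, g₀ k < x := by
        intro k hk
        have h1 : g₀ k < g₀ (k + 1) :=
          hmono (lt_trans hk hdμ) (lt_of_lt_of_le (hdlim k hk) hdμ.le) (hsucc k)
        exact lt_of_lt_of_le h1 (le_csSup hbdd2 ⟨k + 1, hdlim k hk, rfl⟩)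
      have hxδ : x < δ := lt_of_le_of_lt hxle (j1 d hdj).2
      have hLPx : LPt μ g₀ x := by
        refine ⟨lt_of_le_of_lt zero_le (hgx 0 hd0), fun γ hγ => ?_⟩
        obtain ⟨y, ⟨i, hi, rfl⟩, hγy⟩ := exists_lt_of_lt_csSup hne hγ
        exact ⟨i, lt_trans hi hdμ, hγy, hgx i hi⟩
      have hidxx : idxFun μ g₀ x = d := by
        refine le_antisymm (idx_le hdμ hxle) ?_
        refine le_csInf ⟨μ, Or.inr rfl⟩ ?_
        rintro k (⟨hkμ, hxk⟩ | hk)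
        · by_contra hlt
          push_neg at hlt
          exact absurd hxk (not_le.2 (hgx k hlt))
        · rw [Set.mem_singleton_iff] at hk
          exact hk ▸ hdμ.le
      exact ⟨x, ⟨hLPx, hxδ, hidxx ▸ hdD⟩, lt_trans hβi₀ (hgx i₀ hi₀d)⟩
    · -- closed
      intro α h0α hαδ hcl
      have hLPα : LPt μ g₀ α := by
        refine ⟨h0α, fun γ hγ => ?_⟩
        obtain ⟨x, hxC, hγx, hxα⟩ := hcl γ hγ
        obtain ⟨i, hiμ, h1, h2⟩ := hxC.1.2 γ hγx
        exact ⟨i, hiμ, h1, lt_trans h2 hxα⟩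
      refine ⟨hLPα, hαδ, ?_⟩
      have h0i : 0 < idxFun μ g₀ α := by
        obtain ⟨i, hiμ, _, h2⟩ := hLPα.2 0 h0α
        exact lt_of_le_of_lt zero_le (lt_idx hmono hiμ h2)
      refine hD.2.2 _ h0i (hidxj α hLPα hαδ) ?_
      intro β hβ
      have hβspec := idx_spec (μ := μ) (g₀ := g₀) (x := α) hβ
      obtain ⟨x, hxC, h1, h2⟩ := hcl (g₀ β) hβspec.2
      exact ⟨idxFun μ g₀ x, hxC.2.2, lt_idx hmono hβspec.1 h1, idx_lt_idx hmono h2 hLPα⟩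
    · -- strict mono
      intro x hx y hy hxy
      rw [hval x hx, hval y hy]
      exact hgD hx.2.2 hy.2.2 (idx_lt_idx hmono hxy hy.1)
  · -- Case B : δ is not a limit point
    have h0δ : 0 < δ := lt_of_lt_of_le hχ0 (ord_le_of_cof hδcof)
    have hLP' := hLP
    rw [LPt, not_and] at hLP'
    have h2' := hLP' h0δ
    push_neg at h2'
    obtain ⟨γ₀, hγ₀δ, hγ₀⟩ := h2'
    have hEgap : ∀ x ∈ Eset θ μ g₀, ¬(γ₀ < x ∧ x < δ) := by
      rintro x ⟨hxθ, hx⟩ ⟨hh1, hh2⟩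
      rcases hx with ⟨i, hiμ, rfl⟩ | hLPx
      · exact absurd hh2 (not_lt.2 (hγ₀ i hiμ hh1))
      · obtain ⟨i, hiμ, hu1, hu2⟩ := hLPx.2 γ₀ hh1
        exact absurd (lt_trans hu2 hh2) (not_lt.2 (hγ₀ i hiμ hu1))
    set B := {x | x ∈ Eset θ μ g₀ ∧ δ ≤ x} with hB
    have hBne : B.Nonempty := by
      obtain ⟨x, hx, hge⟩ := hcofE δ hδθ
      exact ⟨x, hx, hge⟩
    set b := sInf B with hb
    have hbB : b ∈ B := csInf_mem hBne
    have hbnm : ∃ y ∈ Eset θ μ g₀, b < y := by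
      by_contra hcon
      push_neg at hcon
      have hLPb := htop b hbB.1 hcon
      rcases lt_or_eq_of_le hbB.2 with hlt | heq
      · obtain ⟨i, hiμ, hu1, hu2⟩ := hLPb.2 δ hlt
        have hmem : g₀ i ∈ B := ⟨⟨lt_trans hu2 hbB.1.1, Or.inl ⟨i, hiμ, rfl⟩⟩, hu1.le⟩
        exact absurd (csInf_le (OrderBot.bddBelow _) hmem) (not_le.2 hu2)
      · exact hLP (by rw [heq]; exact hLPb)
    obtain ⟨y, hyE, hby⟩ := hbnm
    have hb1 : b + 1 < θ := by
      have h1 : b + 1 ≤ y := by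
        rw [Ordinal.add_one_eq_succ]; exact Order.succ_le_of_lt hby
      exact lt_of_le_of_lt h1 hyE.1
    have hSNRb := hsnr (b + 1) hb1
    obtain ⟨hW1, hW2⟩ := Wfun_spec hSNRb
    obtain ⟨C₀, hC₀, hWmono⟩ := hW2 δ ⟨lt_of_le_of_lt hbB.2 (hsucc b), hδcof⟩
    set C := {x | x ∈ C₀ ∧ γ₀ < x} with hC
    have hval : ∀ x ∈ C, hFun χ θ μ g₀ g x = Wfun χ b x := by
      intro x hx
      have hxδ : x < δ := hC₀.1 x hx.1
      have hxE : x ∉ Eset θ μ g₀ := fun hmem => hEgap x hmem ⟨hx.2, hxδ⟩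
      have hsets : {x' | x' ∈ Eset θ μ g₀ ∧ x ≤ x'} = B := by
        ext x'
        constructor
        · rintro ⟨hE, hle⟩
          refine ⟨hE, ?_⟩
          by_contra hlt
          push_neg at hlt
          exact hEgap x' hE ⟨lt_of_lt_of_le hx.2 hle, hlt⟩
        · rintro ⟨hE, hle⟩
          exact ⟨hE, le_trans hxδ.le hle⟩
      have h1 : H0fun χ θ μ g₀ g x = Wfun χ b x := by
        unfold H0fun
        rw [if_neg hxE, hsets]
      have h2 : Wfun χ b x < χ.ord :=
        hW1 x (lt_of_lt_of_le hxδ (le_trans hbB.2 (hsucc b).le))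
      unfold hFun
      rw [h1, if_pos h2]
    refine ⟨C, ⟨fun x hx => hC₀.1 x hx.1, ?_, ?_⟩, ?_⟩
    · intro β hβ
      obtain ⟨γc, hγc, hβγc⟩ := hC₀.2.1 (max β γ₀) (max_lt hβ hγ₀δ)
      exact ⟨γc, ⟨hγc, lt_of_le_of_lt (le_max_right _ _) hβγc⟩,
        lt_of_le_of_lt (le_max_left _ _) hβγc⟩
    · intro α h0 hα hcl
      have hmem0 : α ∈ C₀ := by
        refine hC₀.2.2 α h0 hα ?_
        intro β hβ
        obtain ⟨γc, hγc, h⟩ := hcl β hβ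
        exact ⟨γc, hγc.1, h⟩
      obtain ⟨γc, hγc, _, hγcα⟩ := hcl 0 h0
      exact ⟨hmem0, lt_trans hγc.2 hγcα⟩
    · intro x hx y hy hxy
      rw [hval x hx, hval y hy]
      exact hWmono hx.1 hy.1 hxy

end SNRAux

namespace SNRAux

open Ordinal Set

lemma good_id {χ : Cardinal} (hχ : Cardinal.aleph0 ≤ χ) {μ : Ordinal} (hμ : μ ≤ χ.ord) :
    (∀ i < μ, (fun i : Ordinal => i) i < χ.ord) ∧
    ∀ j ≤ μ, j.cof = χ → ∃ D, IsClubIn D j ∧ StrictMonoOn (fun i : Ordinal => i) D := by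
  refine ⟨fun i hi => lt_of_lt_of_le hi hμ, fun j hj hcof => ?_⟩
  have hje : j = χ.ord := le_antisymm (hj.trans hμ) (ord_le_of_cof hcof)
  subst hje
  refine ⟨Set.Iio χ.ord, ⟨fun x hx => hx, fun β hβ => ?_, fun α _ hα _ => hα⟩,
    fun x _ y _ h => h⟩
  refine ⟨β + 1, ?_, ?_⟩
  · rw [Ordinal.add_one_eq_succ]
    exact (Cardinal.isSuccLimit_ord hχ).succ_lt hβ
  · rw [Ordinal.add_one_eq_succ]
    exact Order.lt_succ β

lemma exists_seq (θ : Ordinal) :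
    ∃ g₀ : Ordinal → Ordinal, StrictMonoOn g₀ (Set.Iio θ.cof.ord) ∧
      (∀ i < θ.cof.ord, g₀ i < θ) ∧ (∀ α < θ, ∃ i < θ.cof.ord, α ≤ g₀ i) := by
  classical
  obtain ⟨f, hf⟩ := Ordinal.exists_fundamental_sequence θ
  refine ⟨fun i => if h : i < θ.cof.ord then f i h else 0, ?_, ?_, ?_⟩
  · intro x hx y hy hxy
    simp only [Set.mem_Iio] at hx hy
    simp only [dif_pos hx, dif_pos hy]
    exact hf.2.1 hx hy hxy
  · intro i hi
    simp only [dif_pos hi]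
    exact hf.lt hi
  · intro α hα
    have h1 : α < Ordinal.blsub _ f := by rw [hf.2.2]; exact hα
    obtain ⟨i, hi, hle⟩ := Ordinal.lt_blsub_iff.1 h1
    exact ⟨i, hi, by simp only [dif_pos hi]; exact hle⟩

end SNRAux


/-- Observation 1.2(3): if some ordinal weakly reflects at the regular
uncountable `χ`, then the minimal such ordinal `θ*(χ)` is a regular cardinal
greater than `χ`; consequently `ζ` weakly reflects at `χ` iff some regular
cardinal `θ ≤ ζ` weakly reflects at `χ`. -/
theorem stmt1 (χ : Cardinal) (hreg : χ.IsRegular) (hℵ : Cardinal.aleph0 < χ)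
    (hex : ∃ η, WeaklyReflects η χ) :
    (∃ θ : Cardinal, θ.IsRegular ∧ χ < θ ∧
      sInf {η | WeaklyReflects η χ} = θ.ord) ∧
    (∀ ζ : Ordinal, WeaklyReflects ζ χ ↔
      ∃ θ : Cardinal, θ.IsRegular ∧ θ.ord ≤ ζ ∧ WeaklyReflects θ.ord χ) := by
  classical
  open SNRAux in
  have hsucc : ∀ o : Ordinal, o < o + 1 := fun o => by
    rw [Ordinal.add_one_eq_succ]; exact Order.lt_succ o
  set S := {η | WeaklyReflects η χ} with hS
  have hSne : S.Nonempty := hex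
  set θ₀ := sInf S with hθ₀def
  have hθ₀S : θ₀ ∈ S := csInf_mem hSne
  obtain ⟨hχθ, hnsnr⟩ := hθ₀S
  have hsnr : ∀ η < θ₀, SNR η χ := by
    intro η hη
    rcases le_or_gt η χ.ord with h | h
    · exact SNRAux.snr_of_le_ord hℵ.le h
    · by_contra hn
      exact absurd (csInf_le (OrderBot.bddBelow S) (⟨h, hn⟩ : η ∈ S))
        (not_le.2 hη)
  have hadd1 : ∀ γ β : Ordinal, γ < β → Order.IsSuccLimit β → γ + 1 < β := by
    intro γ β h hl
    rw [Ordinal.add_one_eq_succ]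
    exact hl.succ_lt h
  -- θ₀ is a limit ordinal
  have hlim : Order.IsSuccLimit θ₀ := by
    rcases Ordinal.zero_or_succ_or_isSuccLimit θ₀ with h0 | ⟨β, hβ⟩ | h
    · exact absurd (h0 ▸ hχθ) (not_lt.2 zero_le)
    · exfalso
      replace hβ := hβ.symm
      have hβθ : β < θ₀ := by rw [hβ]; exact Order.lt_succ β
      have hβ1 : θ₀ = β + 1 := by rw [hβ, Ordinal.add_one_eq_succ]
      by_cases hcβ : β.cof = χ
      · -- instance 1 of main
        obtain ⟨g₀, hg₀mono, hg₀lt, hg₀cof⟩ := SNRAux.exists_seq β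
        rw [hcβ] at hg₀mono hg₀lt hg₀cof
        have hβlim : Order.IsSuccLimit β := Ordinal.aleph0_le_cof.1 (by rw [hcβ]; exact hℵ.le)
        have hLPβ : SNRAux.LPt χ.ord g₀ β := by
          refine ⟨lt_of_lt_of_le (SNRAux.ord_pos hℵ.le) (SNRAux.ord_le_of_cof hcβ),
            fun γ hγ => ?_⟩
          obtain ⟨i, hi, hle⟩ := hg₀cof (γ + 1) (hadd1 γ β hγ hβlim)
          exact ⟨i, hi, lt_of_lt_of_le (hsucc γ) hle, hg₀lt i hi⟩
        have hβE : β ∈ SNRAux.Eset θ₀ χ.ord g₀ := ⟨hβθ, Or.inr hLPβ⟩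
        refine hnsnr (SNRAux.main hℵ hg₀mono ?_ ?_ (SNRAux.good_id hℵ.le le_rfl).1
          (SNRAux.good_id hℵ.le le_rfl).2 hsnr)
        · intro α hα
          refine ⟨β, hβE, ?_⟩
          rw [hβ1] at hα
          rw [Ordinal.add_one_eq_succ] at hα
          exact Order.lt_succ_iff.1 hα
        · rintro x ⟨hxθ, hx⟩ hmax
          rcases hx with ⟨i, hi, rfl⟩ | hLPx
          · exact absurd (hmax β hβE) (not_le.2 (hg₀lt i hi))
          · exact hLPx
      · exact hnsnr (hβ1 ▸ SNRAux.snr_succ hℵ.le hcβ (hsnr β hβθ))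
    · exact h
  -- θ₀ has maximal cofinality
  have hcofθ : θ₀.cof.ord = θ₀ := by
    rcases lt_or_eq_of_le (Ordinal.ord_cof_le θ₀) with hν | hν
    · exfalso
      obtain ⟨g₀, hg₀mono, hg₀lt, hg₀cof⟩ := SNRAux.exists_seq θ₀
      have hcofE : ∀ α < θ₀, ∃ x ∈ SNRAux.Eset θ₀ θ₀.cof.ord g₀, α ≤ x := by
        intro α hα
        obtain ⟨i, hi, hle⟩ := hg₀cof α hα
        exact ⟨g₀ i, ⟨hg₀lt i hi, Or.inl ⟨i, hi, rfl⟩⟩, hle⟩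
      have htop : ∀ x ∈ SNRAux.Eset θ₀ θ₀.cof.ord g₀,
          (∀ y ∈ SNRAux.Eset θ₀ θ₀.cof.ord g₀, y ≤ x) → SNRAux.LPt θ₀.cof.ord g₀ x := by
        rintro x ⟨hxθ, _⟩ hmax
        exfalso
        obtain ⟨i, hi, hle⟩ := hg₀cof (x + 1) (hadd1 x θ₀ hxθ hlim)
        exact absurd (hmax (g₀ i) ⟨hg₀lt i hi, Or.inl ⟨i, hi, rfl⟩⟩)
          (not_le.2 (lt_of_lt_of_le (hsucc x) hle))
      rcases le_or_gt θ₀.cof.ord χ.ord with hle | hgt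
      · exact hnsnr (SNRAux.main hℵ hg₀mono hcofE htop
          (SNRAux.good_id hℵ.le hle).1 (SNRAux.good_id hℵ.le hle).2 hsnr)
      · obtain ⟨gW, hgW1, hgW2⟩ := hsnr θ₀.cof.ord hν
        refine hnsnr (SNRAux.main hℵ hg₀mono hcofE htop hgW1 ?_ hsnr)
        intro j hj hcof
        rcases lt_or_eq_of_le hj with hjlt | hje
        · exact hgW2 j ⟨hjlt, hcof⟩
        · exfalso
          have h1 : θ₀.cof = χ := by
            rw [← Ordinal.cof_cof θ₀, ← hje, hcof]
          rw [h1] at hgt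
          exact absurd hgt (lt_irrefl _)
    · exact hν
  set κ := θ₀.cof with hκ
  have hκreg : κ.IsRegular := ⟨Ordinal.aleph0_le_cof.2 hlim, by rw [hcofθ]⟩
  have hχκ : χ < κ := by
    rw [← Cardinal.ord_lt_ord, hcofθ]
    exact hχθ
  constructor
  · exact ⟨κ, hκreg, hχκ, hcofθ.symm⟩
  · intro ζ
    constructor
    · intro hζ
      exact ⟨κ, hκreg, by rw [hcofθ]; exact csInf_le (OrderBot.bddBelow S) hζ,
        by rw [hcofθ]; exact ⟨hχθ, hnsnr⟩⟩
    · rintro ⟨θ', _, hle, hWR⟩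
      exact ⟨hWR.1.trans_le hle, fun hsnrζ => hWR.2 (SNRAux.snr_mono hsnrζ hle)⟩
end

section
/- Let χ be a regular uncountable cardinal such that some ordinal weakly reflects at χ, and let θ*(χ) denote the minimal ordinal weakly reflecting at χ. Suppose either η = θ*(χ), or η is an ordinal of cofinality at least θ*(χ) such that S^η_{θ*(χ)} is stationary in η. Then for every function h : η → χ, the set ref(h) is stationary in η. -/
/-- `ref(h)`: the set of `δ ∈ S^η_χ` such that `h` is not strictly increasing
on any club subset of `δ`. -/
def refSet (η : Ordinal) (χ : Cardinal) (h : Ordinal → Ordinal) : Set Ordinal :=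
  {δ | δ ∈ Sset η χ ∧ ¬ ∃ C, IsClubIn C δ ∧ StrictMonoOn h C}

open Ordinal Cardinal Set

namespace Stmt2Aux

universe u

/-- least element of `C` above `x` -/
noncomputable def nxt (C : Set Ordinal) (x : Ordinal) : Ordinal :=
  sInf {c | c ∈ C ∧ x < c}

lemma nxt_spec {C : Set Ordinal} {δ x : Ordinal} (hC : IsClubIn C δ) (hx : x < δ) :
    nxt C x ∈ C ∧ x < nxt C x := by
  obtain ⟨c, hc, hxc⟩ := hC.2.1 x hx
  exact csInf_mem (s := {c | c ∈ C ∧ x < c}) ⟨c, hc, hxc⟩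

lemma nxt_lt {C : Set Ordinal} {δ x : Ordinal} (hC : IsClubIn C δ) (hx : x < δ) :
    nxt C x < δ :=
  hC.1 _ (nxt_spec hC hx).1

/-- the key ω-interleaving argument: the intersection of two clubs is unbounded. -/
lemma inter_unbounded {C D : Set Ordinal} {δ : Ordinal} (hcof : ℵ₀ < δ.cof)
    (hC : IsClubIn C δ) (hD : IsClubIn D δ) {β : Ordinal} (hβ : β < δ) :
    ∃ x, x ∈ C ∧ x ∈ D ∧ β < x ∧ x < δ := by
  classical
  -- t n : alternating sequence, t n ∈ C
  let t : ℕ → Ordinal := fun n => Nat.rec (nxt C β) (fun _ x => nxt C (nxt D x)) n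
  have ht0 : t 0 = nxt C β := rfl
  have htsucc : ∀ n, t (n + 1) = nxt C (nxt D (t n)) := fun n => rfl
  have key : ∀ n, t n ∈ C ∧ t n < δ := by
    intro n
    induction n with
    | zero => exact ⟨(nxt_spec hC hβ).1, nxt_lt hC hβ⟩
    | succ n ih =>
      have hd : nxt D (t n) < δ := nxt_lt hD ih.2
      exact ⟨(nxt_spec hC hd).1, nxt_lt hC hd⟩
  have hle : ∀ n, t n < nxt D (t n) ∧ nxt D (t n) < t (n + 1) ∧ nxt D (t n) ∈ D := by
    intro n
    have h1 := nxt_spec hD (key n).2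
    have h2 := nxt_spec hC (nxt_lt hD (key n).2)
    exact ⟨h1.2, h2.2, h1.1⟩
  have hmono : ∀ n, t n < t (n + 1) := fun n => lt_trans (hle n).1 (hle n).2.1
  set L := ⨆ n, t n with hL
  have hLlt : L < δ := by
    apply Ordinal.iSup_lt_ord_lift _ (fun n => (key n).2)
    rwa [Cardinal.mk_nat, Cardinal.lift_aleph0]
  have hβL : β < L := lt_of_lt_of_le (nxt_spec hC hβ).2 (Ordinal.le_iSup t 0)
  have hwit : ∀ β' < L, ∃ n, β' < t n := fun β' hβ' => Ordinal.lt_iSup_iff.mp hβ'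
  have hLC : L ∈ C := by
    apply hC.2.2 L (lt_of_le_of_lt (zero_le (a := β)) hβL) hLlt
    intro β' hβ'
    obtain ⟨n, hn⟩ := hwit β' hβ'
    refine ⟨t (n + 1), (key (n + 1)).1, lt_trans hn (hmono n), ?_⟩
    exact lt_of_lt_of_le (hmono (n + 1)) (Ordinal.le_iSup t (n + 2))
  have hLD : L ∈ D := by
    apply hD.2.2 L (lt_of_le_of_lt (zero_le (a := β)) hβL) hLlt
    intro β' hβ'
    obtain ⟨n, hn⟩ := hwit β' hβ'
    refine ⟨nxt D (t n), (hle n).2.2, lt_trans hn (hle n).1, ?_⟩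
    exact lt_of_lt_of_le (hle n).2.1 (Ordinal.le_iSup t (n + 1))
  exact ⟨L, hLC, hLD, hβL, hLlt⟩

lemma inter_club {C D : Set Ordinal} {δ : Ordinal} (hcof : ℵ₀ < δ.cof)
    (hC : IsClubIn C δ) (hD : IsClubIn D δ) : IsClubIn (C ∩ D) δ := by
  refine ⟨fun x hx => hC.1 x hx.1, ?_, ?_⟩
  · intro β hβ
    obtain ⟨x, hxC, hxD, hβx, _⟩ := inter_unbounded hcof hC hD hβ
    exact ⟨x, ⟨hxC, hxD⟩, hβx⟩
  · intro α h0 hα hlim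
    constructor
    · exact hC.2.2 α h0 hα (fun β hβ => by
        obtain ⟨γ, hγ, h1, h2⟩ := hlim β hβ; exact ⟨γ, hγ.1, h1, h2⟩)
    · exact hD.2.2 α h0 hα (fun β hβ => by
        obtain ⟨γ, hγ, h1, h2⟩ := hlim β hβ; exact ⟨γ, hγ.2, h1, h2⟩)

/-- accumulation points of `C` below `δ` -/
def accSet (C : Set Ordinal) (δ : Ordinal) : Set Ordinal :=
  {α | 0 < α ∧ α < δ ∧ ∀ β < α, ∃ c ∈ C, β < c ∧ c < α}

lemma accSet_subset {C : Set Ordinal} {δ : Ordinal} (hC : IsClubIn C δ) :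
    accSet C δ ⊆ C := fun α hα => hC.2.2 α hα.1 hα.2.1 hα.2.2

lemma accSet_club {C : Set Ordinal} {δ : Ordinal} (hcof : ℵ₀ < δ.cof)
    (hC : IsClubIn C δ) : IsClubIn (accSet C δ) δ := by
  refine ⟨fun x hx => hx.2.1, ?_, ?_⟩
  · intro β hβ
    let t : ℕ → Ordinal := fun n => Nat.rec (nxt C β) (fun _ x => nxt C x) n
    have key : ∀ n, t n ∈ C ∧ t n < δ := by
      intro n
      induction n with
      | zero => exact ⟨(nxt_spec hC hβ).1, nxt_lt hC hβ⟩
      | succ n ih => exact ⟨(nxt_spec hC ih.2).1, nxt_lt hC ih.2⟩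
    have hmono : ∀ n, t n < t (n + 1) := fun n => (nxt_spec hC (key n).2).2
    set L := ⨆ n, t n with hL
    have hLlt : L < δ := by
      apply Ordinal.iSup_lt_ord_lift _ (fun n => (key n).2)
      rwa [Cardinal.mk_nat, Cardinal.lift_aleph0]
    have hβL : β < L := lt_of_lt_of_le (nxt_spec hC hβ).2 (Ordinal.le_iSup t 0)
    refine ⟨L, ⟨lt_of_le_of_lt (zero_le (a := β)) hβL, hLlt, ?_⟩, hβL⟩
    intro β' hβ'
    obtain ⟨n, hn⟩ := Ordinal.lt_iSup_iff.mp hβ'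
    exact ⟨t (n + 1), (key (n + 1)).1, lt_trans hn (hmono n),
      lt_of_lt_of_le (hmono (n + 1)) (Ordinal.le_iSup t (n + 2))⟩
  · intro α h0 hα hlim
    refine ⟨h0, hα, ?_⟩
    intro β hβ
    obtain ⟨a, ha, hβa, haα⟩ := hlim β hβ
    obtain ⟨c, hc, hβc, hca⟩ := ha.2.2 β hβa
    exact ⟨c, hc, hβc, lt_trans hca haα⟩

/-- transfinite sequence climbing through `C`. -/
noncomputable def fseq (C : Set Ordinal) (i : Ordinal) : Ordinal :=
  sInf {c | c ∈ C ∧ ∀ j, ∀ _ : j < i, fseq C j < c}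
termination_by i
decreasing_by assumption

lemma fseq_def (C : Set Ordinal) (i : Ordinal) :
    fseq C i = sInf {c | c ∈ C ∧ ∀ j, ∀ _ : j < i, fseq C j < c} := by
  rw [fseq]

section FseqKey

variable {C : Set Ordinal.{u}} {η δs : Ordinal.{u}}

lemma fseq_key (hC : IsClubIn C η) (hδs : δs ∈ accSet C η) :
    ∀ i < (Ordinal.cof δs).ord,
      fseq C i ∈ C ∧ fseq C i < δs ∧ ∀ j < i, fseq C j < fseq C i := by
  intro i
  induction i using Ordinal.induction with
  | _ i IH =>
    intro hi
    have hsup : Ordinal.bsup.{u,u} i (fun j _ => fseq C j) < δs := by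
      apply Ordinal.bsup_lt_ord
      · exact Cardinal.lt_ord.mp hi
      · intro j hj; exact (IH j hj (lt_trans hj hi)).2.1
    obtain ⟨cb, hcbC, hscb, hcbδ⟩ := hδs.2.2 _ hsup
    have hcbS : cb ∈ {c | c ∈ C ∧ ∀ j, ∀ _ : j < i, fseq C j < c} := by
      refine ⟨hcbC, fun j hj => lt_of_le_of_lt ?_ hscb⟩
      exact Ordinal.le_bsup (fun j _ => fseq C j) j hj
    have hmem := csInf_mem (s := {c | c ∈ C ∧ ∀ j, ∀ _ : j < i, fseq C j < c}) ⟨cb, hcbS⟩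
    rw [← fseq_def] at hmem
    refine ⟨hmem.1, ?_, fun j hj => hmem.2 j hj⟩
    calc fseq C i ≤ cb := by rw [fseq_def]; exact csInf_le (OrderBot.bddBelow _) hcbS
    _ < δs := hcbδ

lemma fseq_cont (hC : IsClubIn C η) (hδs : δs ∈ accSet C η) {i : Ordinal}
    (hi : i < (Ordinal.cof δs).ord) (hlim : Order.IsSuccLimit i) :
    fseq C i = Ordinal.bsup.{u,u} i (fun j _ => fseq C j) := by
  have key := fseq_key hC hδs
  set s := Ordinal.bsup.{u,u} i (fun j _ => fseq C j) with hs
  have hslt : s < δs := by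
    apply Ordinal.bsup_lt_ord (Cardinal.lt_ord.mp hi)
    intro j hj; exact (key j (lt_trans hj hi)).2.1
  have hjlt : ∀ j < i, fseq C j < s := by
    intro j hj
    have hj1 : j + 1 < i := by
      have := hlim.succ_lt hj; rwa [Ordinal.add_one_eq_succ]
    calc fseq C j < fseq C (j+1) := (key (j+1) (lt_trans hj1 hi)).2.2 j (by
          rw [Ordinal.add_one_eq_succ]; exact Order.lt_succ j)
    _ ≤ s := Ordinal.le_bsup _ (j+1) hj1
  have hsC : s ∈ C := by
    apply hC.2.2 s ?_ (lt_trans hslt hδs.2.1)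
    · intro β hβ
      obtain ⟨j, hj, hβj⟩ := (Ordinal.lt_bsup _).mp hβ
      exact ⟨fseq C j, (key j (lt_trans hj hi)).1, hβj, hjlt j hj⟩
    · exact lt_of_le_of_lt (zero_le (a := _)) (lt_of_lt_of_le
        (hjlt 0 hlim.pos) (le_refl s))
  have h1 : fseq C i ≤ s := by
    rw [fseq_def]
    exact csInf_le (OrderBot.bddBelow _) ⟨hsC, fun j hj => hjlt j hj⟩
  have h2 : s ≤ fseq C i := by
    apply Ordinal.bsup_le
    intro j hj
    exact le_of_lt ((key i hi).2.2 j hj)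
  exact le_antisymm h1 h2

lemma fseq_lt_iff (hC : IsClubIn C η) (hδs : δs ∈ accSet C η) {i j : Ordinal}
    (hi : i < (Ordinal.cof δs).ord) (hj : j < (Ordinal.cof δs).ord) :
    fseq C i < fseq C j ↔ i < j := by
  constructor
  · intro h
    by_contra hle
    push_neg at hle
    rcases eq_or_lt_of_le hle with rfl | hlt
    · exact lt_irrefl _ h
    · exact lt_asymm h ((fseq_key hC hδs i hi).2.2 j hlt)
  · intro h
    exact (fseq_key hC hδs j hj).2.2 i h

end FseqKey

lemma fseq_cof {C : Set Ordinal.{u}} {η δs : Ordinal.{u}} (hC : IsClubIn C η)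
    (hδs : δs ∈ accSet C η) {σ : Ordinal}
    (hσ : σ < (Ordinal.cof δs).ord) (hσlim : Order.IsSuccLimit σ) :
    (fseq C σ).cof = σ.cof := by
  have key := fseq_key hC hδs
  have hcont := fseq_cont hC hδs hσ hσlim
  apply le_antisymm
  · obtain ⟨ι, e, hl, hcard⟩ := Ordinal.exists_lsub_cof.{u} σ
    have he : ∀ k, e k < σ := fun k => hl ▸ Ordinal.lt_lsub e k
    have hFlt : ∀ k, fseq C (e k) < fseq C σ := fun k =>
      (fseq_lt_iff hC hδs (lt_trans (he k) hσ) hσ).mpr (he k)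
    have hlsub : Ordinal.lsub.{u,u} (fun k => fseq C (e k)) = fseq C σ := by
      apply le_antisymm (Ordinal.lsub_le.{u,u} hFlt)
      rw [hcont]
      apply Ordinal.bsup_le
      intro j hj
      obtain ⟨k, hk⟩ := Ordinal.lt_lsub_iff.mp (hl ▸ hj)
      have : fseq C j ≤ fseq C (e k) := by
        rcases eq_or_lt_of_le hk with rfl | hlt
        · exact le_refl _
        · exact le_of_lt ((fseq_lt_iff hC hδs (lt_trans hj hσ)
            (lt_trans (he k) hσ)).mpr hlt)
      exact le_of_lt (lt_of_le_of_lt this (Ordinal.lt_lsub _ k))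
    calc (fseq C σ).cof = (Ordinal.lsub.{u,u} (fun k => fseq C (e k))).cof := by rw [hlsub]
    _ ≤ #ι := Ordinal.cof_lsub_le _
    _ = σ.cof := hcard
  · obtain ⟨ι, e, hl, hcard⟩ := Ordinal.exists_lsub_cof.{u} (fseq C σ)
    have he : ∀ k, e k < fseq C σ := fun k => hl ▸ Ordinal.lt_lsub e k
    have hne : ∀ k, {j | j < σ ∧ e k < fseq C j}.Nonempty := by
      intro k
      have := he k
      rw [hcont] at this
      obtain ⟨j, hj, hjlt⟩ := (Ordinal.lt_bsup _).mp this
      exact ⟨j, hj, hjlt⟩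
    set m : ι → Ordinal := fun k => sInf {j | j < σ ∧ e k < fseq C j} with hm
    have hmspec : ∀ k, m k < σ ∧ e k < fseq C (m k) := fun k => csInf_mem (hne k)
    have hcof : ∀ j < σ, ∃ k, j < m k := by
      intro j hj
      have hj1 : j + 1 < σ := by
        have := hσlim.succ_lt hj; rwa [Ordinal.add_one_eq_succ]
      have : fseq C (j + 1) < fseq C σ :=
        (fseq_lt_iff hC hδs (lt_trans hj1 hσ) hσ).mpr hj1
      obtain ⟨k, hk⟩ := Ordinal.lt_lsub_iff.mp (hl ▸ this)
      refine ⟨k, ?_⟩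
      have : fseq C (j + 1) < fseq C (m k) := lt_of_le_of_lt hk (hmspec k).2
      have hjm : j + 1 < m k := (fseq_lt_iff hC hδs (lt_trans hj1 hσ)
        (lt_trans (hmspec k).1 hσ)).mp this
      exact lt_of_lt_of_le (lt_of_lt_of_le (lt_add_one j) (le_refl _)) hjm.le
        |>.trans_le (le_refl _) |> (fun h => h)
    have hlm : Ordinal.lsub.{u,u} m = σ := by
      apply le_antisymm (Ordinal.lsub_le (fun k => (hmspec k).1))
      by_contra hcon
      push_neg at hcon
      obtain ⟨k, hk⟩ := hcof _ hcon
      exact absurd (Ordinal.lt_lsub m k) (not_lt.mpr hk.le)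
    calc σ.cof = (Ordinal.lsub.{u,u} m).cof := by rw [hlm]
    _ ≤ #ι := Ordinal.cof_lsub_le _
    _ = (fseq C σ).cof := hcard

lemma case1 {χ : Cardinal.{u}} (hreg : χ.IsRegular) (hℵ : ℵ₀ < χ)
    {η : Ordinal.{u}} (hw : ¬ SNR η χ)
    (hmin : ∀ β : Ordinal.{u}, β < η → β ≤ χ.ord ∨ SNR β χ)
    (h : Ordinal.{u} → Ordinal.{u}) (hb : ∀ α < η, h α < χ.ord) :
    IsStatIn (refSet η χ h) η := by
  classical
  intro C hCclub
  by_contra hne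
  rw [Set.not_nonempty_iff_eq_empty] at hne
  have hdisj : ∀ δ, δ ∈ refSet η χ h → δ ∉ C := fun δ h1 h2 =>
    (Set.eq_empty_iff_forall_notMem.mp hne δ) (Set.mem_inter h1 h2)
  apply hw
  have hordpos : (0 : Ordinal) < χ.ord :=
    Cardinal.lt_ord.mpr (by rw [Ordinal.card_zero]; exact lt_trans Cardinal.aleph0_pos hℵ)
  set g : Ordinal → Ordinal → Ordinal := fun γ α =>
    if hg : SNR (γ + 1) χ then Classical.choose hg α else 0 with hgdef
  set h' : Ordinal → Ordinal := fun α => if α ∈ C then h α else g (nxt C α) α with hh'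
  refine ⟨h', ?_, ?_⟩
  · intro α hα
    by_cases hαC : α ∈ C
    · simp only [hh', if_pos hαC]; exact hb α hα
    · simp only [hh', if_neg hαC, hgdef]
      by_cases hg : SNR (nxt C α + 1) χ
      · rw [dif_pos hg]
        have h1 : α < nxt C α + 1 := by
          rw [Ordinal.add_one_eq_succ]
          exact lt_trans (nxt_spec hCclub hα).2 (Order.lt_succ _)
        exact (Classical.choose_spec hg).1 α h1
      · rw [dif_neg hg]; exact hordpos
  · rintro δ ⟨hδη, hδcof⟩
    have hδlim : Order.IsSuccLimit δ := Ordinal.aleph0_le_cof.mp (by rw [hδcof]; exact hreg.1)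
    have hχcofδ : ℵ₀ < δ.cof := by rw [hδcof]; exact hℵ
    by_cases hacc : ∀ β < δ, ∃ c ∈ C, β < c ∧ c < δ
    · have hδC : δ ∈ C := hCclub.2.2 δ hδlim.pos hδη hacc
      have hmem : ∃ D, IsClubIn D δ ∧ StrictMonoOn h D := by
        by_contra hcon
        exact hdisj δ ⟨⟨hδη, hδcof⟩, hcon⟩ hδC
      obtain ⟨D, hD, hmono⟩ := hmem
      have hCδ : IsClubIn (C ∩ Set.Iio δ) δ := by
        refine ⟨fun x hx => hx.2, fun β hβ => ?_, fun α h0 hα hlim => ?_⟩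
        · obtain ⟨c, hc, h1, h2⟩ := hacc β hβ; exact ⟨c, ⟨hc, h2⟩, h1⟩
        · refine ⟨hCclub.2.2 α h0 (lt_trans hα hδη) ?_, hα⟩
          intro β hβ; obtain ⟨γ, hγ, h1, h2⟩ := hlim β hβ; exact ⟨γ, hγ.1, h1, h2⟩
      refine ⟨D ∩ (C ∩ Set.Iio δ), inter_club hχcofδ hD hCδ, ?_⟩
      intro x hx y hy hxy
      simp only [hh', if_pos hx.2.1, if_pos hy.2.1]
      exact hmono hx.1 hy.1 hxy
    · push_neg at hacc
      obtain ⟨β, hβδ, hbnd⟩ := hacc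
      set γ := nxt C β with hγdef
      have hγs := nxt_spec hCclub (lt_trans hβδ hδη)
      have hγC : γ ∈ C := hγs.1
      have hδγ : δ ≤ γ := hbnd γ hγC hγs.2
      have hγη : γ < η := hCclub.1 γ hγC
      have hγγ1 : γ < γ + 1 := by rw [Ordinal.add_one_eq_succ]; exact Order.lt_succ γ
      have hγ1η : γ + 1 < η := by
        obtain ⟨c', hc', hγc'⟩ := hCclub.2.1 γ hγη
        have h1 : γ + 1 ≤ c' := by
          rw [Ordinal.add_one_eq_succ]; exact Order.succ_le_of_lt hγc'
        exact lt_of_le_of_lt h1 (hCclub.1 c' hc')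
      have hnxt_eq : ∀ x, β < x → x < δ → nxt C x = γ := by
        intro x hβx hxδ
        apply le_antisymm
        · exact csInf_le (OrderBot.bddBelow _) ⟨hγC, lt_of_lt_of_le hxδ hδγ⟩
        · exact le_csInf ⟨γ, hγC, lt_of_lt_of_le hxδ hδγ⟩
            (fun b hb => csInf_le (OrderBot.bddBelow _) ⟨hb.1, lt_trans hβx hb.2⟩)
      rcases hmin (γ + 1) hγ1η with hle | hg
      · exfalso
        have h1 : δ < χ.ord := lt_of_lt_of_le (lt_of_le_of_lt hδγ hγγ1) hle
        have h2 : δ.card < χ := Cardinal.lt_ord.mp h1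
        exact absurd hδcof (ne_of_lt (lt_of_le_of_lt (Ordinal.cof_le_card δ) h2))
      · obtain ⟨gbd, gmain⟩ := Classical.choose_spec hg
        obtain ⟨D, hD, hmono⟩ := gmain δ ⟨lt_of_le_of_lt hδγ hγγ1, hδcof⟩
        refine ⟨D ∩ {x | β < x}, ?_, ?_⟩
        · refine ⟨fun x hx => hD.1 x hx.1, fun β' hβ' => ?_, fun α h0 hα hlim => ?_⟩
          · obtain ⟨c, hc, hc2⟩ := hD.2.1 (max β β') (max_lt hβδ hβ')
            exact ⟨c, ⟨hc, lt_of_le_of_lt (le_max_left _ _) hc2⟩,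
              lt_of_le_of_lt (le_max_right _ _) hc2⟩
          · refine ⟨hD.2.2 α h0 hα (fun b hb' => ?_), ?_⟩
            · obtain ⟨γ', hγ', h1, h2⟩ := hlim b hb'; exact ⟨γ', hγ'.1, h1, h2⟩
            · obtain ⟨γ', hγ', _, h2⟩ := hlim 0 h0
              exact lt_trans hγ'.2 h2
        · intro x hx y hy hxy
          have hxδ : x < δ := hD.1 x hx.1
          have hyδ : y < δ := hD.1 y hy.1
          have hx2 : x ∉ C := fun hxC => absurd hxδ (not_lt.mpr (hbnd x hxC hx.2))
          have hy2 : y ∉ C := fun hyC => absurd hyδ (not_lt.mpr (hbnd y hyC hy.2))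
          have hgeq : g γ = fun α => Classical.choose hg α := by
            funext z; simp only [hgdef]; exact dif_pos hg
          simp only [hh', if_neg hx2, if_neg hy2, hnxt_eq x hx.2 hxδ,
            hnxt_eq y hy.2 hyδ, hgeq]
          exact hmono hx.1 hy.1 hxy

end Stmt2Aux

open Stmt2Aux Ordinal Cardinal

/-- Observation 1.2(4): with `θ*(χ)` the minimal ordinal weakly reflecting at
`χ`, if `η = θ*(χ)`, or `cf(η) ≥ θ*(χ)` and `S^η_{θ*(χ)}` is stationary in `η`,
then for every `h : η → χ` the set `ref(h)` is stationary in `η`. -/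
theorem stmt2 (χ : Cardinal) (hreg : χ.IsRegular) (hℵ : Cardinal.aleph0 < χ)
    (hex : ∃ η, WeaklyReflects η χ)
    (θstar : Ordinal) (hθ : θstar = sInf {η | WeaklyReflects η χ})
    (η : Ordinal)
    (hcase : η = θstar ∨
      (θstar ≤ (Ordinal.cof η).ord ∧
        IsStatIn {δ | δ < η ∧ (Ordinal.cof δ).ord = θstar} η)) :
    ∀ h : Ordinal → Ordinal, (∀ α < η, h α < χ.ord) →
      IsStatIn (refSet η χ h) η := by

  classical
  intro h hb
  have hWθ : WeaklyReflects θstar χ := by rw [hθ]; exact csInf_mem hex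
  have hmin' : ∀ β : Ordinal, β < θstar → β ≤ χ.ord ∨ SNR β χ := by
    intro β hβ
    by_contra hcon
    push_neg at hcon
    have hWβ : WeaklyReflects β χ := ⟨hcon.1, hcon.2⟩
    have hle : θstar ≤ β := by
      rw [hθ]; exact csInf_le (OrderBot.bddBelow _) hWβ
    exact absurd hβ (not_lt.mpr hle)
  rcases hcase with heq | ⟨hcof, hstat⟩
  · subst heq
    exact case1 hreg hℵ hWθ.2 hmin' h hb
  · intro C hCclub
    by_contra hne
    rw [Set.not_nonempty_iff_eq_empty] at hne
    have hdisj : ∀ δ, δ ∈ refSet η χ h → δ ∉ C := fun δ h1 h2 =>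
      (Set.eq_empty_iff_forall_notMem.mp hne δ) (Set.mem_inter h1 h2)
    have hχθ : χ.ord < θstar := hWθ.1
    have hχcofη : ℵ₀ < η.cof := by
      have h1 : χ.ord < (Ordinal.cof η).ord := lt_of_lt_of_le hχθ hcof
      exact lt_trans hℵ (Cardinal.ord_lt_ord.mp h1)
    obtain ⟨δs, hδsS, hδsA⟩ := hstat (accSet C η) (accSet_club hχcofη hCclub)
    have hθeq : (Ordinal.cof δs).ord = θstar := hδsS.2
    set f := fseq C with hf
    have key := fseq_key hCclub hδsA
    have hgbd : ∀ α < θstar, h (f α) < χ.ord := by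
      intro α hα
      rw [← hθeq] at hα
      exact hb _ (lt_trans (key α hα).2.1 hδsS.1)
    have hσex : ∃ σ ∈ Sset θstar χ,
        ∀ T, IsClubIn T σ → ¬ StrictMonoOn (fun α => h (f α)) T := by
      by_contra hcon
      push_neg at hcon
      exact hWθ.2 ⟨fun α => h (f α), hgbd, hcon⟩
    obtain ⟨σ, ⟨hσθ, hσcof⟩, hσbad⟩ := hσex
    have hσlim : Order.IsSuccLimit σ := Ordinal.aleph0_le_cof.mp (by rw [hσcof]; exact hreg.1)
    have hσθ' : σ < (Ordinal.cof δs).ord := by rw [hθeq]; exact hσθ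
    set δ' := f σ with hδ'
    have hδ'C : δ' ∈ C := (key σ hσθ').1
    have hδ'η : δ' < η := lt_trans (key σ hσθ').2.1 hδsS.1
    have hδ'cof : Ordinal.cof δ' = χ := by
      rw [hδ', hf, fseq_cof hCclub hδsA hσθ' hσlim, hσcof]
    have hχδ' : ℵ₀ < δ'.cof := by rw [hδ'cof]; exact hℵ
    have hcont := fseq_cont hCclub hδsA hσθ' hσlim
    have hreflect : ∀ {i j : Ordinal}, i < σ → j < σ → (f i < f j ↔ i < j) :=
      fun hi hj => fseq_lt_iff hCclub hδsA (lt_trans hi hσθ') (lt_trans hj hσθ')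
    have hmemD : ∃ D, IsClubIn D δ' ∧ StrictMonoOn h D := by
      by_contra hcon
      exact hdisj δ' ⟨⟨hδ'η, hδ'cof⟩, hcon⟩ hδ'C
    obtain ⟨D, hD, hmono⟩ := hmemD
    have hEclub : IsClubIn (f '' Set.Iio σ) δ' := by
      refine ⟨?_, ?_, ?_⟩
      · rintro x ⟨i, hi, rfl⟩
        exact (key σ hσθ').2.2 i hi
      · intro β hβ
        rw [hδ', hf, hcont] at hβ
        obtain ⟨j, hj, hβj⟩ := (Ordinal.lt_bsup _).mp hβ
        exact ⟨f j, ⟨j, hj, rfl⟩, hβj⟩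
      · intro α h0 hα hlim
        set I := {i | i < σ ∧ f i < α} with hI
        have hIbdd : BddAbove I := ⟨σ, fun i hi => le_of_lt hi.1⟩
        have hIne : I.Nonempty := by
          obtain ⟨y, ⟨i, hi, rfl⟩, _, hyα⟩ := hlim 0 h0
          exact ⟨i, hi, hyα⟩
        have hnomax : ∀ i ∈ I, ∃ i' ∈ I, i < i' := by
          intro i hi
          obtain ⟨y, ⟨i', hi', rfl⟩, hy1, hy2⟩ := hlim (f i) hi.2
          exact ⟨i', ⟨hi', hy2⟩, (hreflect hi.1 hi').mp hy1⟩
        set istar := sSup I with histar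
        have histar_le : istar ≤ σ := csSup_le hIne (fun i hi => le_of_lt hi.1)
        have hnotmem : istar ∉ I := by
          intro hmem
          obtain ⟨i', hi', hlt⟩ := hnomax istar hmem
          exact absurd (le_csSup hIbdd hi') (not_le.mpr hlt)
        have hlt_istar : ∀ i ∈ I, i < istar := fun i hi =>
          lt_of_le_of_ne (le_csSup hIbdd hi) (fun he => hnotmem (he ▸ hi))
        have hcofI : ∀ j < istar, ∃ i ∈ I, j < i := by
          intro j hj
          by_contra hcon; push_neg at hcon
          exact absurd (csSup_le hIne hcon) (not_le.mpr hj)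
        obtain ⟨i0, hi0⟩ := hIne
        have histar_lim : Order.IsSuccLimit istar := by
          rw [Ordinal.isSuccLimit_iff, Order.isSuccPrelimit_iff_succ_lt]
          refine ⟨?_, ?_⟩
          · exact ne_of_gt (lt_of_le_of_lt (zero_le (a := i0)) (hlt_istar i0 hi0))
          · intro a ha
            obtain ⟨i, hi, hai⟩ := hcofI a ha
            exact lt_of_le_of_lt (Order.succ_le_of_lt hai) (hlt_istar i hi)
        have histar_ne : istar ≠ σ := by
          intro he
          have hle : δ' ≤ α := by
            rw [hδ', hf, hcont]
            apply Ordinal.bsup_le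
            intro j hj
            obtain ⟨i, hi, hji⟩ := hcofI j (by rw [he]; exact hj)
            exact le_of_lt (lt_trans ((hreflect hj hi.1).mpr hji) hi.2)
          exact absurd hα (not_lt.mpr hle)
        have histar_σ : istar < σ := lt_of_le_of_ne histar_le histar_ne
        have hcont2 := fseq_cont hCclub hδsA (lt_trans histar_σ hσθ') histar_lim
        have hfistar : f istar = α := by
          apply le_antisymm
          · show fseq C istar ≤ α
            rw [hcont2]
            apply Ordinal.bsup_le
            intro j hj
            obtain ⟨i, hi, hji⟩ := hcofI j hj
            exact le_of_lt (lt_trans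
              ((hreflect (lt_trans hj histar_σ) hi.1).mpr hji) hi.2)
          · by_contra hcon
            push_neg at hcon
            exact hnotmem ⟨histar_σ, hcon⟩
        exact ⟨istar, histar_σ, hfistar⟩
    have hTclub : IsClubIn {i | i < σ ∧ f i ∈ D} σ := by
      refine ⟨fun i hi => hi.1, ?_, ?_⟩
      · intro j hj
        have hfj : f j < δ' := (key σ hσθ').2.2 j hj
        obtain ⟨x, hxE, hxD, hfjx, _⟩ := inter_unbounded hχδ' hEclub hD hfj
        obtain ⟨i, hi, rfl⟩ := hxE
        exact ⟨i, ⟨hi, hxD⟩, (hreflect hj hi).mp hfjx⟩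
      · intro i h0 hiσ hlim
        refine ⟨hiσ, ?_⟩
        have hilim : Order.IsSuccLimit i := by
          rw [Ordinal.isSuccLimit_iff, Order.isSuccPrelimit_iff_succ_lt]
          refine ⟨ne_of_gt h0, ?_⟩
          intro a ha
          obtain ⟨t, _, h1, h2⟩ := hlim a ha
          exact lt_of_le_of_lt (Order.succ_le_of_lt h1) h2
        have hconti := fseq_cont hCclub hδsA (lt_trans hiσ hσθ') hilim
        apply hD.2.2 (f i)
        · exact lt_of_le_of_lt (zero_le (a := (f 0)))
            ((key i (lt_trans hiσ hσθ')).2.2 0 h0)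
        · exact (key σ hσθ').2.2 i hiσ
        · intro β hβ
          rw [show f i = _ from hconti] at hβ
          obtain ⟨j, hj, hβj⟩ := (Ordinal.lt_bsup _).mp hβ
          obtain ⟨t, ht, hjt, hti⟩ := hlim j hj
          exact ⟨f t, ht.2, lt_trans hβj
            ((hreflect (lt_trans hj hiσ) (lt_trans hti hiσ)).mpr hjt),
            (hreflect (lt_trans hti hiσ) hiσ).mpr hti⟩
    have hTmono : StrictMonoOn (fun α => h (f α)) {i | i < σ ∧ f i ∈ D} := by
      intro i hi j hj hij
      exact hmono hi.2 hj.2 ((hreflect hi.1 hj.1).mpr hij)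
    exact hσbad _ hTclub hTmono
end

section
/- Suppose that η > χ > ℵ₀ and χ is a regular cardinal. Then I[η,χ) is a χ-complete ideal on η: it is nonempty, downward closed under inclusion, and closed under unions of fewer than χ of its members (it may be improper, i.e. it may contain η itself). -/
set_option linter.deprecated false
set_option maxHeartbeats 1000000

/-- The ideal `I[η,χ)`: sets `A ⊆ η` for which some `h : η → χ` is strictly
increasing on a club of every `δ ∈ A ∩ S^η_χ`. -/
def Iidx (η : Ordinal) (χ : Cardinal) : Set (Set Ordinal) :=
  {A | A ⊆ Set.Iio η ∧ ∃ h : Ordinal → Ordinal, (∀ α < η, h α < χ.ord) ∧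
    ∀ δ ∈ A ∩ Sset η χ, ∃ C, IsClubIn C δ ∧ StrictMonoOn h C}

lemma bdd_helper {c β : Ordinal} {S : Set Ordinal} (f g : Ordinal → Ordinal)
    (hc : 0 < c) (hβ : β.card < c.cof)
    (hginj : Set.InjOn g S) (hgβ : ∀ x ∈ S, g x < β)
    (hf : ∀ x ∈ S, f x < c) :
    ∃ b < c, ∀ x ∈ S, f x ≤ b := by
  classical
  refine ⟨Ordinal.bsup β (fun ξ _ =>
    if h : ∃ x ∈ S, g x = ξ then f h.choose else 0), ?_, ?_⟩
  · apply Ordinal.bsup_lt_ord hβ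
    intro ξ hξ
    show (if h : ∃ x ∈ S, g x = ξ then f h.choose else 0) < c
    split
    next h => exact hf _ h.choose_spec.1
    next => exact hc
  · intro x hx
    have hgx := hgβ x hx
    have h' : ∃ x' ∈ S, g x' = g x := ⟨x, hx, rfl⟩
    have key : (if h : ∃ x' ∈ S, g x' = g x then f h.choose else 0) = f x := by
      rw [dif_pos h']
      congr 1
      exact hginj h'.choose_spec.1 hx h'.choose_spec.2
    calc f x = _ := key.symm
      _ ≤ _ := Ordinal.le_bsup _ _ hgx

/-- Theorem 1.4: for regular `χ > ℵ₀` and `η > χ`, the collection `I[η,χ)` is a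
`χ`-complete ideal on `η`: nonempty, downward closed, and closed under unions
of fewer than `χ` of its members. -/
theorem stmt3 (χ : Cardinal) (hreg : χ.IsRegular) (hℵ : Cardinal.aleph0 < χ)
    (η : Ordinal) (hη : χ.ord < η) :
    (Iidx η χ).Nonempty ∧
    (∀ A ∈ Iidx η χ, ∀ B ⊆ A, B ∈ Iidx η χ) ∧
    (∀ ν < χ.ord, ∀ A : Ordinal → Set Ordinal, (∀ i < ν, A i ∈ Iidx η χ) →
      (⋃ i ∈ Set.Iio ν, A i) ∈ Iidx η χ) := by
  classical
  have hord0 : (0 : Ordinal) < χ.ord := by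
    rw [← Cardinal.ord_zero]
    exact Cardinal.ord_lt_ord.2 (Cardinal.aleph0_pos.trans hℵ)
  have hordlim : Order.IsSuccLimit χ.ord := Cardinal.isSuccLimit_ord hreg.aleph0_le
  have hcard_succ : ∀ s < χ.ord, (s + 1).card < χ := by
    intro s hs
    rw [← Cardinal.lt_ord, Ordinal.add_one_eq_succ]
    exact hordlim.succ_lt hs
  have hcof : χ.ord.cof = χ := hreg.cof_eq
  refine ⟨⟨∅, Set.empty_subset _, fun _ => 0, fun _ _ => hord0,
      fun δ hδ => absurd hδ.1 (Set.notMem_empty δ)⟩, ?_, ?_⟩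
  · rintro A ⟨hA1, h, hb, hc⟩ B hBA
    exact ⟨hBA.trans hA1, h, hb, fun δ hδ => hc δ ⟨hBA hδ.1, hδ.2⟩⟩
  intro ν hν A hA
  have key : ∀ i, ∃ h : Ordinal → Ordinal, (∀ α < η, h α < χ.ord) ∧
      (i < ν → ∀ δ ∈ A i ∩ Sset η χ, ∃ C, IsClubIn C δ ∧ StrictMonoOn h C) := by
    intro i
    by_cases hi : i < ν
    · obtain ⟨-, h, hb, hc⟩ := hA i hi
      exact ⟨h, hb, fun _ => hc⟩
    · exact ⟨fun _ => 0, fun _ _ => hord0, fun h' => absurd h' hi⟩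
  choose H hHb hHc using key
  set h : Ordinal → Ordinal := fun α => Ordinal.bsup ν (fun i _ => H i α) with hh
  have hhb : ∀ α < η, h α < χ.ord := by
    intro α hα
    apply Ordinal.bsup_lt_ord (by rw [hcof]; exact Cardinal.lt_ord.1 hν)
    intro i hi
    exact hHb i α hα
  refine ⟨Set.iUnion₂_subset fun i hi => (hA i hi).1, h, hhb, ?_⟩
  rintro δ ⟨hδU, hδη, hδcof⟩
  obtain ⟨i, hiν, hδA⟩ := Set.mem_iUnion₂.1 hδU
  obtain ⟨C, hCclub, hmono⟩ := hHc i hiν δ ⟨hδA, hδη, hδcof⟩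
  obtain ⟨hC1, hC2, hC3⟩ := hCclub
  have hδ0 : (0 : Ordinal) < δ := by
    rcases eq_zero_or_pos δ with h0 | h0
    · exfalso
      rw [h0, Ordinal.cof_zero] at hδcof
      exact (Cardinal.aleph0_pos.trans hℵ).ne' hδcof.symm
    · exact h0
  have hinj : Set.InjOn (H i) C := hmono.injOn
  have hhχC : ∀ x ∈ C, h x < χ.ord := fun x hx => hhb x ((hC1 x hx).trans hδη)
  have hHiχ : ∀ x ∈ C, H i x < χ.ord := fun x hx => hHb i x ((hC1 x hx).trans hδη)
  -- H i is cofinal in χ.ord along C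
  have hcofinal : ∀ s < χ.ord, ∀ b < δ, ∃ γ ∈ C, b < γ ∧ s < H i γ := by
    intro s hs b hb
    by_contra hcon
    push_neg at hcon
    obtain ⟨b', hb', hbd⟩ := bdd_helper (c := δ) (β := s + 1) (S := {γ ∈ C | b < γ})
      id (H i) hδ0 (by rw [hδcof]; exact hcard_succ s hs)
      (hinj.mono fun γ hγ => hγ.1)
      (fun γ hγ => (Order.lt_add_one_iff).2 (hcon γ hγ.1 hγ.2))
      (fun γ hγ => hC1 γ hγ.1)
    obtain ⟨γ, hγC, hγ⟩ := hC2 (max b b') (max_lt hb hb')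
    exact absurd (hbd γ ⟨hγC, (le_max_left _ _).trans_lt hγ⟩)
      (not_le.2 ((le_max_right _ _).trans_lt hγ))
  -- bound for h on initial segments of C
  have hbound : ∀ x < δ, ∃ bnd < χ.ord, ∀ β ∈ C, β ≤ x → h β ≤ bnd := by
    intro x hx
    obtain ⟨α', hα'C, hα'⟩ := hC2 x hx
    obtain ⟨bnd, hbnd, hbd⟩ := bdd_helper (c := χ.ord) (β := H i α' + 1)
      (S := C ∩ Set.Iic x) h (H i) hord0
      (by rw [hcof]; exact hcard_succ _ (hHiχ α' hα'C))
      (hinj.mono Set.inter_subset_left)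
      (fun β hβ => (Order.lt_add_one_iff).2 (hmono hβ.1 hα'C (hβ.2.trans_lt hα')).le)
      (fun β hβ => hhχC β hβ.1)
    exact ⟨bnd, hbnd, fun β hβ hβx => hbd β ⟨hβ, hβx⟩⟩
  have step : ∀ x < δ, ∃ y ∈ C, x < y ∧ ∀ β ∈ C, β ≤ x → h β < H i y := by
    intro x hx
    obtain ⟨bnd, hbnd, hbd⟩ := hbound x hx
    obtain ⟨y, hyC, hxy, hy⟩ := hcofinal bnd hbnd x hx
    exact ⟨y, hyC, hxy, fun β hβ hβx => (hbd β hβ hβx).trans_lt hy⟩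
  set D : Set Ordinal := {α ∈ C | ∀ β ∈ C, β < α → h β < H i α} with hD
  have hDC : D ⊆ C := fun x hx => hx.1
  -- unboundedness of D
  have hDunbdd : ∀ β₀ < δ, ∃ α ∈ D, β₀ < α := by
    intro β₀ hβ₀
    obtain ⟨a0, ha0C, ha0⟩ := hC2 β₀ hβ₀
    let next : Ordinal → Ordinal := fun x => if hx : x < δ then (step x hx).choose else 0
    let seq : ℕ → Ordinal := fun n => Nat.rec a0 (fun _ prev => next prev) n
    have hseq : ∀ n, seq n ∈ C ∧ seq n < seq (n + 1) ∧
        ∀ β ∈ C, β ≤ seq n → h β < H i (seq (n + 1)) := by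
      intro n
      induction n with
      | zero =>
        have hlt : seq 0 < δ := hC1 _ ha0C
        have hs := (step (seq 0) hlt).choose_spec
        have e : seq (0 + 1) = (step (seq 0) hlt).choose := dif_pos hlt
        exact ⟨ha0C, by rw [e]; exact hs.2.1, by rw [e]; exact hs.2.2⟩
      | succ n ih =>
        have hC' : seq (n + 1) ∈ C := by
          have hlt : seq n < δ := hC1 _ ih.1
          have e : seq (n + 1) = (step (seq n) hlt).choose := dif_pos hlt
          rw [e]
          exact (step (seq n) hlt).choose_spec.1
        have hlt : seq (n + 1) < δ := hC1 _ hC'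
        have hs := (step (seq (n + 1)) hlt).choose_spec
        have e : seq (n + 1 + 1) = (step (seq (n + 1)) hlt).choose := dif_pos hlt
        exact ⟨hC', by rw [e]; exact hs.2.1, by rw [e]; exact hs.2.2⟩
    set α : Ordinal := ⨆ n, seq n with hα
    have hle : ∀ n, seq n ≤ α := fun n => Ordinal.le_iSup seq n
    have hslt : ∀ n, seq n < α := fun n =>
      lt_of_lt_of_le (hseq n).2.1 (hle (n + 1))
    have hαδ : α < δ := by
      apply Ordinal.iSup_lt_ord_lift
      · rw [hδcof, Cardinal.mk_nat, Cardinal.lift_aleph0]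
        exact hℵ
      · exact fun n => hC1 _ (hseq n).1
    have happrox : ∀ β < α, ∃ n, β < seq n := by
      intro β hβ
      by_contra hcon
      push_neg at hcon
      exact absurd (Ordinal.iSup_le hcon) (not_le.2 hβ)
    have hαC : α ∈ C := by
      refine hC3 α (lt_of_le_of_lt (zero_le (a := seq 0)) (hslt 0)) hαδ ?_
      intro β hβ
      obtain ⟨n, hn⟩ := happrox β hβ
      exact ⟨seq n, (hseq n).1, hn, hslt n⟩
    refine ⟨α, ⟨hαC, ?_⟩, ha0.trans_le (hle 0)⟩
    intro β hβC hβα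
    obtain ⟨n, hn⟩ := happrox β hβα
    exact lt_of_lt_of_le ((hseq n).2.2 β hβC hn.le)
      (hmono (hseq (n + 1)).1 hαC (hslt (n + 1))).le
  refine ⟨D, ⟨fun x hx => hC1 x (hDC hx), fun β hβ => ?_, ?_⟩, ?_⟩
  · obtain ⟨α, hα, hβα⟩ := hDunbdd β hβ
    exact ⟨α, hα, hβα⟩
  · -- closedness
    intro α hα0 hαδ happ
    have hαC : α ∈ C := by
      refine hC3 α hα0 hαδ ?_
      intro β hβ
      obtain ⟨γ, hγ, h1, h2⟩ := happ β hβ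
      exact ⟨γ, hDC hγ, h1, h2⟩
    refine ⟨hαC, ?_⟩
    intro β hβC hβα
    obtain ⟨γ, hγD, h1, h2⟩ := happ β hβα
    exact lt_of_lt_of_le (hγD.2 β hβC h1) (hmono (hDC hγD) hαC h2).le
  · -- strict monotonicity of h on D
    intro a ha b hb hab
    calc h a < H i b := hb.2 a (hDC ha) hab
      _ ≤ h b := Ordinal.le_bsup _ i hiν
end

section
/- Suppose θ > χ > ℵ₀ are regular cardinals. Then □_{(χ,θ)} implies that θ has the strong non-reflection property for χ. -/
/-- The order type of a set of ordinals (the unique `o` order isomorphic to `s`,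
via strictly increasing enumeration). -/
noncomputable def setOtp (s : Set Ordinal) : Ordinal :=
  sInf {o | ∃ f : Ordinal → Ordinal, StrictMonoOn f (Set.Iio o) ∧ f '' Set.Iio o = s}

/-- `γ` is an accumulation point of `C`: `γ ∈ C` and `γ = sup(C ∩ γ)`. -/
def IsAccPoint (C : Set Ordinal) (γ : Ordinal) : Prop :=
  γ ∈ C ∧ ∀ β < γ, ∃ x ∈ C, β < x ∧ x < γ

/-- The index set of a `□_{(χ,σ)}`-sequence: singular limit ordinals strictly
between `χ` and `σ`. -/
def SquareDom (χ σ : Cardinal) (δ : Ordinal) : Prop :=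
  Order.IsSuccLimit δ ∧ (Ordinal.cof δ).ord < δ ∧ χ.ord < δ ∧ δ < σ.ord

/-- `C` is a `□_{(χ,σ)}`-sequence: for every singular limit `δ ∈ (χ,σ)`,
`C δ` is a club in `δ` of order type `< δ`, and whenever `γ` is an
accumulation point of `C δ` then `γ` is again in the domain (in particular
`γ > χ`) and `C γ = γ ∩ C δ`. -/
def SquareSeq (χ σ : Cardinal) (C : Ordinal → Set Ordinal) : Prop :=
  ∀ δ, SquareDom χ σ δ →
    IsClubIn (C δ) δ ∧ setOtp (C δ) < δ ∧
    ∀ γ, IsAccPoint (C δ) γ → SquareDom χ σ γ ∧ C γ = Set.Iio γ ∩ C δ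

/-- The square principle `□_{(χ,σ)}`. -/
def SquareP (χ σ : Cardinal) : Prop := ∃ C, SquareSeq χ σ C


open Ordinal Set

universe u

lemma enum_exists (s : Set Ordinal.{u}) (hb : BddAbove s) :
    ∃ o, ∃ f : Ordinal.{u} → Ordinal.{u}, StrictMonoOn f (Set.Iio o) ∧ f '' Set.Iio o = s := by
  have hsm : Small.{u} s := Ordinal.bddAbove_iff_small.mp hb
  let β := Shrink s
  let e : β ≃ s := (equivShrink s).symm
  let v : β → Ordinal := fun b => (e b : Ordinal)
  have hvinj : Function.Injective v := fun a b h => e.injective (Subtype.ext h)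
  letI : LinearOrder β := LinearOrder.lift' v hvinj
  have hlt : ∀ a b : β, a < b ↔ v a < v b := fun a b => Iff.rfl
  haveI : WellFoundedLT β := by
    constructor
    have := InvImage.wf v (wellFounded_lt : WellFounded ((· < ·) : Ordinal → Ordinal → Prop))
    exact Subrelation.wf (fun {a b} h => (hlt a b).mp h) this
  haveI : IsWellOrder β (· < ·) := ⟨⟩
  let o := Ordinal.type ((· < ·) : β → β → Prop)
  let g := Ordinal.enum ((· < ·) : β → β → Prop)
  refine ⟨o, fun i => if h : i < o then v (g ⟨i, h⟩) else 0, ?_, ?_⟩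
  · intro i hi j hj hij
    dsimp only
    rw [dif_pos (show i < o from hi), dif_pos (show j < o from hj)]
    rw [← hlt]
    exact g.map_rel_iff.mpr hij
  · ext x
    constructor
    · rintro ⟨i, hi, rfl⟩
      dsimp only
      rw [dif_pos (show i < o from hi)]
      exact (e _).2
    · intro hx
      obtain ⟨⟨i, hi⟩, hgi⟩ := g.surjective (e.symm ⟨x, hx⟩)
      refine ⟨i, hi, ?_⟩
      dsimp only
      rw [dif_pos (show i < o from hi), hgi]
      simp [v, e]

lemma enum_eq_sInf {f : Ordinal.{u} → Ordinal.{u}} {o s}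
    (hm : StrictMonoOn f (Set.Iio o)) (him : f '' Set.Iio o = s) {i} (hi : i < o) :
    f i = sInf (s \ f '' Set.Iio i) := by
  have hmem : f i ∈ s \ f '' Set.Iio i := by
    constructor
    · rw [← him]; exact ⟨i, hi, rfl⟩
    · rintro ⟨j, hj, hji⟩
      exact absurd hji (ne_of_lt (hm (lt_trans hj hi) hi hj))
  refine le_antisymm ?_ (csInf_le' hmem)
  refine le_csInf ⟨_, hmem⟩ ?_
  rintro b ⟨hbs, hbn⟩
  rw [← him] at hbs
  obtain ⟨k, hk, rfl⟩ := hbs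
  rcases lt_trichotomy k i with h | h | h
  · exact absurd ⟨k, h, rfl⟩ hbn
  · subst h; rfl
  · exact le_of_lt (hm hi hk h)

lemma enum_le {f₁ f₂ : Ordinal.{u} → Ordinal.{u}} {o₁ o₂ s}
    (hm₁ : StrictMonoOn f₁ (Set.Iio o₁)) (him₁ : f₁ '' Set.Iio o₁ = s)
    (hm₂ : StrictMonoOn f₂ (Set.Iio o₂)) (him₂ : f₂ '' Set.Iio o₂ = s) :
    o₁ ≤ o₂ := by
  have agree : ∀ i, i < o₁ → i < o₂ → f₁ i = f₂ i := by
    intro i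
    induction i using Ordinal.induction with
    | h i IH =>
      intro hi₁ hi₂
      have him : f₁ '' Set.Iio i = f₂ '' Set.Iio i := by
        ext x
        constructor
        · rintro ⟨j, hj, rfl⟩
          exact ⟨j, hj, (IH j hj (lt_trans hj hi₁) (lt_trans hj hi₂)).symm⟩
        · rintro ⟨j, hj, rfl⟩
          exact ⟨j, hj, IH j hj (lt_trans hj hi₁) (lt_trans hj hi₂)⟩
      rw [enum_eq_sInf hm₁ him₁ hi₁, enum_eq_sInf hm₂ him₂ hi₂, him]
  by_contra h
  push_neg at h
  have h1 : f₁ o₂ ∈ s := by rw [← him₁]; exact ⟨o₂, h, rfl⟩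
  rw [← him₂] at h1
  obtain ⟨j, hj, hje⟩ := h1
  have hj1 : j < o₁ := lt_trans hj h
  rw [← agree j hj1 hj] at hje
  have := hm₁ hj1 h hj
  rw [hje] at this
  exact lt_irrefl _ this

lemma setOtp_eq {f : Ordinal.{u} → Ordinal.{u}} {o : Ordinal.{u}} {s : Set Ordinal.{u}}
    (hm : StrictMonoOn f (Set.Iio o)) (him : f '' Set.Iio o = s) :
    setOtp s = o := by
  have hne : {o' | ∃ f' : Ordinal.{u} → Ordinal.{u}, StrictMonoOn f' (Set.Iio o') ∧ f' '' Set.Iio o' = s}.Nonempty :=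
    ⟨o, f, hm, him⟩
  have hmem : ∃ f' : Ordinal.{u} → Ordinal.{u}, StrictMonoOn f' (Set.Iio (setOtp s)) ∧ f' '' Set.Iio (setOtp s) = s := csInf_mem hne
  obtain ⟨f', hm', him'⟩ := hmem
  exact le_antisymm (enum_le hm' him' hm him) (enum_le hm him hm' him')

lemma club_bddAbove {C : Set Ordinal.{u}} {δ} (hC : IsClubIn C δ) : BddAbove C :=
  ⟨δ, fun x hx => le_of_lt (hC.1 x hx)⟩

lemma club_enum_spec {C : Set Ordinal.{u}} {δ} (hC : IsClubIn C δ) :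
    ∃ f : Ordinal.{u} → Ordinal.{u}, StrictMonoOn f (Set.Iio (setOtp C)) ∧
      f '' Set.Iio (setOtp C) = C := by
  obtain ⟨o, f, hm, him⟩ := enum_exists C (club_bddAbove hC)
  have := setOtp_eq hm him
  subst this
  exact ⟨f, hm, him⟩

lemma club_enum_limit {C : Set Ordinal.{u}} {δ : Ordinal.{u}} {f : Ordinal.{u} → Ordinal.{u}}
    {e : Ordinal.{u}} (hC : IsClubIn C δ)
    (hm : StrictMonoOn f (Set.Iio e)) (him : f '' Set.Iio e = C) {i : Ordinal.{u}} (hi : i < e)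
    (hlim : Order.IsSuccLimit i) :
    IsAccPoint C (f i) ∧ Set.Iio (f i) ∩ C = f '' Set.Iio i := by
  have hmemC : ∀ j, j < e → f j ∈ C := by
    intro j hj; rw [← him]; exact ⟨j, hj, rfl⟩
  have hpart2 : Set.Iio (f i) ∩ C = f '' Set.Iio i := by
    ext x
    constructor
    · rintro ⟨hx1, hx2⟩
      rw [← him] at hx2
      obtain ⟨k, hk, rfl⟩ := hx2
      exact ⟨k, (hm.lt_iff_lt hk hi).mp hx1, rfl⟩
    · rintro ⟨j, hj, rfl⟩
      exact ⟨hm (lt_trans (show j < i from hj) hi) hi hj, hmemC j (lt_trans (show j < i from hj) hi)⟩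
  have h1i : 1 < i := Ordinal.one_lt_of_isSuccLimit hlim
  have h0i : 0 < i := hlim.pos
  have hne : (f '' Set.Iio i).Nonempty := ⟨f 0, 0, h0i, rfl⟩
  have hbdd : BddAbove (f '' Set.Iio i) := by
    refine ⟨f i, ?_⟩
    rintro x ⟨j, hj, rfl⟩
    exact le_of_lt (hm (lt_trans (show j < i from hj) hi) hi hj)
  set u := sSup (f '' Set.Iio i) with hu
  have hui : u ≤ f i := by
    refine csSup_le hne ?_
    rintro x ⟨j, hj, rfl⟩
    exact le_of_lt (hm (lt_trans (show j < i from hj) hi) hi hj)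
  have key : ∀ β, β < u → ∃ x ∈ C, β < x ∧ x < u := by
    intro β hβ
    obtain ⟨x, hx, hβx⟩ := (lt_csSup_iff hbdd hne).mp hβ
    obtain ⟨j, hj, rfl⟩ := hx
    have hji : j < i := hj
    have hju : f j ≤ u := le_csSup hbdd ⟨j, hji, rfl⟩
    have hxlt : f j < u := by
      rcases lt_or_eq_of_le hju with h | h
      · exact h
      · exfalso
        have hj1 : j + 1 < i := hlim.add_one_lt hji
        have h2 : f (j+1) ≤ u := le_csSup hbdd ⟨j+1, hj1, rfl⟩
        have h3 : f j < f (j+1) :=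
          hm (lt_trans hji hi) (lt_trans hj1 hi) (lt_add_one j)
        rw [h] at h3
        exact absurd h2 (not_le_of_gt h3)
    exact ⟨f j, hmemC j (lt_trans hji hi), hβx, hxlt⟩
  have h0u : 0 < u := by
    have h01 : f 0 < f 1 := hm (lt_trans h0i hi) (lt_trans h1i hi) zero_lt_one
    have h1u : f 1 ≤ u := le_csSup hbdd ⟨1, h1i, rfl⟩
    exact lt_of_le_of_lt (zero_le (a := _)) (lt_of_lt_of_le h01 h1u)
  have huδ : u < δ := lt_of_le_of_lt hui (hC.1 _ (hmemC i hi))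
  have huC : u ∈ C := hC.2.2 u h0u huδ key
  have hueq : u = f i := by
    have hmm := huC
    rw [← him] at hmm
    obtain ⟨k, hk, hku⟩ := hmm
    have hke : k < e := hk
    have hik : i ≤ k := by
      by_contra hc
      push_neg at hc
      have hk1 : k + 1 < i := hlim.add_one_lt hc
      have h2 : f (k+1) ≤ u := le_csSup hbdd ⟨k+1, hk1, rfl⟩
      have h3 : f k < f (k+1) := hm hke (lt_trans hk1 hi) (lt_add_one k)
      rw [hku] at h3
      exact absurd h2 (not_le_of_gt h3)
    have hfik : f i ≤ f k := by
      rcases lt_or_eq_of_le hik with h | h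
      · exact le_of_lt (hm hi hke h)
      · subst h; exact le_refl _
    rw [hku] at hfik
    exact le_antisymm hui hfik
  refine ⟨⟨hmemC i hi, ?_⟩, hpart2⟩
  intro β hβ
  rw [← hueq] at hβ
  obtain ⟨x, hxC, h1, h2⟩ := key β hβ
  rw [hueq] at h2
  exact ⟨x, hxC, h1, h2⟩

lemma club_enum_cof {C : Set Ordinal.{u}} {δ : Ordinal.{u}} {f : Ordinal.{u} → Ordinal.{u}}
    {e : Ordinal.{u}} (hC : IsClubIn C δ)
    (hm : StrictMonoOn f (Set.Iio e)) (him : f '' Set.Iio e = C) :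
    Ordinal.cof e = Ordinal.cof δ := by
  have hmemC : ∀ j, j < e → f j ∈ C := by
    intro j hj; rw [← him]; exact ⟨j, hj, rfl⟩
  apply le_antisymm
  · -- cof e ≤ cof δ
    obtain ⟨ι, g, hlsub, hcard⟩ := Ordinal.exists_lsub_cof δ
    have hgδ : ∀ i, g i < δ := fun i => hlsub ▸ Ordinal.lt_lsub g i
    have hSne : ∀ i : ι, {j | j < e ∧ g i < f j}.Nonempty := by
      intro i
      obtain ⟨γ, hγC, hγ⟩ := hC.2.1 (g i) (hgδ i)
      rw [← him] at hγC
      obtain ⟨j, hj, rfl⟩ := hγC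
      exact ⟨j, hj, hγ⟩
    let h : ι → Ordinal := fun i => sInf {j | j < e ∧ g i < f j}
    have hmemS : ∀ i, h i < e ∧ g i < f (h i) := fun i => csInf_mem (hSne i)
    have hlsubh : Ordinal.lsub h = e := by
      apply le_antisymm
      · exact Ordinal.lsub_le_iff.mpr (fun i => (hmemS i).1)
      · by_contra hc
        push_neg at hc
        set b := Ordinal.lsub h with hb
        have hbe : b < e := hc
        have hfb : f b < δ := hC.1 _ (hmemC b hbe)
        have : ∃ i, f b ≤ g i := by
          by_contra hcc
          push_neg at hcc
          have : Ordinal.lsub g ≤ f b := Ordinal.lsub_le_iff.mpr hcc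
          rw [hlsub] at this
          exact absurd hfb (not_lt_of_ge this)
        obtain ⟨i, hi⟩ := this
        have h1 : f b < f (h i) := lt_of_le_of_lt hi (hmemS i).2
        have h2 : b < h i := (hm.lt_iff_lt hbe (hmemS i).1).mp h1
        exact absurd (Ordinal.lt_lsub h i) (not_lt_of_ge (le_of_lt h2))
    calc Ordinal.cof e = Ordinal.cof (Ordinal.lsub h) := by rw [hlsubh]
    _ ≤ Cardinal.mk ι := Ordinal.cof_lsub_le h
    _ = Ordinal.cof δ := hcard
  · -- cof δ ≤ cof e
    obtain ⟨ι, g, hlsub, hcard⟩ := Ordinal.exists_lsub_cof e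
    have hge : ∀ i, g i < e := fun i => hlsub ▸ Ordinal.lt_lsub g i
    let h : ι → Ordinal := fun i => f (g i)
    have hlsubh : Ordinal.lsub h = δ := by
      apply le_antisymm
      · exact Ordinal.lsub_le_iff.mpr (fun i => hC.1 _ (hmemC _ (hge i)))
      · by_contra hc
        push_neg at hc
        set b := Ordinal.lsub h with hb
        obtain ⟨γ, hγC, hγ⟩ := hC.2.1 b hc
        rw [← him] at hγC
        obtain ⟨j, hj, rfl⟩ := hγC
        have : ∃ i, j ≤ g i := by
          by_contra hcc
          push_neg at hcc
          have : Ordinal.lsub g ≤ j := Ordinal.lsub_le_iff.mpr hcc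
          rw [hlsub] at this
          exact absurd (show (j:Ordinal) < e from hj) (not_lt_of_ge this)
        obtain ⟨i, hi⟩ := this
        have h1 : f j ≤ f (g i) := by
          rcases lt_or_eq_of_le hi with h | h
          · exact le_of_lt (hm hj (hge i) h)
          · subst h; exact le_refl _
        have h2 : b < h i := lt_of_lt_of_le hγ h1
        exact absurd (Ordinal.lt_lsub h i) (not_lt_of_ge (le_of_lt h2))
    calc Ordinal.cof δ = Ordinal.cof (Ordinal.lsub h) := by rw [hlsubh]
    _ ≤ Cardinal.mk ι := Ordinal.cof_lsub_le h
    _ = Ordinal.cof e := hcard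

lemma acc_isClub {E : Set Ordinal.{u}} {e : Ordinal.{u}} (hE : IsClubIn E e)
    (hcof : Cardinal.aleph0 < Ordinal.cof e) :
    IsClubIn {i | 0 < i ∧ IsAccPoint E i} e := by
  refine ⟨fun x hx => hE.1 x hx.2.1, ?_, ?_⟩
  · -- unbounded
    intro β hβ
    let pick : Ordinal.{u} → Ordinal.{u} := fun x =>
      if h : x < e then Classical.choose (hE.2.1 x h) else 0
    have hpick : ∀ x, x < e → pick x ∈ E ∧ x < pick x ∧ pick x < e := by
      intro x hx
      have hspec := Classical.choose_spec (hE.2.1 x hx)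
      have : pick x = Classical.choose (hE.2.1 x hx) := dif_pos hx
      rw [this]
      exact ⟨hspec.1, hspec.2, hE.1 _ hspec.1⟩
    let g : ℕ → Ordinal.{u} := fun n => pick^[n+1] β
    have hg0 : g 0 = pick β := rfl
    have hgs : ∀ n, g (n+1) = pick (g n) := by
      intro n
      show pick^[n+2] β = pick (pick^[n+1] β)
      rw [Function.iterate_succ_apply' pick (n+1) β]
    have hgprop : ∀ n, g n ∈ E ∧ g n < e ∧ β < g n := by
      intro n
      induction n with
      | zero =>
        obtain ⟨h1, h2, h3⟩ := hpick β hβ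
        exact ⟨hg0 ▸ h1, hg0 ▸ h3, hg0 ▸ h2⟩
      | succ n ih =>
        obtain ⟨h1, h2, h3⟩ := hpick (g n) ih.2.1
        rw [hgs n]
        exact ⟨h1, h3, lt_trans ih.2.2 h2⟩
    have hgmono : ∀ n, g n < g (n+1) := by
      intro n
      rw [hgs n]
      exact (hpick (g n) (hgprop n).2.1).2.1
    set u := ⨆ n, g n with hu
    have hbddg : BddAbove (Set.range g) := ⟨e, by rintro x ⟨n, rfl⟩; exact le_of_lt (hgprop n).2.1⟩
    have hgu : ∀ n, g n ≤ u := fun n => le_ciSup hbddg n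
    have hue : u < e := by
      apply Ordinal.iSup_lt_ord_lift _ (fun n => (hgprop n).2.1)
      rwa [Cardinal.mk_nat, Cardinal.lift_aleph0]
    have hacc : ∀ β', β' < u → ∃ x ∈ E, β' < x ∧ x < u := by
      intro β' hβ'
      obtain ⟨x, ⟨n, rfl⟩, hβx⟩ := (lt_csSup_iff hbddg (Set.range_nonempty g)).mp hβ'
      exact ⟨g n, (hgprop n).1, hβx, lt_of_lt_of_le (hgmono n) (hgu (n+1))⟩
    have h0u : 0 < u := lt_of_le_of_lt (zero_le (a := β)) (lt_of_lt_of_le (hgprop 0).2.2 (hgu 0))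
    have huE : u ∈ E := hE.2.2 u h0u hue hacc
    exact ⟨u, ⟨h0u, huE, hacc⟩, lt_of_lt_of_le (hgprop 0).2.2 (hgu 0)⟩
  · -- closed
    intro α h0α hαe hcl
    have hclE : ∀ β < α, ∃ γ ∈ E, β < γ ∧ γ < α := by
      intro β hβ
      obtain ⟨γ, hγ, h1, h2⟩ := hcl β hβ
      exact ⟨γ, hγ.2.1, h1, h2⟩
    exact ⟨h0α, hE.2.2 α h0α hαe hclE, hclE⟩

noncomputable def Ffun (χc : Ordinal.{u}) (C : Ordinal.{u} → Set Ordinal.{u}) :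
    Ordinal.{u} → Ordinal.{u} :=
  WellFounded.fix wellFounded_lt
    (fun α IH => if α < χc then α else if h : setOtp (C α) < α then IH _ h else 0)

lemma Ffun_def (χc : Ordinal.{u}) (C : Ordinal.{u} → Set Ordinal.{u}) (α : Ordinal.{u}) :
    Ffun χc C α = if α < χc then α
      else if h : setOtp (C α) < α then Ffun χc C (setOtp (C α)) else 0 := by
  rw [Ffun, WellFounded.fix_eq]

lemma Ffun_of_lt {χc : Ordinal.{u}} {C} {α} (h : α < χc) : Ffun χc C α = α := by
  rw [Ffun_def, if_pos h]

lemma Ffun_of_dom {χc : Ordinal.{u}} {C} {α} (h1 : ¬ α < χc) (h2 : setOtp (C α) < α) :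
    Ffun χc C α = Ffun χc C (setOtp (C α)) := by
  rw [Ffun_def, if_neg h1, dif_pos h2]

lemma Ffun_lt {χc : Ordinal.{u}} {C} (h0 : 0 < χc) (α : Ordinal.{u}) : Ffun χc C α < χc := by
  induction α using Ordinal.induction with
  | h α IH =>
    rw [Ffun_def]
    split_ifs with h1 h2
    · exact h1
    · exact IH _ h2
    · exact h0

/-- Theorem 1.7: for regular cardinals `θ > χ > ℵ₀`, `□_{(χ,θ)}` implies that
`θ` has the strong non-reflection property for `χ`. -/
theorem stmt4 (χ θ : Cardinal) (hχreg : χ.IsRegular) (hθreg : θ.IsRegular)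
    (hℵ : Cardinal.aleph0 < χ) (hχθ : χ < θ) (hsq : SquareP χ θ) :
    SNR θ.ord χ := by
  obtain ⟨C, hsqC⟩ := hsq
  set χc := χ.ord with hχc
  have hχclim : Order.IsSuccLimit χc := Cardinal.isSuccLimit_ord hℵ.le
  have h0χ : (0 : Ordinal) < χc := hχclim.pos
  set F := Ffun χc C with hF
  have main : ∀ δ : Ordinal, δ < θ.ord → Ordinal.cof δ = χ →
      ∃ D, IsClubIn D δ ∧ StrictMonoOn F D := by
    intro δ
    induction δ using Ordinal.induction with
    | h δ IH =>
      intro hδθ hδcof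
      have hχδ : χc ≤ δ := by
        calc χc = (Ordinal.cof δ).ord := by rw [hδcof]
        _ ≤ δ.card.ord := Cardinal.ord_le_ord.mpr (Ordinal.cof_le_card δ)
        _ ≤ δ := Cardinal.ord_card_le δ
      rcases eq_or_lt_of_le hχδ with heq | hlt
      · -- base case : δ = χ.ord
        refine ⟨Set.Iio δ, ⟨fun x hx => hx, ?_, fun α _ hα _ => hα⟩, ?_⟩
        · intro β hβ
          refine ⟨β + 1, ?_, lt_add_one β⟩
          rw [← heq] at hβ ⊢
          exact hχclim.add_one_lt hβ
        · intro a ha b hb hab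
          rw [← heq] at ha hb
          rw [hF, Ffun_of_lt ha, Ffun_of_lt hb]
          exact hab
      · -- main case : χ.ord < δ
        have hδlim : Order.IsSuccLimit δ := by
          rw [← Ordinal.aleph0_le_cof, hδcof]
          exact hℵ.le
        have hdom : SquareDom χ θ δ := ⟨hδlim, by rw [hδcof]; exact hlt, hlt, hδθ⟩
        obtain ⟨hclub, hotp, hcoh⟩ := hsqC δ hdom
        set e := setOtp (C δ) with he
        obtain ⟨f, hf, hfim⟩ := club_enum_spec hclub
        have hecof : Ordinal.cof e = χ := by
          rw [club_enum_cof hclub hf hfim, hδcof]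
        obtain ⟨E, hE, hEmono⟩ := IH e hotp (lt_trans hotp hδθ) hecof
        set E' : Set Ordinal := {i | 0 < i ∧ IsAccPoint E i} with hE'def
        have hE' : IsClubIn E' e := acc_isClub hE (by rw [hecof]; exact hℵ)
        have hE'sub : E' ⊆ E := fun i hi => hi.2.1
        have hE'lim : ∀ i ∈ E', Order.IsSuccLimit i := by
          intro i hi
          refine Ordinal.isSuccLimit_iff.mpr ⟨ne_of_gt hi.1, Order.isSuccPrelimit_of_succ_lt ?_⟩
          intro a ha
          obtain ⟨x, hxE, h1, h2⟩ := hi.2.2 a ha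
          exact lt_of_le_of_lt (Order.succ_le_of_lt h1) h2
        -- key computation
        have hkey : ∀ i ∈ E', F (f i) = F i := by
          intro i hi
          have hie : i < e := hE.1 i (hE'sub hi)
          have hlimi := hE'lim i hi
          obtain ⟨hacc, hint⟩ := club_enum_limit hclub hf hfim hie hlimi
          obtain ⟨hdomγ, hcohγ⟩ := hcoh (f i) hacc
          have hCfi : C (f i) = f '' Set.Iio i := by rw [hcohγ, hint]
          have hotpγ : setOtp (C (f i)) = i := by
            rw [hCfi]
            exact setOtp_eq (hf.mono (fun x hx => lt_trans hx hie)) rfl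
          have hnlt : ¬ f i < χc := not_lt_of_ge (le_of_lt hdomγ.2.2.1)
          have hlt2 : setOtp (C (f i)) < f i := (hsqC (f i) hdomγ).2.1
          rw [hF, Ffun_of_dom hnlt hlt2, hotpγ]
        refine ⟨f '' E', ⟨?_, ?_, ?_⟩, ?_⟩
        · rintro x ⟨i, hi, rfl⟩
          have hie : i < e := hE.1 i (hE'sub hi)
          have : f i ∈ C δ := by rw [← hfim]; exact ⟨i, hie, rfl⟩
          exact hclub.1 _ this
        · -- unbounded
          intro β hβ
          obtain ⟨γ, hγC, hγ⟩ := hclub.2.1 β hβ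
          rw [← hfim] at hγC
          obtain ⟨j, hj, rfl⟩ := hγC
          obtain ⟨i, hi, hji⟩ := hE'.2.1 j hj
          have hie : i < e := hE'.1 i hi
          exact ⟨f i, ⟨i, hi, rfl⟩, lt_trans hγ (hf hj hie hji)⟩
        · -- closed
          intro α h0α hαδ hcl
          have hαC : α ∈ C δ := by
            refine hclub.2.2 α h0α hαδ ?_
            intro β hβ
            obtain ⟨γ, hγ, h1, h2⟩ := hcl β hβ
            obtain ⟨i, hi, rfl⟩ := hγ
            have hie : i < e := hE'.1 i hi
            exact ⟨f i, by rw [← hfim]; exact ⟨i, hie, rfl⟩, h1, h2⟩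
          rw [← hfim] at hαC
          obtain ⟨k, hk, hkα⟩ := hαC
          have hke : k < e := hk
          have hex : ∀ j, j < k → ∃ i ∈ E', j < i ∧ i < k := by
            intro j hj
            have hje : j < e := lt_trans hj hke
            have hfj : f j < α := by rw [← hkα]; exact hf hje hke hj
            obtain ⟨γ, hγ, h1, h2⟩ := hcl (f j) hfj
            obtain ⟨i, hi, rfl⟩ := hγ
            have hie : i < e := hE'.1 i hi
            rw [← hkα] at h2
            exact ⟨i, hi, (hf.lt_iff_lt hje hie).mp h1, (hf.lt_iff_lt hie hke).mp h2⟩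
          have h0k : 0 < k := by
            obtain ⟨γ, hγ, _, h2⟩ := hcl 0 h0α
            obtain ⟨i, hi, rfl⟩ := hγ
            have hie : i < e := hE'.1 i hi
            rw [← hkα] at h2
            exact lt_of_le_of_lt (zero_le (a := i)) ((hf.lt_iff_lt hie hke).mp h2)
          have hkE : k ∈ E := by
            refine hE.2.2 k h0k hke ?_
            intro j hj
            obtain ⟨i, hi, h1, h2⟩ := hex j hj
            exact ⟨i, hE'sub hi, h1, h2⟩
          have hkE' : k ∈ E' := by
            refine ⟨h0k, hkE, ?_⟩
            intro j hj
            obtain ⟨i, hi, h1, h2⟩ := hex j hj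
            exact ⟨i, hE'sub hi, h1, h2⟩
          exact ⟨k, hkE', hkα⟩
        · -- strict mono
          rintro x ⟨i, hi, rfl⟩ y ⟨j, hj, rfl⟩ hxy
          have hie : i < e := hE'.1 i hi
          have hje : j < e := hE'.1 j hj
          rw [hkey i hi, hkey j hj]
          exact hEmono (hE'sub hi) (hE'sub hj) ((hf.lt_iff_lt hie hje).mp hxy)
  refine ⟨F, fun α _ => Ffun_lt h0χ α, ?_⟩
  intro δ hδ
  exact main δ hδ.1 hδ.2
end

section
/- Assume □_{(χ,θ)} holds, where χ < θ are cardinals and χ is regular and uncountable. Then there is a sequence ⟨C_δ⟩, indexed by the limit ordinals δ with χ < δ < θ and ℵ₀ ≤ cf(δ) < χ on which the original square sequence is defined, such that for each such δ: (i) C_δ is a club subset of δ; (ii) otp(C_δ) < δ, and if cf(δ) < χ then otp(C_δ) < χ; (iii) if γ is an accumulation point of C_δ and C_γ is defined, then C_γ = C_δ ∩ γ. -/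
namespace Stmt5Aux

open Ordinal Set

universe u

/-- `f` enumerates `s` in increasing order along `Iio o`. -/
def IsWit (s : Set Ordinal.{u}) (o : Ordinal.{u}) (f : Ordinal.{u} → Ordinal.{u}) : Prop :=
  StrictMonoOn f (Set.Iio o) ∧ f '' Set.Iio o = s

lemma IsWit.mem {s o f} (h : IsWit s o f) {j : Ordinal} (hj : j < o) : f j ∈ s :=
  h.2 ▸ ⟨j, hj, rfl⟩

lemma IsWit.reflect {s o f} (h : IsWit s o f) {j k : Ordinal} (hj : j < o) (hk : k < o)
    (hfj : f j < f k) : j < k := (h.1.lt_iff_lt hj hk).1 hfj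

/-- Every bounded set of ordinals has an enumeration. -/
lemma exists_wit {s : Set Ordinal.{u}} {b : Ordinal.{u}} (hb : ∀ x ∈ s, x < b) :
    ∃ o f, IsWit s o f := by
  classical
  set s' : Set Ordinal := s ∪ Set.Ici b with hs'
  have hub : ¬ BddAbove s' := by
    rintro ⟨a, ha⟩
    have hm : max b (a + 1) ∈ s' := Or.inr (Set.mem_Ici.mpr (le_max_left _ _))
    have := ha hm
    have h2 : a + 1 ≤ a := le_trans (le_max_right _ _) this
    exact absurd h2 (by simp)
  set f := enumOrd s' with hf
  have hmono := enumOrd_strictMono hub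
  have hrange : Set.range f = s' := range_enumOrd hub
  obtain ⟨i0, hi0⟩ : b ∈ Set.range f := by rw [hrange]; exact Or.inr (Set.mem_Ici.mpr le_rfl)
  set T : Set Ordinal := {i | b ≤ f i} with hT
  have hTne : T.Nonempty := ⟨i0, le_of_eq hi0.symm⟩
  set o := sInf T with ho
  have hoT : o ∈ T := csInf_mem hTne
  refine ⟨o, f, hmono.strictMonoOn _, ?_⟩
  apply Set.eq_of_subset_of_subset
  · rintro x ⟨i, hi, rfl⟩
    have hnb : ¬ b ≤ f i := by
      intro hle
      exact absurd (csInf_le (OrderBot.bddBelow T) hle) (not_le.2 hi)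
    have : f i ∈ s' := by rw [← hrange]; exact ⟨i, rfl⟩
    rcases this with h | h
    · exact h
    · exact absurd h hnb
  · intro x hx
    have : x ∈ Set.range f := by rw [hrange]; exact Or.inl hx
    obtain ⟨i, rfl⟩ := this
    rcases lt_or_ge i o with hio | hio
    · exact ⟨i, hio, rfl⟩
    · exact absurd (le_trans hoT (hmono.monotone hio)) (not_le.2 (hb _ hx))

lemma wit_apply {s o f} (h : IsWit s o f) {j} (hj : j < o) :
    f j = sInf (s \ f '' Set.Iio j) := by
  have hmem : f j ∈ s \ f '' Set.Iio j := by
    refine ⟨h.mem hj, ?_⟩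
    rintro ⟨k, hk, hkj⟩
    exact absurd hkj (ne_of_lt (h.1 (lt_trans hk hj) hj hk))
  have hlb : ∀ x ∈ s \ f '' Set.Iio j, f j ≤ x := by
    rintro x ⟨hxs, hxn⟩
    obtain ⟨k, hk, rfl⟩ : x ∈ f '' Set.Iio o := h.2 ▸ hxs
    rcases lt_or_ge k j with hkj | hjk
    · exact absurd ⟨k, hkj, rfl⟩ hxn
    · exact h.1.monotoneOn hj hk hjk
  exact le_antisymm (le_csInf ⟨_, hmem⟩ hlb) (csInf_le (OrderBot.bddBelow _) hmem)

lemma wit_agree {s o₁ f₁ o₂ f₂} (h1 : IsWit s o₁ f₁) (h2 : IsWit s o₂ f₂) :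
    ∀ j, j < o₁ → j < o₂ → f₁ j = f₂ j := by
  intro j
  induction j using Ordinal.induction with
  | _ j IH =>
    intro h1j h2j
    have himg : f₁ '' Set.Iio j = f₂ '' Set.Iio j := by
      ext x
      constructor <;> rintro ⟨k, hk, rfl⟩
      · exact ⟨k, hk, (IH k hk (hk.trans h1j) (hk.trans h2j)).symm⟩
      · exact ⟨k, hk, IH k hk (hk.trans h1j) (hk.trans h2j)⟩
    rw [wit_apply h1 h1j, wit_apply h2 h2j, himg]

lemma wit_otp_le {s o₁ f₁ o₂ f₂} (h1 : IsWit s o₁ f₁) (h2 : IsWit s o₂ f₂) :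
    o₁ ≤ o₂ := by
  by_contra hlt
  push_neg at hlt
  have hx : f₁ o₂ ∈ s := h1.mem hlt
  obtain ⟨k, hk, hke⟩ : f₁ o₂ ∈ f₂ '' Set.Iio o₂ := h2.2 ▸ hx
  have : f₁ k = f₁ o₂ := by
    rw [wit_agree h1 h2 k (hk.trans hlt) hk]; exact hke
  have := h1.1.injOn (hk.trans hlt) hlt this
  exact absurd this (ne_of_lt hk)

lemma wit_otp_eq {s o₁ f₁ o₂ f₂} (h1 : IsWit s o₁ f₁) (h2 : IsWit s o₂ f₂) :
    o₁ = o₂ := le_antisymm (wit_otp_le h1 h2) (wit_otp_le h2 h1)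

lemma setOtp_eq {s : Set Ordinal.{u}} {o f} (h : IsWit s o f) : setOtp.{u,u} s = o := by
  have hne : {o' : Ordinal.{u} | ∃ f' : Ordinal.{u} → Ordinal.{u},
      StrictMonoOn f' (Set.Iio o') ∧ f' '' Set.Iio o' = s}.Nonempty :=
    ⟨o, f, h.1, h.2⟩
  have hmem := csInf_mem hne
  obtain ⟨f', hf'⟩ := hmem
  exact wit_otp_eq (⟨hf'.1, hf'.2⟩ : IsWit s _ f') h

lemma wit_le_apply {s o f} (h : IsWit s o f) : ∀ j < o, j ≤ f j := by
  intro j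
  induction j using Ordinal.induction with
  | _ j IH =>
    intro hj
    refine le_of_not_gt fun hlt => ?_
    have h1 : f j ≤ f (f j) := IH (f j) hlt (hlt.trans hj)
    have h2 : f (f j) < f j := h.1 (hlt.trans hj) hj hlt
    exact absurd h1 (not_le.2 h2)

lemma wit_restrict {s o f} (h : IsWit s o f) {i} (hi : i < o) :
    IsWit (s ∩ Set.Iio (f i)) i f := by
  constructor
  · exact h.1.mono fun x hx => lt_trans hx hi
  · apply Set.eq_of_subset_of_subset
    · rintro x ⟨k, hk, rfl⟩
      exact ⟨h.mem (hk.trans hi), h.1 (hk.trans hi) hi hk⟩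
    · rintro x ⟨hxs, hxlt⟩
      obtain ⟨k, hk, rfl⟩ : x ∈ f '' Set.Iio o := h.2 ▸ hxs
      rcases lt_or_ge k i with hik | hik
      · exact ⟨k, hik, rfl⟩
      · exact absurd (h.1.monotoneOn hi hk hik) (not_le.2 hxlt)

open scoped Classical in
/-- The canonical enumeration of a set of ordinals. -/
noncomputable def wEnum (s : Set Ordinal.{u}) : Ordinal.{u} → Ordinal.{u} :=
  if h : ∃ o f, IsWit s o f then h.choose_spec.choose else fun _ => 0

lemma wEnum_wit {s : Set Ordinal.{u}} (h : ∃ o f, IsWit s o f) :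
    IsWit s (setOtp.{u,u} s) (wEnum s) := by
  have h2 := h.choose_spec.choose_spec
  have he : setOtp.{u,u} s = h.choose := setOtp_eq h2
  rw [wEnum]
  rw [dif_pos h, he]
  exact h2

lemma cof_le_card_of_wit {γ t : Ordinal.{u}} {g : Ordinal.{u} → Ordinal.{u}}
    {s : Set Ordinal.{u}} (hw : IsWit s t g) (hsub : ∀ x ∈ s, x < γ)
    (hcof : ∀ β < γ, ∃ x ∈ s, β < x) : γ.cof ≤ t.card := by
  classical
  haveI : IsWellOrder t.ToType (· < ·) := isWellOrder_lt
  set F : t.ToType → Ordinal.{u} := fun x => g (typein (α := t.ToType) (· < ·) x) with hF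
  have hFs : ∀ x, F x ∈ s := fun x => hw.mem (typein_lt_self x)
  have hFlt : ∀ x, F x < γ := fun x => hsub _ (hFs x)
  have hlsub : Ordinal.lsub F = γ := by
    apply le_antisymm (Ordinal.lsub_le hFlt)
    by_contra hl
    push_neg at hl
    obtain ⟨x, hxs, hlx⟩ := hcof _ hl
    obtain ⟨j, hj, rfl⟩ : x ∈ g '' Set.Iio t := hw.2 ▸ hxs
    obtain ⟨y, hy⟩ : ∃ y, typein (α := t.ToType) (· < ·) y = j :=
      Ordinal.typein_surj _ (by rwa [Ordinal.type_toType])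
    have hFy : F y = g j := by rw [hF]; simp only [hy]
    have h2 := Ordinal.lt_lsub F y
    rw [hFy] at h2
    exact absurd hlx (not_lt.2 (le_of_lt h2))
  calc γ.cof = (Ordinal.lsub F).cof := by rw [hlsub]
    _ ≤ Cardinal.mk t.ToType := Ordinal.cof_lsub_le F
    _ = t.card := Cardinal.mk_toType t

lemma cof_le_cof_of_wit {δ o : Ordinal.{u}} {f : Ordinal.{u} → Ordinal.{u}}
    {s : Set Ordinal.{u}} (hw : IsWit s o f) (hsub : ∀ x ∈ s, x < δ)
    (hcof : ∀ β < δ, ∃ x ∈ s, β < x) : o.cof ≤ δ.cof := by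
  classical
  haveI : IsWellOrder δ.ToType (· < ·) := isWellOrder_lt
  have hne : {a : Cardinal.{u} | ∃ (ι : Type u) (F : ι → Ordinal.{u}),
      Ordinal.lsub F = δ ∧ Cardinal.mk ι = a}.Nonempty :=
    ⟨δ.card, δ.ToType, fun x => typein (α := δ.ToType) (· < ·) x,
      Ordinal.lsub_typein δ, Cardinal.mk_toType δ⟩
  have hmem : δ.cof ∈ {a : Cardinal.{u} | ∃ (ι : Type u) (F : ι → Ordinal.{u}),
      Ordinal.lsub F = δ ∧ Cardinal.mk ι = a} := by
    rw [Ordinal.cof_eq_sInf_lsub δ]; exact csInf_mem hne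
  obtain ⟨ι, F, hlF, hcard⟩ := hmem
  have hFδ : ∀ i, F i < δ := fun i => hlF ▸ Ordinal.lt_lsub F i
  have hposne : ∀ i : ι, {j | j < o ∧ F i < f j}.Nonempty := by
    intro i
    obtain ⟨x, hxs, hlt⟩ := hcof _ (hFδ i)
    obtain ⟨j, hj, rfl⟩ : x ∈ f '' Set.Iio o := hw.2 ▸ hxs
    exact ⟨j, hj, hlt⟩
  set pos : ι → Ordinal.{u} := fun i => sInf {j | j < o ∧ F i < f j} with hpos
  have hposmem : ∀ i, pos i < o ∧ F i < f (pos i) := fun i => csInf_mem (hposne i)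
  have hlsub : Ordinal.lsub pos = o := by
    apply le_antisymm (Ordinal.lsub_le fun i => (hposmem i).1)
    by_contra hl
    push_neg at hl
    have hfj : f (Ordinal.lsub pos) < δ := hsub _ (hw.mem hl)
    obtain ⟨i, hi⟩ : ∃ i, f (Ordinal.lsub pos) ≤ F i := Ordinal.lt_lsub_iff.1 (hlF ▸ hfj)
    have h1 : f (Ordinal.lsub pos) < f (pos i) := lt_of_le_of_lt hi (hposmem i).2
    have h2 : Ordinal.lsub pos < pos i := hw.reflect hl (hposmem i).1 h1
    exact absurd (Ordinal.lt_lsub pos i) (not_lt.2 (le_of_lt h2))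
  calc o.cof = (Ordinal.lsub pos).cof := by rw [hlsub]
    _ ≤ Cardinal.mk ι := Ordinal.cof_lsub_le pos
    _ = δ.cof := hcard

lemma wit_otp_isLimit {s : Set Ordinal.{u}} {o f δ} (hw : IsWit s o f) (hδ : Order.IsSuccLimit δ)
    (hsub : ∀ x ∈ s, x < δ) (hcof : ∀ β < δ, ∃ x ∈ s, β < x) : Order.IsSuccLimit o := by
  rw [Ordinal.isSuccLimit_iff]
  constructor
  · rintro rfl
    obtain ⟨x, hxs, -⟩ := hcof 0 hδ.pos
    obtain ⟨j, hj, rfl⟩ : x ∈ f '' Set.Iio 0 := hw.2 ▸ hxs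
    exact not_lt_zero (Set.mem_Iio.mp hj)
  · refine Order.isSuccPrelimit_of_succ_lt fun j hj => ?_
    obtain ⟨x, hxs, hlt⟩ := hcof (f j) (hsub _ (hw.mem hj))
    obtain ⟨k, hk, rfl⟩ : x ∈ f '' Set.Iio o := hw.2 ▸ hxs
    exact lt_of_le_of_lt (Order.succ_le_of_lt (hw.reflect hj hk hlt)) hk

/-- The recursive construction: reduce the order type of `C δ` by replacing the
club by the image of the (recursively constructed) club at `otp (C δ)`. -/
noncomputable def DD (C : Ordinal.{u} → Set Ordinal.{u}) (χ : Cardinal.{u}) :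
    Ordinal.{u} → Set Ordinal.{u} :=
  Ordinal.lt_wf.fix fun δ ih =>
    if h : χ.ord ≤ setOtp.{u,u} (C δ) ∧ setOtp.{u,u} (C δ) < δ then
      wEnum (C δ) '' ih (setOtp.{u,u} (C δ)) h.2
    else C δ

lemma DD_eq (C : Ordinal.{u} → Set Ordinal.{u}) (χ : Cardinal.{u}) (δ : Ordinal.{u}) :
    DD C χ δ = if _ : χ.ord ≤ setOtp.{u,u} (C δ) ∧ setOtp.{u,u} (C δ) < δ then
      wEnum (C δ) '' DD C χ (setOtp.{u,u} (C δ)) else C δ := by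
  conv_lhs => rw [DD, WellFounded.fix_eq]
  rw [DD]

/-- The index set of the partial square sequence. -/
def IDX (χ θ : Cardinal.{u}) (δ : Ordinal.{u}) : Prop :=
  Order.IsSuccLimit δ ∧ χ.ord < δ ∧ δ < θ.ord ∧ δ.cof < χ

lemma main {χ θ : Cardinal.{u}} {C : Ordinal.{u} → Set Ordinal.{u}}
    (hχreg : χ.IsRegular) (hC : SquareSeq χ θ C) :
    ∀ δ, IDX χ θ δ →
      IsClubIn (DD C χ δ) δ ∧ DD C χ δ ⊆ C δ ∧
      (∃ t, t < χ.ord ∧ ∃ g, IsWit (DD C χ δ) t g) ∧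
      (∀ γ, IsAccPoint (DD C χ δ) γ → γ ≠ 0 →
        IDX χ θ γ ∧ DD C χ γ = Set.Iio γ ∩ DD C χ δ) := by
  intro δ
  induction δ using Ordinal.induction with
  | _ δ IH =>
  intro hidx
  obtain ⟨hlim, hχδ, hδθ, hcofδ⟩ := hidx
  have hsqd : SquareDom χ θ δ :=
    ⟨hlim, lt_trans (Cardinal.ord_lt_ord.2 hcofδ) hχδ, hχδ, hδθ⟩
  obtain ⟨hclub, hotp, hacc⟩ := hC δ hsqd
  have hbdd : ∀ x ∈ C δ, x < δ := hclub.1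
  have hwex : ∃ o f, IsWit (C δ) o f := exists_wit hbdd
  have hw : IsWit (C δ) (setOtp.{u,u} (C δ)) (wEnum (C δ)) := wEnum_wit hwex
  set o := setOtp.{u,u} (C δ) with ho
  set f := wEnum (C δ) with hf
  rcases lt_or_ge o χ.ord with hoχ | hχo
  -- ### Case 1 : otp (C δ) < χ : take D δ = C δ
  · have hDδ : DD C χ δ = C δ := by
      rw [DD_eq, dif_neg]
      rw [← ho]
      rintro ⟨h1, -⟩
      exact absurd h1 (not_le.2 hoχ)
    refine ⟨hDδ ▸ hclub, hDδ ▸ subset_rfl, ⟨o, hoχ, f, hDδ ▸ hw⟩, ?_⟩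
    intro γ hγacc hγ0
    have hγC : IsAccPoint (C δ) γ := hDδ ▸ hγacc
    obtain ⟨hsqγ, hCγ⟩ := hacc γ hγC
    obtain ⟨i, hi, hfi⟩ : γ ∈ f '' Set.Iio o := hw.2 ▸ hγC.1
    have hrw : IsWit (C δ ∩ Set.Iio γ) i f := by
      have h1 := wit_restrict hw hi
      rwa [hfi] at h1
    have hCγ' : C γ = C δ ∩ Set.Iio γ := by rw [hCγ, Set.inter_comm]
    have hotpγ : setOtp.{u,u} (C γ) = i := by rw [hCγ']; exact setOtp_eq hrw
    have hiχ : i < χ.ord := lt_trans hi hoχ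
    have hDγ : DD C χ γ = C γ := by
      rw [DD_eq, dif_neg]
      rw [hotpγ]
      rintro ⟨h1, -⟩
      exact absurd h1 (not_le.2 hiχ)
    have hγcof : γ.cof < χ := by
      have hcard : γ.cof ≤ i.card := by
        apply cof_le_card_of_wit hrw (fun x hx => hx.2)
        intro β hβ
        obtain ⟨x, hx, h1, h2⟩ := hγC.2 β hβ
        exact ⟨x, ⟨hx, h2⟩, h1⟩
      exact lt_of_le_of_lt hcard (Cardinal.lt_ord.1 hiχ)
    refine ⟨⟨hsqγ.1, hsqγ.2.2.1, hsqγ.2.2.2, hγcof⟩, ?_⟩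
    rw [hDγ, hCγ, hDδ]
  -- ### Case 2 : χ ≤ otp (C δ) : take D δ = f '' D (otp (C δ))
  · have hoδ : o < δ := hotp
    have hcofo : o.cof ≤ δ.cof := cof_le_cof_of_wit hw hbdd hclub.2.1
    have hχo' : χ.ord < o := by
      rcases hχo.lt_or_eq with h | h
      · exact h
      · exfalso
        rw [← h, hχreg.cof_eq] at hcofo
        exact absurd (lt_of_le_of_lt hcofo hcofδ) (lt_irrefl χ)
    have holim : Order.IsSuccLimit o := wit_otp_isLimit hw hlim hbdd hclub.2.1
    have hidxo : IDX χ θ o := ⟨holim, hχo', lt_trans hoδ hδθ, lt_of_le_of_lt hcofo hcofδ⟩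
    obtain ⟨cluboD, suboD, ⟨t, htχ, g, hgw⟩, accoD⟩ := IH o hoδ hidxo
    have hDobdd : ∀ j ∈ DD C χ o, j < o := cluboD.1
    have hDδ : DD C χ δ = f '' DD C χ o := by
      rw [DD_eq]
      rw [← ho, ← hf, dif_pos ⟨hχo, hoδ⟩]
    have hsub : DD C χ δ ⊆ C δ := by
      rw [hDδ, ← hw.2]
      exact Set.image_mono fun x hx => hDobdd x hx
    have hclubD : IsClubIn (DD C χ δ) δ := by
      refine ⟨fun x hx => hbdd x (hsub hx), ?_, ?_⟩
      · intro β hβ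
        obtain ⟨x, hx, hβx⟩ := hclub.2.1 β hβ
        obtain ⟨i, hi, rfl⟩ : x ∈ f '' Set.Iio o := hw.2 ▸ hx
        obtain ⟨j, hj, hij⟩ := cluboD.2.1 i hi
        have hjo : j < o := hDobdd j hj
        refine ⟨f j, ?_, hβx.trans (hw.1 hi hjo hij)⟩
        rw [hDδ]; exact ⟨j, hj, rfl⟩
      · intro α hα0 hαδ hpre
        have hαC : α ∈ C δ := by
          apply hclub.2.2 α hα0 hαδ
          intro β hβ
          obtain ⟨x, hx, h1, h2⟩ := hpre β hβ
          exact ⟨x, hsub hx, h1, h2⟩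
        obtain ⟨i, hi, rfl⟩ : α ∈ f '' Set.Iio o := hw.2 ▸ hαC
        have h0i : 0 < i := by
          obtain ⟨x, hx, -, hxα⟩ := hpre 0 hα0
          rw [hDδ] at hx
          obtain ⟨j, hj, rfl⟩ := hx
          exact lt_of_le_of_lt (zero_le : (0 : Ordinal) ≤ j) (hw.reflect (hDobdd j hj) hi hxα)
        have hiD : i ∈ DD C χ o := by
          apply cluboD.2.2 i h0i hi
          intro j' hj'
          have hj'o : j' < o := hj'.trans hi
          obtain ⟨x, hx, h1, h2⟩ := hpre (f j') (hw.1 hj'o hi hj')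
          rw [hDδ] at hx
          obtain ⟨j, hj, rfl⟩ := hx
          exact ⟨j, hj, hw.reflect hj'o (hDobdd j hj) h1,
            hw.reflect (hDobdd j hj) hi h2⟩
        rw [hDδ]; exact ⟨i, hiD, rfl⟩
    have hwit : IsWit (DD C χ δ) t (f ∘ g) := by
      constructor
      · intro a ha b hb hab
        have hga : g a ∈ DD C χ o := hgw.2 ▸ ⟨a, ha, rfl⟩
        have hgb : g b ∈ DD C χ o := hgw.2 ▸ ⟨b, hb, rfl⟩
        exact hw.1 (hDobdd _ hga) (hDobdd _ hgb) (hgw.1 ha hb hab)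
      · rw [Set.image_comp, hgw.2, ← hDδ]
    refine ⟨hclubD, hsub, ⟨t, htχ, f ∘ g, hwit⟩, ?_⟩
    intro γ hγacc hγ0
    have hγD : γ ∈ DD C χ δ := hγacc.1
    obtain ⟨i, hiD, hfi⟩ : γ ∈ f '' DD C χ o := hDδ ▸ hγD
    have hio : i < o := hDobdd i hiD
    have hγC : IsAccPoint (C δ) γ := by
      refine ⟨hsub hγD, fun β hβ => ?_⟩
      obtain ⟨x, hx, h1, h2⟩ := hγacc.2 β hβ
      exact ⟨x, hsub hx, h1, h2⟩
    obtain ⟨hsqγ, hCγ⟩ := hacc γ hγC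
    have hi0 : i ≠ 0 := by
      obtain ⟨x, hx, -, hxγ⟩ := hγacc.2 0 (pos_iff_ne_zero.2 hγ0)
      rw [hDδ] at hx
      obtain ⟨j, hj, rfl⟩ := hx
      rw [← hfi] at hxγ
      exact (lt_of_le_of_lt (zero_le : (0 : Ordinal) ≤ j)
        (hw.reflect (hDobdd j hj) hio hxγ)).ne'
    have hiacc : IsAccPoint (DD C χ o) i := by
      refine ⟨hiD, fun j' hj' => ?_⟩
      have hj'o : j' < o := hj'.trans hio
      obtain ⟨x, hx, h1, h2⟩ := hγacc.2 (f j') (hfi ▸ hw.1 hj'o hio hj')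
      rw [hDδ] at hx
      obtain ⟨j, hj, rfl⟩ := hx
      rw [← hfi] at h2
      exact ⟨j, hj, hw.reflect hj'o (hDobdd j hj) h1,
        hw.reflect (hDobdd j hj) hio h2⟩
    obtain ⟨hidxi, hDi⟩ := accoD i hiacc hi0
    obtain ⟨-, -, ⟨ti, htiχ, gi, hgiw⟩, -⟩ := IH i (hio.trans hoδ) hidxi
    have hDisub : ∀ x ∈ DD C χ i, x < i := by
      intro x hx
      rw [hDi] at hx
      exact hx.1
    have hrw : IsWit (C δ ∩ Set.Iio γ) i f := by
      have h1 := wit_restrict hw hio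
      rwa [hfi] at h1
    have hCγ' : C γ = C δ ∩ Set.Iio γ := by rw [hCγ, Set.inter_comm]
    have hotpγ : setOtp.{u,u} (C γ) = i := by rw [hCγ']; exact setOtp_eq hrw
    have hIm : f '' DD C χ i = Set.Iio γ ∩ DD C χ δ := by
      rw [hDi]
      have h1 : f '' (Set.Iio i ∩ DD C χ o) = f '' Set.Iio i ∩ f '' DD C χ o :=
        hw.1.injOn.image_inter (fun x hx => hx.trans hio) (fun x hx => hDobdd x hx)
      have h2 : f '' Set.Iio i = C δ ∩ Set.Iio γ := hrw.2
      rw [h1, h2, ← hDδ]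
      apply Set.eq_of_subset_of_subset
      · rintro x ⟨⟨-, hxγ⟩, hxD⟩
        exact ⟨hxγ, hxD⟩
      · rintro x ⟨hxγ, hxD⟩
        exact ⟨⟨hsub hxD, hxγ⟩, hxD⟩
    have hwγ : IsWit (Set.Iio γ ∩ DD C χ δ) ti (f ∘ gi) := by
      constructor
      · intro a ha b hb hab
        have hga : gi a ∈ DD C χ i := hgiw.2 ▸ ⟨a, ha, rfl⟩
        have hgb : gi b ∈ DD C χ i := hgiw.2 ▸ ⟨b, hb, rfl⟩
        exact hw.1 ((hDisub _ hga).trans hio) ((hDisub _ hgb).trans hio)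
          (hgiw.1 ha hb hab)
      · rw [Set.image_comp, hgiw.2, hIm]
    have hγcof : γ.cof < χ := by
      have hcard : γ.cof ≤ ti.card := by
        apply cof_le_card_of_wit hwγ (fun x hx => hx.1)
        intro β hβ
        obtain ⟨x, hx, h1, h2⟩ := hγacc.2 β hβ
        exact ⟨x, ⟨h2, hx⟩, h1⟩
      exact lt_of_le_of_lt hcard (Cardinal.lt_ord.1 htiχ)
    have hidxγ : IDX χ θ γ := ⟨hsqγ.1, hsqγ.2.2.1, hsqγ.2.2.2, hγcof⟩
    obtain ⟨-, hotpγlt, -⟩ := hC γ hsqγ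
    rw [hotpγ] at hotpγlt
    have hwexγ : ∃ o' f', IsWit (C γ) o' f' := ⟨i, f, hCγ' ▸ hrw⟩
    have hwγenum : IsWit (C γ) i (wEnum (C γ)) := by
      have h1 := wEnum_wit hwexγ
      rwa [hotpγ] at h1
    have hDγ : DD C χ γ = wEnum (C γ) '' DD C χ i := by
      rw [DD_eq, hotpγ, dif_pos ⟨le_of_lt hidxi.2.1, hotpγlt⟩]
    have himg : wEnum (C γ) '' DD C χ i = f '' DD C χ i := by
      apply Set.image_congr
      intro x hx
      exact wit_agree hwγenum (hCγ' ▸ hrw) x (hDisub x hx) (hDisub x hx)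
    refine ⟨hidxγ, ?_⟩
    rw [hDγ, himg, hIm]

end Stmt5Aux

/-- Fact 1.7.a: from a `□_{(χ,θ)}`-sequence one obtains a partial
`□_{(χ,θ)}`-sequence `D`, indexed by the limit ordinals `δ` with
`χ < δ < θ` and `cf(δ) < χ`, such that: (i) each `D δ` is a club in `δ`;
(ii) `otp(D δ) < δ`, and since `cf(δ) < χ`, also `otp(D δ) < χ`;
(iii) if `γ` is an accumulation point of `D δ` lying in the index set,
then `D γ = D δ ∩ γ`. -/
theorem stmt5 (χ θ : Cardinal) (hχreg : χ.IsRegular) (hℵ : Cardinal.aleph0 < χ)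
    (hχθ : χ < θ) (C : Ordinal → Set Ordinal) (hC : SquareSeq χ θ C) :
    ∃ D : Ordinal → Set Ordinal,
      ∀ δ, Order.IsSuccLimit δ → χ.ord < δ → δ < θ.ord → Ordinal.cof δ < χ →
        IsClubIn (D δ) δ ∧
        (setOtp (D δ) < δ ∧ (Ordinal.cof δ < χ → setOtp (D δ) < χ.ord)) ∧
        (∀ γ, IsAccPoint (D δ) γ → Order.IsSuccLimit γ → χ.ord < γ → γ < θ.ord →
          Ordinal.cof γ < χ → D γ = Set.Iio γ ∩ D δ) := by
  refine ⟨Stmt5Aux.DD C χ, ?_⟩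
  intro δ hlim hχδ hδθ hcof
  obtain ⟨hclubD, hsubD, ⟨t, htχ, g, hgw⟩, haccD⟩ :=
    Stmt5Aux.main hχreg hC δ ⟨hlim, hχδ, hδθ, hcof⟩
  have hotpD : setOtp (Stmt5Aux.DD C χ δ) = t := Stmt5Aux.setOtp_eq hgw
  refine ⟨hclubD, ⟨?_, fun _ => ?_⟩, ?_⟩
  · rw [hotpD]; exact lt_trans htχ hχδ
  · rw [hotpD]; exact htχ
  · intro γ hγacc hγlim hχγ hγθ hγcof
    have hγ0 : γ ≠ 0 :=
      (pos_iff_ne_zero.1 (lt_of_le_of_lt (zero_le : (0 : Ordinal) ≤ _) hχγ))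
    exact (haccD γ hγacc hγ0).2
end

section
/- Suppose λ > θ and λ > κ are regular cardinals with κ > ℵ₀. If Ref(λ,κ,θ) holds, i.e. every stationary S ⊆ S^λ_θ reflects at some ordinal of cofinality κ, then λ ∉ I[λ,κ) (equivalently, no function h : λ → κ witnesses strong non-reflection of λ for κ on all of λ). -/
namespace Stmt7Aux

open Ordinal Set

/-- A club of `δ` restricted to ordinals above `γ₁` is still a club. -/
lemma club_above {C : Set Ordinal} {δ γ₁ : Ordinal} (hC : IsClubIn C δ) (hγ : γ₁ < δ) :
    IsClubIn {γ ∈ C | γ₁ < γ} δ := by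
  obtain ⟨h1, h2, h3⟩ := hC
  refine ⟨fun x hx => h1 x hx.1, fun β hβ => ?_, fun α hα0 hαδ happ => ?_⟩
  · obtain ⟨γ, hγC, hγgt⟩ := h2 (max β γ₁) (max_lt hβ hγ)
    exact ⟨γ, ⟨hγC, (le_max_right β γ₁).trans_lt hγgt⟩, (le_max_left β γ₁).trans_lt hγgt⟩
  · constructor
    · exact h3 α hα0 hαδ fun β hβ => by
        obtain ⟨γ, hγ', h1', h2'⟩ := happ β hβ; exact ⟨γ, hγ'.1, h1', h2'⟩
    · obtain ⟨γ, hγ', _, h2'⟩ := happ 0 hα0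
      exact hγ'.2.trans h2'

/-- Transfinite iteration of `F`, at each stage applying `F` to the sup of previous values. -/
noncomputable def seq (F : Ordinal.{u} → Ordinal.{u}) (i : Ordinal.{u}) : Ordinal.{u} :=
  F (Ordinal.bsup.{u,u} i fun j _ => seq F j)
termination_by i

lemma seq_def (F : Ordinal.{u} → Ordinal.{u}) (i : Ordinal.{u}) :
    seq F i = F (Ordinal.bsup.{u,u} i fun j _ => seq F j) := by rw [seq]

lemma seq_strictMono {F : Ordinal.{u} → Ordinal.{u}} (hF : ∀ β, β < F β) : StrictMono (seq F) := by
  intro i i' h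
  rw [seq_def F i']
  exact lt_of_le_of_lt (Ordinal.le_bsup (fun j _ => seq F j) i h) (hF _)

/-- The intersection of fewer than `cof δ` many clubs of `δ` (with `cof δ > ℵ₀`) is a club. -/
lemma club_inter {δ μ : Ordinal} (hδ : Cardinal.aleph0 < δ.cof) (hμ : μ.card < δ.cof)
    (D : Ordinal → Set Ordinal) (hD : ∀ ξ < μ, IsClubIn (D ξ) δ) :
    IsClubIn (Set.Iio δ ∩ {γ | ∀ ξ < μ, γ ∈ D ξ}) δ := by
  have hδlim : Order.IsSuccLimit δ := Ordinal.aleph0_le_cof.mp hδ.le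
  refine ⟨fun x hx => hx.1, ?_, fun α hα0 hαδ happ =>
    ⟨hαδ, fun ξ hξ => (hD ξ hξ).2.2 α hα0 hαδ fun β hβ => by
      obtain ⟨γ, hγ, h1', h2'⟩ := happ β hβ
      exact ⟨γ, hγ.2 ξ hξ, h1', h2'⟩⟩⟩
  intro β hβ
  classical
  set next : Ordinal → Ordinal → Ordinal := fun ξ b =>
    if h : ξ < μ ∧ b < δ then ((hD ξ h.1).2.1 b h.2).choose else 0 with hnextdef
  have hnext : ∀ ξ, ξ < μ → ∀ b, b < δ → next ξ b ∈ D ξ ∧ b < next ξ b := by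
    intro ξ hξ b hb
    have hspec := ((hD ξ hξ).2.1 b hb).choose_spec
    simp only [hnextdef, dif_pos (And.intro hξ hb)]
    exact hspec
  set F : Ordinal → Ordinal := fun b =>
    max (Ordinal.bsup μ fun ξ _ => next ξ b) (b + 1) with hFdef
  have hFgt : ∀ b, b < F b := fun b => by
    have : b < b + 1 := by rw [Ordinal.add_one_eq_succ]; exact Order.lt_succ b
    exact this.trans_le (le_max_right _ _)
  have hFlt : ∀ b, b < δ → F b < δ := by
    intro b hb
    refine max_lt (Ordinal.bsup_lt_ord hμ fun ξ hξ => ?_) ?_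
    · exact (hD ξ hξ).1 _ ((hnext ξ hξ b hb).1)
    · rw [Ordinal.add_one_eq_succ]; exact hδlim.succ_lt hb
  set s : ℕ → Ordinal := fun n => F^[n] β with hsdef
  have hs_succ : ∀ n, s (n + 1) = F (s n) := fun n => Function.iterate_succ_apply' F n β
  have hslt : ∀ n, s n < δ := by
    intro n; induction n with
    | zero => exact hβ
    | succ n ih => rw [hs_succ]; exact hFlt _ ih
  have hsmono : ∀ n, s n < s (n + 1) := fun n => by rw [hs_succ]; exact hFgt _
  set α : Ordinal := ⨆ n, s n with hαdef
  have hαδ : α < δ := Ordinal.iSup_lt_ord_lift (c := δ)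
    (by rw [Cardinal.mk_nat, Cardinal.lift_aleph0]; exact hδ) hslt
  have hle : ∀ n, s n ≤ α := Ordinal.le_iSup s
  have hβα : β < α := (hsmono 0).trans_le (hle 1)
  refine ⟨α, ⟨hαδ, fun ξ hξ => ?_⟩, hβα⟩
  refine (hD ξ hξ).2.2 α ((zero_le (a := β)).trans_lt hβα) hαδ fun β' hβ' => ?_
  rw [hαdef, Ordinal.lt_iSup_iff] at hβ'
  obtain ⟨n, hn⟩ := hβ'
  refine ⟨next ξ (s n), (hnext ξ hξ (s n) (hslt n)).1,
    hn.trans (hnext ξ hξ (s n) (hslt n)).2, ?_⟩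
  have h1 : next ξ (s n) ≤ F (s n) :=
    (Ordinal.le_bsup (fun ξ _ => next ξ (s n)) ξ hξ).trans (le_max_left _ _)
  rw [← hs_succ] at h1
  exact h1.trans_lt ((hsmono (n + 1)).trans_le (hle (n + 2)))

/-- `S^λ_θ` is stationary in `λ` for regular `θ < λ`. -/
lemma Sset_stat {lamc θ : Cardinal} (hlam : lamc.IsRegular) (hθ : θ.IsRegular)
    (h1 : θ < lamc) : IsStatIn (Sset lamc.ord θ) lamc.ord := by
  intro C hC
  classical
  have hcof : lamc.ord.cof = lamc := hlam.cof_eq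
  have hlim : Order.IsSuccLimit lamc.ord := Cardinal.isSuccLimit_ord hlam.aleph0_le
  have hθlim : Order.IsSuccLimit θ.ord := Cardinal.isSuccLimit_ord hθ.aleph0_le
  set F : Ordinal → Ordinal := fun b =>
    if h : b < lamc.ord then (hC.2.1 b h).choose else b + 1 with hFdef
  have hFgt : ∀ b, b < F b := by
    intro b
    by_cases h : b < lamc.ord
    · simp only [hFdef, dif_pos h]; exact (hC.2.1 b h).choose_spec.2
    · simp only [hFdef, dif_neg h]
      rw [Ordinal.add_one_eq_succ]; exact Order.lt_succ b
  have hF : ∀ b, b < lamc.ord → F b ∈ C ∧ F b < lamc.ord := by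
    intro b h
    simp only [hFdef, dif_pos h]
    exact ⟨(hC.2.1 b h).choose_spec.1, hC.1 _ (hC.2.1 b h).choose_spec.1⟩
  set s := seq F with hsdef
  have hmono : StrictMono s := seq_strictMono hFgt
  have hsize : ∀ i, i ≤ θ.ord → s i ∈ C ∧ s i < lamc.ord := by
    intro i
    induction i using Ordinal.induction with
    | _ i IH =>
      intro hi
      have hb : (Ordinal.bsup i fun j _ => s j) < lamc.ord := by
        refine Ordinal.bsup_lt_ord ?_ fun j hj => (IH j hj (hj.le.trans hi)).2
        rw [hcof]
        calc i.card ≤ θ.ord.card := Ordinal.card_le_card hi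
          _ = θ := Cardinal.card_ord θ
          _ < lamc := h1
      rw [hsdef, seq_def]
      exact hF _ hb
  set δ := Ordinal.bsup θ.ord (fun j _ => s j) with hδdef
  have hsδ : ∀ j, j < θ.ord → s j < δ := by
    intro j hj
    have hj1 : j + 1 < θ.ord := by rw [Ordinal.add_one_eq_succ]; exact hθlim.succ_lt hj
    exact (hmono (by rw [Ordinal.add_one_eq_succ]; exact Order.lt_succ j)).trans_le
      (Ordinal.le_bsup _ (j + 1) hj1)
  have hdlam : δ < lamc.ord := by
    refine Ordinal.bsup_lt_ord ?_ fun j hj => (hsize j hj.le).2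
    rw [hcof, Cardinal.card_ord]; exact h1
  have hδ0 : 0 < δ := (zero_le (a := s 0)).trans_lt (hsδ 0 hθlim.pos)
  have hδC : δ ∈ C := by
    refine hC.2.2 δ hδ0 hdlam fun β hβ => ?_
    rw [hδdef, Ordinal.lt_bsup] at hβ
    obtain ⟨j, hj, hβj⟩ := hβ
    exact ⟨s j, (hsize j hj.le).1, hβj, hsδ j hj⟩
  have hcofle : δ.cof ≤ θ := by
    have := Ordinal.cof_bsup_le (f := fun (j : Ordinal) (_ : j < θ.ord) => s j) hsδ
    rwa [← hδdef, Cardinal.card_ord] at this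
  have hcofge : θ ≤ δ.cof := by
    by_contra hlt
    push_neg at hlt
    obtain ⟨ι, f, hlsub, hcard⟩ := Ordinal.exists_lsub_cof δ
    have hfδ : ∀ i, f i < δ := fun i => hlsub ▸ Ordinal.lt_lsub f i
    have hex : ∀ i, ∃ j, ∃ _ : j < θ.ord, f i < s j := fun i =>
      (Ordinal.lt_bsup _).mp (hδdef ▸ hfδ i)
    choose j hj hfj using hex
    have hJ : (⨆ i, j i + 1) < θ.ord := by
      refine Ordinal.iSup_lt_ord ?_ fun i => ?_
      · rw [hcard, hθ.cof_eq]; exact hlt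
      · rw [Ordinal.add_one_eq_succ]; exact hθlim.succ_lt (hj i)
    have hδle : δ ≤ s (⨆ i, j i + 1) := by
      rw [← hlsub]
      refine Ordinal.lsub_le fun i => ?_
      refine (hfj i).trans (hmono ?_)
      exact lt_of_lt_of_le (by rw [Ordinal.add_one_eq_succ]; exact Order.lt_succ (j i))
        (Ordinal.le_iSup (fun i => j i + 1) i)
    exact absurd (hδle.trans_lt (hsδ _ hJ)) (lt_irrefl δ)
  exact ⟨δ, ⟨hdlam, le_antisymm hcofle hcofge⟩, hδC⟩

end Stmt7Aux
/-- Fact 1.10(1): if `λ > θ, κ` are regular with `κ > ℵ₀` and `Ref(λ,κ,θ)`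
holds (every stationary `S ⊆ S^λ_θ` reflects at some ordinal of cofinality
`κ`), then `λ ∉ I[λ,κ)`. -/
theorem stmt7 (lamc θ κ : Cardinal) (hlam : lamc.IsRegular) (hθ : θ.IsRegular)
    (hκ : κ.IsRegular) (h1 : θ < lamc) (h2 : κ < lamc)
    (h3 : Cardinal.aleph0 < κ)
    (href : ∀ S ⊆ Sset lamc.ord θ, IsStatIn S lamc.ord →
      ∃ δ < lamc.ord, Ordinal.cof δ = κ ∧ IsStatIn (S ∩ Set.Iio δ) δ) :
    Set.Iio lamc.ord ∉ Iidx lamc.ord κ := by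
  classical
  rintro ⟨-, h, hbd, hcl⟩
  set Sf : Ordinal → Set Ordinal := fun ξ => {α | α ∈ Sset lamc.ord θ ∧ h α = ξ} with hSfdef
  have hpig : ∃ ξ, ξ < κ.ord ∧ IsStatIn (Sf ξ) lamc.ord := by
    by_contra hcon
    push_neg at hcon
    have H : ∀ ξ, ∃ C, ξ < κ.ord → IsClubIn C lamc.ord ∧ Sf ξ ∩ C = ∅ := by
      intro ξ
      by_cases hξ : ξ < κ.ord
      · have hns := hcon ξ hξ
        simp only [IsStatIn] at hns
        push_neg at hns
        obtain ⟨C, hC1, hC2⟩ := hns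
        exact ⟨C, fun _ => ⟨hC1, hC2⟩⟩
      · exact ⟨∅, fun hξ' => absurd hξ' hξ⟩
    choose D hD using H
    have hclub := Stmt7Aux.club_inter (δ := lamc.ord) (μ := κ.ord)
      (by rw [hlam.cof_eq]; exact h3.trans h2)
      (by rw [Cardinal.card_ord, hlam.cof_eq]; exact h2)
      D (fun ξ hξ => (hD ξ hξ).1)
    obtain ⟨α, hαS, hαC⟩ := Stmt7Aux.Sset_stat hlam hθ h1 _ hclub
    have hξ : h α < κ.ord := hbd α hαC.1
    have hmem : α ∈ Sf (h α) ∩ D (h α) := ⟨⟨hαS, rfl⟩, hαC.2 (h α) hξ⟩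
    rw [(hD (h α) hξ).2] at hmem
    exact hmem
  obtain ⟨ξ, hξκ, hstat⟩ := hpig
  obtain ⟨δ, hδl, hδcof, hδstat⟩ := href (Sf ξ) (fun α hα => hα.1) hstat
  obtain ⟨C, hCclub, hCmono⟩ := hcl δ ⟨hδl, hδl, hδcof⟩
  obtain ⟨γ₁, hγ₁S, hγ₁C⟩ := hδstat C hCclub
  have hγ₁δ : γ₁ < δ := hCclub.1 γ₁ hγ₁C
  obtain ⟨γ₂, hγ₂S, hγ₂mem⟩ := hδstat _ (Stmt7Aux.club_above hCclub hγ₁δ)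
  have hlt : h γ₁ < h γ₂ := hCmono hγ₁C hγ₂mem.1 hγ₂mem.2
  rw [hγ₁S.1.2, hγ₂S.1.2] at hlt
  exact lt_irrefl ξ hlt
end

section
/- Suppose λ = μ⁺ and μ > cf(μ) = κ > ℵ₀, and let S ⊆ λ be stationary such that ♣(S) holds. Then D_λ↾S is not λ⁺-saturated. -/
/-- The club filter on `λ`, as a family of subsets of `Set.Iio λ`. -/
def ClubFilter (lam : Ordinal) : Set (Set Ordinal) :=
  {X | X ⊆ Set.Iio lam ∧ ∃ C, IsClubIn C lam ∧ C ⊆ X}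

/-- The restriction `D↾S = {X ∩ S : X ∈ D}` of a filter `D` to `S`. -/
def RestFilter (D : Set (Set Ordinal)) (S : Set Ordinal) : Set (Set Ordinal) :=
  {Y | ∃ X ∈ D, Y = X ∩ S}

/-- `D` (a filter on the base set `B`) is `σ`-saturated: there do not exist `σ`
many `D`-positive sets any two of which have intersection in the dual ideal.
(A set `A ⊆ B` is in the dual ideal iff `B \ A ∈ D`.) -/
def SatOn (B : Set Ordinal) (D : Set (Set Ordinal)) (σ : Ordinal) : Prop :=
  ¬ ∃ A : Ordinal → Set Ordinal,
      (∀ i < σ, A i ⊆ B ∧ (B \ A i) ∉ D) ∧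
      (∀ i j, i < σ → j < σ → i ≠ j → (B \ (A i ∩ A j)) ∈ D)

/-- The principle `♣(S)` on `λ`: there is a sequence assigning to each limit
`α ∈ S` an unbounded `A_α ⊆ α` such that every unbounded `A ⊆ λ` contains
`A_α` for some limit `α ∈ S`. -/
def ClubPrinciple (lam : Ordinal) (S : Set Ordinal) : Prop :=
  ∃ A : Ordinal → Set Ordinal,
    (∀ α ∈ S, Order.IsSuccLimit α → A α ⊆ Set.Iio α ∧ (∀ β < α, ∃ x ∈ A α, β < x)) ∧
    (∀ X : Set Ordinal, X ⊆ Set.Iio lam → (∀ β < lam, ∃ x ∈ X, β < x) →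
      ∃ α ∈ S, Order.IsSuccLimit α ∧ A α ⊆ X)

namespace ClubSatAux

open Cardinal Set

/-- A `< Λ`-indexed family of ordinals below `Λ = r.ord` (`r` regular) is bounded below `Λ`. -/
theorem rsup {r : Cardinal} (hr : r.IsRegular) {o : Ordinal} (ho : o < r.ord)
    (f : Ordinal → Ordinal) (hf : ∀ j < o, f j < r.ord) :
    ∃ t < r.ord, ∀ j < o, f j ≤ t := by
  refine ⟨Ordinal.bsup o (fun j _ => f j), ?_, fun j hj => Ordinal.le_bsup _ j hj⟩
  exact Ordinal.bsup_lt_ord (by rw [hr.cof_eq]; exact Cardinal.lt_ord.mp ho)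
    (fun j hj => hf j hj)

/-- A subset of `Iio r.ord` admitting an injection from `Iio r.ord` is unbounded. -/
theorem unb_of_inj {r : Cardinal} (hr : r.IsRegular) {X : Set Ordinal}
    (F : ↥(Set.Iio r.ord) → Ordinal) (hinj : Function.Injective F)
    (hmem : ∀ a, F a ∈ X) :
    ∀ β < r.ord, ∃ x ∈ X, β < x := by
  intro β hβ
  by_contra hcon
  push_neg at hcon
  have hinj2 : Function.Injective (fun a =>
      (⟨F a, lt_of_le_of_lt (hcon _ (hmem a)) (Order.lt_succ β)⟩ :
        ↥(Set.Iio (Order.succ β)))) := by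
    intro a b hab
    exact hinj (congrArg Subtype.val hab)
  have hle := Cardinal.mk_le_of_injective hinj2
  rw [Ordinal.mk_Iio_ordinal, Ordinal.mk_Iio_ordinal, Cardinal.lift_le,
    Cardinal.card_ord] at hle
  exact absurd hle (not_le.mpr (Cardinal.lt_ord.mp
    ((Cardinal.isSuccLimit_ord hr.aleph0_le).succ_lt hβ)))

/-- A partition of `Iio r.ord` into `r.ord`-many disjoint unbounded pieces. -/
theorem partition {r : Cardinal} (hr : r.IsRegular) :
    ∃ P : Ordinal → Set Ordinal,
      (∀ j < r.ord, P j ⊆ Set.Iio r.ord ∧ ∀ β < r.ord, ∃ x ∈ P j, β < x) ∧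
      (∀ j j', j ≠ j' → ∀ x, x ∈ P j → x ∈ P j' → False) := by
  have hmk : #(↥(Set.Iio r.ord) × ↥(Set.Iio r.ord)) =
      #↥(Set.Iio r.ord) := by
    simp only [Cardinal.mk_prod, Cardinal.lift_id, Ordinal.mk_Iio_ordinal,
      Cardinal.card_ord, ← Cardinal.lift_mul, Cardinal.mul_eq_self hr.aleph0_le]
  obtain ⟨q⟩ := Cardinal.eq.mp hmk
  refine ⟨fun j => {x | ∃ (hj : j < r.ord) (b : ↥(Set.Iio r.ord)),
    (q (⟨j, hj⟩, b) : Ordinal) = x}, fun j hj => ⟨?_, ?_⟩, ?_⟩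
  · rintro x ⟨hj', b, rfl⟩
    exact (q (⟨j, hj'⟩, b)).2
  · refine unb_of_inj hr (fun b => (q (⟨j, hj⟩, b) : Ordinal)) ?_ (fun b => ⟨hj, b, rfl⟩)
    intro a b hab
    have h2 := q.injective (Subtype.val_injective hab)
    exact (Prod.mk.injEq _ _ _ _ ▸ h2).2
  · rintro j j' hne x ⟨hj, b, rfl⟩ ⟨hj', b', hx⟩
    have h2 := q.injective (Subtype.val_injective hx.symm)
    exact hne (congrArg Subtype.val (congrArg Prod.fst h2))

/-- An enumeration of `Iio i` by `Iio r.ord`, when `r.ord ≤ i < (r⁺).ord`. -/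
theorem exists_enum {r : Cardinal} (hr : r.IsRegular) {i : Ordinal}
    (hi1 : r.ord ≤ i) (hi2 : i < (Order.succ r).ord) :
    ∃ E : Ordinal → Ordinal, (∀ β < r.ord, E β < i) ∧
      (∀ β β', β < r.ord → β' < r.ord → β ≠ β' → E β ≠ E β') ∧
      (∀ j < i, ∃ β < r.ord, E β = j) := by
  have hcard : i.card = r :=
    le_antisymm (Order.lt_succ_iff.mp (Cardinal.lt_ord.mp hi2))
      (by simpa using Ordinal.card_le_card hi1)
  have hmk : #↥(Set.Iio r.ord) = #↥(Set.Iio i) := by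
    rw [Ordinal.mk_Iio_ordinal, Ordinal.mk_Iio_ordinal, Cardinal.card_ord, hcard]
  obtain ⟨e⟩ := Cardinal.eq.mp hmk
  classical
  have key : ∀ E : Ordinal → Ordinal,
      (∀ (β) (h : β < r.ord), E β = ((e ⟨β, h⟩ : ↥(Set.Iio i)) : Ordinal)) →
      ((∀ β < r.ord, E β < i) ∧
        (∀ β β', β < r.ord → β' < r.ord → β ≠ β' → E β ≠ E β') ∧
        (∀ j < i, ∃ β < r.ord, E β = j)) := by
    intro E hEval
    refine ⟨?_, ?_, ?_⟩
    · intro β hβ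
      rw [hEval β hβ]
      exact (e ⟨β, hβ⟩).2
    · intro β β' hβ hβ' hne heq
      rw [hEval β hβ, hEval β' hβ'] at heq
      exact hne (congrArg Subtype.val (e.injective (Subtype.val_injective heq)))
    · intro j hj
      refine ⟨(e.symm ⟨j, hj⟩ : Ordinal), (e.symm ⟨j, hj⟩).2, ?_⟩
      rw [hEval _ (e.symm ⟨j, hj⟩).2]
      simp
  exact ⟨fun β => if h : β < r.ord then ((e ⟨β, h⟩ : ↥(Set.Iio i)) : Ordinal) else 0,
    key _ (fun β h => dif_pos h)⟩

/-- Diagonalization: given `< λ⁺` many unbounded subsets of `λ` with pairwise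
bounded intersections, there is an unbounded set almost disjoint from all of them. -/
theorem diag {r : Cardinal} (hr : r.IsRegular) {i : Ordinal}
    (hi1 : r.ord ≤ i) (hi2 : i < (Order.succ r).ord)
    (g : Ordinal → Set Ordinal)
    (hg1 : ∀ j < i, g j ⊆ Set.Iio r.ord ∧ ∀ β < r.ord, ∃ x ∈ g j, β < x)
    (hg2 : ∀ j j', j < i → j' < i → j ≠ j' →
      ∃ b < r.ord, ∀ x, x ∈ g j → x ∈ g j' → x ≤ b) :
    ∃ X : Set Ordinal, X ⊆ Set.Iio r.ord ∧ (∀ β < r.ord, ∃ x ∈ X, β < x) ∧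
      ∀ j < i, ∃ b < r.ord, ∀ x, x ∈ X → x ∈ g j → x ≤ b := by
  classical
  obtain ⟨E, hE1, hE2, hE3⟩ := exists_enum hr hi1 hi2
  obtain ⟨y, hyeq⟩ : ∃ y : Ordinal → Ordinal, ∀ β, y β =
      sInf {x | x < r.ord ∧ (∀ β' < β, y β' < x) ∧ x ∈ g (E β) ∧
        ∀ β' < β, x ∉ g (E β')} :=
    ⟨WellFounded.fix Ordinal.lt_wf (fun β rec =>
        sInf {x | x < r.ord ∧ (∀ β' (h : β' < β), rec β' h < x) ∧ x ∈ g (E β) ∧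
          ∀ β' (h : β' < β), x ∉ g (E β')}),
      fun β => WellFounded.fix_eq _ _ β⟩
  have inv : ∀ β, β < r.ord → (y β < r.ord ∧ (∀ β' < β, y β' < y β) ∧
      y β ∈ g (E β) ∧ ∀ β' < β, y β ∉ g (E β')) := by
    intro β
    induction β using Ordinal.induction with
    | h β IH =>
    intro hβ
    have hy' : ∀ β' < β, y β' < r.ord := fun β' h => (IH β' h (h.trans hβ)).1
    obtain ⟨t, htΛ, ht⟩ := rsup hr hβ y hy'
    set bfun : Ordinal → Ordinal := fun β' =>
      sInf {b | b < r.ord ∧ ∀ x, x ∈ g (E β') → x ∈ g (E β) → x ≤ b} with hbfun_def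
    have hbfun : ∀ β' < β, bfun β' < r.ord ∧
        ∀ x, x ∈ g (E β') → x ∈ g (E β) → x ≤ bfun β' := by
      intro β' h
      have hne : {b | b < r.ord ∧ ∀ x, x ∈ g (E β') → x ∈ g (E β) → x ≤ b}.Nonempty := by
        obtain ⟨b, hb1, hb2⟩ := hg2 (E β') (E β) (hE1 β' (h.trans hβ)) (hE1 β hβ)
          (hE2 β' β (h.trans hβ) hβ (ne_of_lt h))
        exact ⟨b, hb1, hb2⟩
      exact csInf_mem hne
    obtain ⟨t2, ht2Λ, ht2⟩ := rsup hr hβ bfun (fun β' h => (hbfun β' h).1)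
    obtain ⟨x, hxg, hxgt⟩ := (hg1 (E β) (hE1 β hβ)).2 (max t t2) (max_lt htΛ ht2Λ)
    have hxmem : x ∈ {x | x < r.ord ∧ (∀ β' < β, y β' < x) ∧ x ∈ g (E β) ∧
        ∀ β' < β, x ∉ g (E β')} := by
      refine ⟨(hg1 (E β) (hE1 β hβ)).1 hxg, ?_, hxg, ?_⟩
      · intro β' h
        exact lt_of_le_of_lt (ht β' h) (lt_of_le_of_lt (le_max_left _ _) hxgt)
      · intro β' h hxmem'
        exact absurd ((hbfun β' h).2 x hxmem' hxg)
          (not_le.mpr (lt_of_le_of_lt ((ht2 β' h).trans (le_max_right t t2)) hxgt))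
    rw [hyeq β]
    exact csInf_mem ⟨x, hxmem⟩
  have ymono : ∀ β' β, β' < β → β < r.ord → y β' < y β :=
    fun β' β h hβ => (inv β hβ).2.1 β' h
  have yge : ∀ β, β < r.ord → β ≤ y β := by
    intro β
    induction β using Ordinal.induction with
    | h β IH =>
    intro hβ
    by_contra hcon
    push_neg at hcon
    have h1 := IH (y β) hcon (inv β hβ).1
    have h2 := ymono (y β) β hcon hβ
    exact absurd (h1.trans_lt h2) (lt_irrefl _)
  refine ⟨{x | ∃ β < r.ord, y β = x}, ?_, ?_, ?_⟩
  · rintro x ⟨β, hβ, rfl⟩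
    exact (inv β hβ).1
  · intro β hβ
    have hsβ : Order.succ β < r.ord := (Cardinal.isSuccLimit_ord hr.aleph0_le).succ_lt hβ
    exact ⟨y (Order.succ β), ⟨_, hsβ, rfl⟩,
      lt_of_lt_of_le (Order.lt_succ β) (yge _ hsβ)⟩
  · intro j hj
    obtain ⟨β0, hβ0, hE0⟩ := hE3 j hj
    refine ⟨y β0, (inv β0 hβ0).1, ?_⟩
    rintro x ⟨β, hβ, rfl⟩ hxg
    rcases lt_or_ge β0 β with h | h
    · rw [← hE0] at hxg
      exact absurd hxg ((inv β hβ).2.2.2 β0 h)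
    · rcases eq_or_lt_of_le h with rfl | h'
      · exact le_rfl
      · exact (ymono β β0 h' hβ0).le

/-- There is a `λ⁺`-indexed family of unbounded subsets of `λ = r.ord` with
pairwise bounded intersections. -/
theorem adFamily {r : Cardinal} (hr : r.IsRegular) :
    ∃ f : Ordinal → Set Ordinal,
      (∀ i < (Order.succ r).ord, f i ⊆ Set.Iio r.ord ∧ ∀ β < r.ord, ∃ x ∈ f i, β < x) ∧
      (∀ i j, i < (Order.succ r).ord → j < (Order.succ r).ord → i ≠ j →
        ∃ b < r.ord, ∀ x, x ∈ f i → x ∈ f j → x ≤ b) := by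
  classical
  obtain ⟨P, hP1, hP2⟩ := partition hr
  obtain ⟨f, hfeq⟩ : ∃ f : Ordinal → Set Ordinal, ∀ i, f i =
      if i < r.ord then P i
      else if h : ∃ X : Set Ordinal, X ⊆ Set.Iio r.ord ∧
          (∀ β < r.ord, ∃ x ∈ X, β < x) ∧
          ∀ j, j < i → ∃ b < r.ord, ∀ x, x ∈ X → x ∈ f j → x ≤ b
        then h.choose else ∅ :=
    ⟨WellFounded.fix Ordinal.lt_wf (fun i rec =>
        if i < r.ord then P i
        else if h : ∃ X : Set Ordinal, X ⊆ Set.Iio r.ord ∧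
            (∀ β < r.ord, ∃ x ∈ X, β < x) ∧
            ∀ j, (hj : j < i) → ∃ b < r.ord, ∀ x, x ∈ X → x ∈ rec j hj → x ≤ b
          then h.choose else ∅),
      fun i => WellFounded.fix_eq _ _ i⟩
  have good : ∀ i, i < (Order.succ r).ord →
      ((f i ⊆ Set.Iio r.ord ∧ ∀ β < r.ord, ∃ x ∈ f i, β < x) ∧
        ∀ j < i, ∃ b < r.ord, ∀ x, x ∈ f i → x ∈ f j → x ≤ b) := by
    intro i
    induction i using Ordinal.induction with
    | h i IH =>
    intro hi
    by_cases hiΛ : i < r.ord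
    · have hfi : f i = P i := by rw [hfeq i, if_pos hiΛ]
      constructor
      · rw [hfi]; exact hP1 i hiΛ
      · intro j hj
        refine ⟨0, (Cardinal.isSuccLimit_ord hr.aleph0_le).pos, ?_⟩
        intro x hx1 hx2
        rw [hfi] at hx1
        rw [hfeq j, if_pos (hj.trans hiΛ)] at hx2
        exact (hP2 i j (ne_of_gt hj) x hx1 hx2).elim
    · push_neg at hiΛ
      have hex : ∃ X : Set Ordinal, X ⊆ Set.Iio r.ord ∧
          (∀ β < r.ord, ∃ x ∈ X, β < x) ∧
          ∀ j, j < i → ∃ b < r.ord, ∀ x, x ∈ X → x ∈ f j → x ≤ b := by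
        have hd := diag hr hiΛ hi f (fun j hj => (IH j hj (hj.trans hi)).1) ?_
        · obtain ⟨X, hX1, hX2, hX3⟩ := hd
          exact ⟨X, hX1, hX2, hX3⟩
        · intro j j' hj hj' hne
          rcases hne.lt_or_gt with h | h
          · obtain ⟨b, hb, hb2⟩ := (IH j' hj' (hj'.trans hi)).2 j h
            exact ⟨b, hb, fun x hx1 hx2 => hb2 x hx2 hx1⟩
          · exact (IH j hj (hj.trans hi)).2 j' h
      have hfi : f i = hex.choose := by
        rw [hfeq i, if_neg (not_lt.mpr hiΛ), dif_pos hex]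
      obtain ⟨c1, c2, c3⟩ := hex.choose_spec
      constructor
      · rw [hfi]; exact ⟨c1, c2⟩
      · intro j hj
        rw [hfi]; exact c3 j hj
  refine ⟨f, fun i hi => (good i hi).1, ?_⟩
  intro i j hi hj hne
  rcases hne.lt_or_gt with h | h
  · obtain ⟨b, hb, hb2⟩ := (good j hj).2 i h
    exact ⟨b, hb, fun x hx1 hx2 => hb2 x hx2 hx1⟩
  · exact (good i hi).2 j h

/-- Final segments of `r.ord` are clubs. -/
theorem clubIoo {r : Cardinal} (hr : r.IsRegular) {b : Ordinal} (hb : b < r.ord) :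
    IsClubIn {x | b < x ∧ x < r.ord} r.ord := by
  have hlim := Cardinal.isSuccLimit_ord hr.aleph0_le
  refine ⟨fun x hx => hx.2, ?_, ?_⟩
  · intro β hβ
    refine ⟨Order.succ (max β b),
      ⟨lt_of_le_of_lt (le_max_right β b) (Order.lt_succ _), hlim.succ_lt (max_lt hβ hb)⟩,
      lt_of_le_of_lt (le_max_left β b) (Order.lt_succ _)⟩
  · intro α hα0 hαΛ H
    obtain ⟨γ, hγC, _, hγα⟩ := H 0 hα0
    exact ⟨hγC.1.trans hγα, hαΛ⟩

/-- The ♣-guessed set of an unbounded set meets every club. -/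
theorem guess_stat (Λ : Ordinal) (S : Set Ordinal) (hS1 : S ⊆ Set.Iio Λ)
    (Aseq : Ordinal → Set Ordinal)
    (hA1 : ∀ α ∈ S, Order.IsSuccLimit α → Aseq α ⊆ Set.Iio α ∧ (∀ β < α, ∃ x ∈ Aseq α, β < x))
    (hA2 : ∀ X : Set Ordinal, X ⊆ Set.Iio Λ → (∀ β < Λ, ∃ x ∈ X, β < x) →
      ∃ α ∈ S, Order.IsSuccLimit α ∧ Aseq α ⊆ X)
    (W : Set Ordinal) (hW1 : W ⊆ Set.Iio Λ) (hW2 : ∀ β < Λ, ∃ x ∈ W, β < x)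
    (C : Set Ordinal) (hC : IsClubIn C Λ) :
    ∃ α ∈ S, Order.IsSuccLimit α ∧ Aseq α ⊆ W ∧ α ∈ C := by
  classical
  set Y : Set Ordinal := {x | x ∈ W ∧ ∃ c ∈ C, c < x ∧ ∀ z ∈ W, c < z → x ≤ z} with hY
  have hYW : Y ⊆ W := fun x hx => hx.1
  have hYΛ : Y ⊆ Set.Iio Λ := fun x hx => hW1 hx.1
  have hYunb : ∀ β < Λ, ∃ x ∈ Y, β < x := by
    intro β hβ
    obtain ⟨c, hcC, hβc⟩ := hC.2.1 β hβ
    have hcΛ : c < Λ := hC.1 c hcC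
    have hne : {z | z ∈ W ∧ c < z}.Nonempty := by
      obtain ⟨z, hz1, hz2⟩ := hW2 c hcΛ
      exact ⟨z, hz1, hz2⟩
    set x := Ordinal.lt_wf.min {z | z ∈ W ∧ c < z} hne with hx
    have hxmem := Ordinal.lt_wf.min_mem {z | z ∈ W ∧ c < z} hne
    refine ⟨x, ⟨hxmem.1, c, hcC, hxmem.2, ?_⟩, hβc.trans hxmem.2⟩
    intro z hz hcz
    exact le_of_not_gt (Ordinal.lt_wf.not_lt_min {z | z ∈ W ∧ c < z} ⟨hz, hcz⟩)
  obtain ⟨α, hαS, hαlim, hαY⟩ := hA2 Y hYΛ hYunb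
  obtain ⟨hsub, hunb⟩ := hA1 α hαS hαlim
  refine ⟨α, hαS, hαlim, fun x hx => hYW (hαY hx), ?_⟩
  refine hC.2.2 α hαlim.pos (hS1 hαS) ?_
  intro β hβ
  obtain ⟨y1, hy1A, hβy1⟩ := hunb β hβ
  have hy1α : y1 < α := hsub hy1A
  obtain ⟨y2, hy2A, hy12⟩ := hunb y1 hy1α
  have hy2α : y2 < α := hsub hy2A
  obtain ⟨hy2W, c, hcC, hcy2, hmin⟩ := hαY hy2A
  have hy1W : y1 ∈ W := hYW (hαY hy1A)
  have hy1c : y1 ≤ c := by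
    by_contra hcon
    push_neg at hcon
    exact absurd (hmin y1 hy1W hcon) (not_le.mpr hy12)
  exact ⟨c, hcC, lt_of_lt_of_le hβy1 hy1c, hcy2.trans hy2α⟩

end ClubSatAux

/-- Corollary 2.9(3): if `λ = μ⁺`, `μ > cf(μ) = κ > ℵ₀`, `S ⊆ λ` is stationary
and `♣(S)` holds, then the club filter of `λ` restricted to `S` is not
`λ⁺`-saturated. -/
theorem stmt19 (μ κ : Cardinal) (h1 : Cardinal.aleph0 < κ) (h2 : κ < μ)
    (h3 : Ordinal.cof μ.ord = κ)
    (S : Set Ordinal) (hS1 : S ⊆ Set.Iio (Order.succ μ).ord)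
    (hS2 : IsStatIn S (Order.succ μ).ord)
    (hclub : ClubPrinciple (Order.succ μ).ord S) :
    ¬ SatOn S (RestFilter (ClubFilter (Order.succ μ).ord) S)
        (Order.succ (Order.succ μ)).ord := by
  have hμ : Cardinal.aleph0 ≤ μ := (h1.trans h2).le
  have hr : (Order.succ μ).IsRegular := Cardinal.isRegular_succ hμ
  obtain ⟨f, hf1, hf2⟩ := ClubSatAux.adFamily hr
  obtain ⟨Aseq, hA1, hA2⟩ := hclub
  refine not_not_intro
    ⟨fun i => {α | α ∈ S ∧ Order.IsSuccLimit α ∧ Aseq α ⊆ f i}, ?_, ?_⟩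
  · intro i hi
    refine ⟨fun α hα => hα.1, ?_⟩
    rintro ⟨X, ⟨hXsub, C, hC, hCX⟩, hXS⟩
    obtain ⟨α, hαS, hαlim, hαsub, hαC⟩ := ClubSatAux.guess_stat _ S hS1 Aseq hA1 hA2
      (f i) (hf1 i hi).1 (hf1 i hi).2 C hC
    have hmem : α ∈ X ∩ S := ⟨hCX hαC, hαS⟩
    rw [← hXS] at hmem
    exact hmem.2 ⟨hαS, hαlim, hαsub⟩
  · intro i j hi hj hne
    obtain ⟨b, hbΛ, hb⟩ := hf2 i j hi hj hne
    refine ⟨Set.Iio (Order.succ μ).ord \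
        ({α | α ∈ S ∧ Order.IsSuccLimit α ∧ Aseq α ⊆ f i} ∩
          {α | α ∈ S ∧ Order.IsSuccLimit α ∧ Aseq α ⊆ f j}),
      ⟨Set.diff_subset, {x | b < x ∧ x < (Order.succ μ).ord},
        ClubSatAux.clubIoo hr hbΛ, ?_⟩, ?_⟩
    · rintro x ⟨hbx, hxΛ⟩
      refine ⟨hxΛ, ?_⟩
      rintro ⟨⟨hxS, hxlim, hxi⟩, ⟨_, _, hxj⟩⟩
      obtain ⟨z, hzA, hbz⟩ := (hA1 x hxS hxlim).2 b hbx
      exact absurd (hb z (hxi hzA) (hxj hzA)) (not_le.mpr hbz)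
    · ext α
      simp only [Set.mem_diff, Set.mem_inter_iff, Set.mem_Iio, Set.mem_setOf_eq]
      constructor
      · rintro ⟨hαS, hmem⟩
        exact ⟨⟨hS1 hαS, hmem⟩, hαS⟩
      · rintro ⟨⟨_, hmem⟩, hαS⟩
        exact ⟨hαS, hmem⟩
end
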